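/- arXiv:1911.12969 — 10 statements merged into one kernel-verified Lean document; each statement's English description precedes it below -/
import Mathlib

section
/- Suppose α > 2. Then the product ξ1·ξ2 is integrable with E[ξ1·ξ2] = (θ2/(α − 1))·Σ_{k=0}^∞ (1 + k/θ1)^{1−α}, and the covariance satisfies Cov(ξ1, ξ2) = E[ξ1·ξ2] − E[ξ1]·E[ξ2] = (θ2/(α − 1))·Σ_{k=0}^∞ (k/θ1)·(1 + k/θ1)^{−α}, which is strictly positive. -/
/-!
Write `ξ1 = ∑_{k ≥ 0} 1{ξ1 > k}`, so that `E[ξ1 ξ2] = ∑_k E[ξ2; ξ1 > k]`. By the layer-cake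
formula, `E[ξ2; ξ1 > k] = ∫_0^∞ P(ξ1 ≥ k + 1, ξ2 ≥ x) dx = ∫_0^∞ (1 + k/θ1 + x/θ2)^(-α) dx`,
which is `θ2/(α-1) (1 + k/θ1)^(1-α)`. Likewise `E[ξ1] = ∑_k (1 + k/θ1)^(-α)` and
`E[ξ2] = θ2/(α-1)`; the covariance formula follows from
`c^(1-α) - c^(-α) = (c - 1) c^(-α)`, and `α > 2` makes all series converge.
-/

open MeasureTheory Real Filter Set
open scoped ENNReal Topology

lemma summable_one_add_div_rpow {θ p : ℝ} (hθ : 0 < θ) (hp : p < -1) :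
    Summable (fun k : ℕ => (1 + k / θ) ^ p) := by
  refine (((Real.summable_one_div_nat_add_rpow θ (-p)).2 (by linarith)).mul_left
    (θ⁻¹ ^ p)).congr fun k => ?_
  have hk : 0 < (k : ℝ) + θ := by positivity
  rw [abs_of_pos hk, one_div, ← rpow_neg hk.le, neg_neg, ← mul_rpow (by positivity) hk.le]
  congr 1
  field_simp
  ring

lemma natCast_eq_tsum_ite (n : ℕ) : (n : ℝ≥0∞) = ∑' k : ℕ, if k < n then 1 else 0 := by
  rw [tsum_eq_sum (s := Finset.range n) (fun k hk => by simpa using hk)]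
  simp +contextual [Finset.filter_true_of_mem]

lemma lintegral_Ioi_add_div_rpow_neg {c θ α : ℝ} (hc : 0 < c) (hθ : 0 < θ) (hα : 1 < α) :
    ∫⁻ x in Ioi 0, ENNReal.ofReal ((c + x / θ) ^ (-α))
      = ENNReal.ofReal (θ / (α - 1) * c ^ (1 - α)) := by
  set F : ℝ → ℝ := fun x => -(θ / (α - 1) * (c + x / θ) ^ (1 - α))
  have hderiv : ∀ x ∈ Ici (0 : ℝ), HasDerivAt F ((c + x / θ) ^ (-α)) x := by
    intro x hx
    have hpos : 0 < c + x / θ := by have : (0 : ℝ) ≤ x := hx; positivity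
    refine ((((hasDerivAt_id' x).div_const θ).const_add c).rpow_const
      (p := 1 - α) (Or.inl hpos.ne')).const_mul (θ / (α - 1)) |>.neg |>.congr_deriv ?_
    have : α - 1 ≠ 0 := by linarith
    rw [show 1 - α - 1 = -α by ring]
    field_simp
    ring
  have hnonneg : ∀ x ∈ Ioi (0 : ℝ), 0 ≤ (c + x / θ) ^ (-α) := fun x hx => by
    have : (0 : ℝ) < x := hx; positivity
  have hlim : Tendsto F atTop (𝓝 0) := by
    have h := ((tendsto_rpow_neg_atTop (by linarith : 0 < α - 1)).comp
      (tendsto_atTop_add_const_left _ c (tendsto_id.atTop_div_const hθ))).const_mul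
        (θ / (α - 1)) |>.neg
    simpa [F, Function.comp_def, show -(α - 1) = 1 - α by ring] using h
  rw [← ofReal_integral_eq_lintegral_ofReal (integrableOn_Ioi_deriv_of_nonneg' hderiv hnonneg hlim)
    ((ae_restrict_mem measurableSet_Ioi).mono hnonneg),
    integral_Ioi_of_hasDerivAt_of_nonneg' hderiv hnonneg hlim]
  simp [F]

section

variable {Ω : Type*} [MeasurableSpace Ω]

lemma lintegral_natCast_mul_eq_tsum (μ : Measure Ω) {N : Ω → ℕ} (hN : Measurable N)
    {f : Ω → ℝ≥0∞} (hf : Measurable f) :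
    ∫⁻ ω, N ω * f ω ∂μ = ∑' k : ℕ, ∫⁻ ω in {ω | k < N ω}, f ω ∂μ := by
  have hset (k : ℕ) : MeasurableSet {ω | k < N ω} := hN measurableSet_Ioi
  have hpt (ω : Ω) : (N ω : ℝ≥0∞) * f ω = ∑' k : ℕ, {ω | k < N ω}.indicator f ω := by
    rw [natCast_eq_tsum_ite, ← ENNReal.tsum_mul_right]
    refine tsum_congr fun k => ?_
    by_cases h : k < N ω <;> simp [h]
  simp_rw [hpt]
  rw [lintegral_tsum fun k => (hf.indicator (hset k)).aemeasurable]
  exact tsum_congr fun k => lintegral_indicator (hset k) f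

lemma setLIntegral_ofReal_eq_of_measure_inter_le {μ : Measure Ω} {A : Set Ω} {X : Ω → ℝ}
    (hX : Measurable X) (hX0 : ∀ ω, 0 ≤ X ω) {c θ α : ℝ} (hc : 0 < c) (hθ : 0 < θ) (hα : 1 < α)
    (htail : ∀ x > 0, μ (A ∩ {ω | x ≤ X ω}) = ENNReal.ofReal ((c + x / θ) ^ (-α))) :
    ∫⁻ ω in A, ENNReal.ofReal (X ω) ∂μ = ENNReal.ofReal (θ / (α - 1) * c ^ (1 - α)) := by
  rw [lintegral_eq_lintegral_meas_le _ (ae_of_all _ hX0) hX.aemeasurable,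
    ← lintegral_Ioi_add_div_rpow_neg hc hθ hα]
  refine setLIntegral_congr_fun measurableSet_Ioi fun x hx => ?_
  rw [Measure.restrict_apply (measurableSet_le measurable_const hX), inter_comm]
  exact htail x hx

lemma integrable_and_integral_eq_of_lintegral_eq {μ : Measure Ω} {f : Ω → ℝ} (hf : Measurable f)
    (hf0 : ∀ ω, 0 ≤ f ω) {c : ℝ} (hc : 0 ≤ c)
    (h : ∫⁻ ω, ENNReal.ofReal (f ω) ∂μ = ENNReal.ofReal c) :
    Integrable f μ ∧ ∫ ω, f ω ∂μ = c := by
  refine ⟨⟨hf.aestronglyMeasurable, ?_⟩, ?_⟩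
  · rw [hasFiniteIntegral_iff_ofReal (ae_of_all _ hf0), h]
    exact ENNReal.ofReal_lt_top
  · rw [integral_eq_lintegral_of_nonneg_ae (ae_of_all _ hf0) hf.aestronglyMeasurable, h,
      ENNReal.toReal_ofReal hc]

def IsParetoTail (P : Measure Ω) (ξ1 : Ω → ℕ) (ξ2 : Ω → ℝ) (α θ1 θ2 : ℝ) : Prop :=
  ∀ (k : ℕ) (x : ℝ), 0 ≤ x →
    P ({ω | k < ξ1 ω} ∩ {ω | x ≤ ξ2 ω}) = ENNReal.ofReal ((1 + k / θ1 + x / θ2) ^ (-α))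

variable {P : Measure Ω} {ξ1 : Ω → ℕ} {ξ2 : Ω → ℝ} {α θ1 θ2 : ℝ}

lemma isParetoTail_of_survival [IsFiniteMeasure P]
    (hsurv : ∀ k : ℕ, 1 ≤ k → ∀ x : ℝ, 0 ≤ x →
      (P {ω | k ≤ ξ1 ω ∧ x ≤ ξ2 ω}).toReal = (1 + ((k : ℝ) - 1) / θ1 + x / θ2) ^ (-α)) :
    IsParetoTail P ξ1 ξ2 α θ1 θ2 := by
  intro k x hx
  rw [← ENNReal.ofReal_toReal (measure_ne_top _ _), ← add_sub_cancel_right (k : ℝ) 1]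
  exact_mod_cast congrArg ENNReal.ofReal (hsurv (k + 1) (Nat.le_add_left 1 k) x hx)

namespace IsParetoTail

lemma measure_lt (h : IsParetoTail P ξ1 ξ2 α θ1 θ2) (hξ2 : ∀ ω, 0 ≤ ξ2 ω) (k : ℕ) :
    P {ω | k < ξ1 ω} = ENNReal.ofReal ((1 + k / θ1) ^ (-α)) := by
  simpa [hξ2] using h k 0 le_rfl

lemma setLIntegral_snd (h : IsParetoTail P ξ1 ξ2 α θ1 θ2) (hξ2m : Measurable ξ2)
    (hξ2 : ∀ ω, 0 ≤ ξ2 ω) (hθ1 : 0 < θ1) (hθ2 : 0 < θ2) (hα : 1 < α) (k : ℕ) :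
    ∫⁻ ω in {ω | k < ξ1 ω}, ENNReal.ofReal (ξ2 ω) ∂P
      = ENNReal.ofReal (θ2 / (α - 1) * (1 + k / θ1) ^ (1 - α)) :=
  setLIntegral_ofReal_eq_of_measure_inter_le hξ2m hξ2 (by positivity) hθ2 hα
    fun x hx => h k x hx.le

lemma integral_fst (h : IsParetoTail P ξ1 ξ2 α θ1 θ2) (hξ1m : Measurable ξ1)
    (hξ2 : ∀ ω, 0 ≤ ξ2 ω) (hθ1 : 0 < θ1) (hα : 1 < α) :
    ∫ ω, (ξ1 ω : ℝ) ∂P = ∑' k : ℕ, (1 + k / θ1) ^ (-α) := by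
  refine (integrable_and_integral_eq_of_lintegral_eq (by fun_prop)
    (fun ω => (ξ1 ω).cast_nonneg) (by positivity) ?_).2
  simpa [ENNReal.ofReal_tsum_of_nonneg (fun k => by positivity)
      (summable_one_add_div_rpow hθ1 (by linarith : -α < -1)), ← h.measure_lt hξ2] using
    lintegral_natCast_mul_eq_tsum P hξ1m measurable_const (f := 1)

lemma integral_snd (h : IsParetoTail P ξ1 ξ2 α θ1 θ2) (hξ1 : ∀ ω, 1 ≤ ξ1 ω)
    (hξ2m : Measurable ξ2) (hξ2 : ∀ ω, 0 ≤ ξ2 ω) (hθ1 : 0 < θ1) (hθ2 : 0 < θ2) (hα : 1 < α) :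
    ∫ ω, ξ2 ω ∂P = θ2 / (α - 1) := by
  refine (integrable_and_integral_eq_of_lintegral_eq hξ2m hξ2 (by positivity) ?_).2
  have huniv : {ω | 0 < ξ1 ω} = univ := eq_univ_of_forall hξ1
  simpa [huniv] using h.setLIntegral_snd hξ2m hξ2 hθ1 hθ2 hα 0

lemma integrable_mul_and_integral_mul (h : IsParetoTail P ξ1 ξ2 α θ1 θ2)
    (hξ1m : Measurable ξ1) (hξ2m : Measurable ξ2) (hξ2 : ∀ ω, 0 ≤ ξ2 ω) (hθ1 : 0 < θ1)
    (hθ2 : 0 < θ2) (hα : 2 < α) :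
    Integrable (fun ω => (ξ1 ω : ℝ) * ξ2 ω) P ∧
      ∫ ω, (ξ1 ω : ℝ) * ξ2 ω ∂P = θ2 / (α - 1) * ∑' k : ℕ, (1 + k / θ1) ^ (1 - α) := by
  have hα1 : 1 < α := by linarith
  have hsum := summable_one_add_div_rpow hθ1 (by linarith : 1 - α < -1)
  refine integrable_and_integral_eq_of_lintegral_eq (by fun_prop)
    (fun ω => mul_nonneg (ξ1 ω).cast_nonneg (hξ2 ω)) (by positivity) ?_
  simp_rw [ENNReal.ofReal_mul (Nat.cast_nonneg _), ENNReal.ofReal_natCast]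
  rw [lintegral_natCast_mul_eq_tsum P hξ1m hξ2m.ennreal_ofReal,
    tsum_congr (h.setLIntegral_snd hξ2m hξ2 hθ1 hθ2 hα1), ← tsum_mul_left,
    ENNReal.ofReal_tsum_of_nonneg (fun k => by positivity) (hsum.mul_left _)]

end IsParetoTail

end

theorem stmt_2_general
    {Ω : Type*} [MeasurableSpace Ω] (P : Measure Ω) [IsProbabilityMeasure P]
    (ξ1 : Ω → ℕ) (ξ2 : Ω → ℝ)
    (hξ1meas : Measurable ξ1) (hξ2meas : Measurable ξ2)
    (hξ1pos : ∀ ω, 1 ≤ ξ1 ω) (hξ2nonneg : ∀ ω, 0 ≤ ξ2 ω)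
    (α θ1 θ2 : ℝ) (hθ1 : 0 < θ1) (hθ2 : 0 < θ2)
    (hsurv : ∀ k : ℕ, 1 ≤ k → ∀ x : ℝ, 0 ≤ x →
      (P {ω | k ≤ ξ1 ω ∧ x ≤ ξ2 ω}).toReal
        = (1 + ((k : ℝ) - 1) / θ1 + x / θ2) ^ (-α))
    (hα2 : 2 < α) :
    Integrable (fun ω => (ξ1 ω : ℝ) * ξ2 ω) P ∧
      (∫ ω, (ξ1 ω : ℝ) * ξ2 ω ∂P)
        = (θ2 / (α - 1)) * ∑' k : ℕ, (1 + (k : ℝ) / θ1) ^ (1 - α) ∧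
      (∫ ω, (ξ1 ω : ℝ) * ξ2 ω ∂P) - (∫ ω, (ξ1 ω : ℝ) ∂P) * (∫ ω, ξ2 ω ∂P)
        = (θ2 / (α - 1)) * ∑' k : ℕ, ((k : ℝ) / θ1) * (1 + (k : ℝ) / θ1) ^ (-α) ∧
      0 < (θ2 / (α - 1)) * ∑' k : ℕ, ((k : ℝ) / θ1) * (1 + (k : ℝ) / θ1) ^ (-α) := by
  have hα1 : 1 < α := by linarith
  have h := isParetoTail_of_survival hsurv
  obtain ⟨hint, hE12⟩ := h.integrable_mul_and_integral_mul hξ1meas hξ2meas hξ2nonneg hθ1 hθ2 hα2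
  have hsum1 := summable_one_add_div_rpow hθ1 (by linarith : 1 - α < -1)
  have hsum0 := summable_one_add_div_rpow hθ1 (by linarith : -α < -1)
  have hdiff (k : ℕ) : (1 + k / θ1) ^ (1 - α) - (1 + k / θ1) ^ (-α)
      = k / θ1 * (1 + (k : ℝ) / θ1) ^ (-α) := by
    rw [sub_eq_add_neg 1 α, rpow_add (by positivity), rpow_one]
    ring
  refine ⟨hint, hE12, ?_, ?_⟩
  · rw [hE12, h.integral_fst hξ1meas hξ2nonneg hθ1 hα1,
      h.integral_snd hξ1pos hξ2meas hξ2nonneg hθ1 hθ2 hα1, ← tsum_congr hdiff,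
      hsum1.tsum_sub hsum0]
    ring
  · exact mul_pos (by positivity) ((hsum1.sub hsum0).congr hdiff |>.tsum_pos
      (fun k => by positivity) 1 (by positivity))

/-- For the bivariate Pareto distribution with `α > 2`, the
product `ξ1·ξ2` is integrable with
`E[ξ1 ξ2] = (θ2/(α-1)) ∑_{k=0}^∞ (1 + k/θ1)^{1-α}`, and
`Cov(ξ1, ξ2) = E[ξ1 ξ2] - E[ξ1] E[ξ2] = (θ2/(α-1)) ∑_{k=0}^∞ (k/θ1)(1 + k/θ1)^{-α} > 0`. -/
theorem stmt_2
    {Ω : Type*} [MeasurableSpace Ω] (P : Measure Ω) [IsProbabilityMeasure P]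
    (ξ1 : Ω → ℕ) (ξ2 : Ω → ℝ)
    (hξ1meas : Measurable ξ1) (hξ2meas : Measurable ξ2)
    (hξ1pos : ∀ ω, 1 ≤ ξ1 ω) (hξ2nonneg : ∀ ω, 0 ≤ ξ2 ω)
    (α θ1 θ2 : ℝ) (hα : 0 < α) (hθ1 : 0 < θ1) (hθ2 : 0 < θ2)
    (hsurv : ∀ k : ℕ, 1 ≤ k → ∀ x : ℝ, 0 ≤ x →
      (P {ω | k ≤ ξ1 ω ∧ x ≤ ξ2 ω}).toReal
        = (1 + ((k : ℝ) - 1) / θ1 + x / θ2) ^ (-α))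
    (hα2 : 2 < α) :
    Integrable (fun ω => (ξ1 ω : ℝ) * ξ2 ω) P ∧
      (∫ ω, (ξ1 ω : ℝ) * ξ2 ω ∂P)
        = (θ2 / (α - 1)) * ∑' k : ℕ, (1 + (k : ℝ) / θ1) ^ (1 - α) ∧
      (∫ ω, (ξ1 ω : ℝ) * ξ2 ω ∂P) - (∫ ω, (ξ1 ω : ℝ) ∂P) * (∫ ω, ξ2 ω ∂P)
        = (θ2 / (α - 1)) * ∑' k : ℕ, ((k : ℝ) / θ1) * (1 + (k : ℝ) / θ1) ^ (-α) ∧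
      0 < (θ2 / (α - 1)) * ∑' k : ℕ, ((k : ℝ) / θ1) * (1 + (k : ℝ) / θ1) ^ (-α) :=
  stmt_2_general P ξ1 ξ2 hξ1meas hξ2meas hξ1pos hξ2nonneg α θ1 θ2 hθ1 hθ2 hsurv hα2
end

section
/- For every λ > 0, the function g_λ is continuous and convex on [0,∞), satisfies g_λ(0) < 0 and g_λ(x) → ∞ as x → ∞, and has exactly one root on [0,∞); this unique root lies in (0,∞). -/
open MeasureTheory Real Filter Set

/-- With `g_λ(x) = β x + ∫ (exp(-x u₂) - 1) ν(du)
+ (exp(-λ) - 1) ∫ exp(-x u₂) ν(du)`, for every `λ > 0` the function `g_λ` is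
continuous and convex on `[0,∞)`, satisfies `g_λ(0) < 0`, tends to `∞` at `∞`,
and has exactly one root on `[0,∞)`, which lies in `(0,∞)`. -/
theorem stmt_4
    (β : ℝ) (hβ : 0 < β) (ν : Measure (ℝ × ℝ)) [IsFiniteMeasure ν]
    (hν : ν ≠ 0) (hsupp : ν {u | u.2 < 0} = 0) (hpos : ν {u | 0 < u.2} ≠ 0)
    (g : ℝ → ℝ → ℝ)
    (hg : ∀ lam x, g lam x
      = β * x + (∫ u : ℝ × ℝ, (Real.exp (-x * u.2) - 1) ∂ν)
        + (Real.exp (-lam) - 1) * ∫ u : ℝ × ℝ, Real.exp (-x * u.2) ∂ν)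
    (lam : ℝ) (hlam : 0 < lam) :
    ContinuousOn (g lam) (Set.Ici 0) ∧
    ConvexOn ℝ (Set.Ici 0) (g lam) ∧
    g lam 0 < 0 ∧
    Filter.Tendsto (g lam) Filter.atTop Filter.atTop ∧
    (∃! x : ℝ, 0 ≤ x ∧ g lam x = 0) ∧
    (∀ x : ℝ, 0 ≤ x → g lam x = 0 → 0 < x) := by
  set c : ℝ := Real.exp (-lam) with hc
  have hc0 : 0 < c := Real.exp_pos _
  have hc1 : c < 1 := Real.exp_lt_one_iff.mpr (by linarith)
  set M : ℝ := (ν Set.univ).toReal with hM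
  have hM0 : 0 < M := by
    refine ENNReal.toReal_pos ?_ (measure_ne_top ν _)
    simpa [Measure.measure_univ_eq_zero] using hν
  -- a.e. nonnegativity of the second coordinate
  have hae : ∀ᵐ u ∂ν, 0 ≤ u.2 := by
    rw [MeasureTheory.ae_iff]
    simpa [not_le] using hsupp
  -- measurability
  have hmeas : ∀ x : ℝ, AEStronglyMeasurable (fun u : ℝ × ℝ => Real.exp (-x * u.2)) ν :=
    fun x => (Real.continuous_exp.comp (continuous_const.mul continuous_snd)).aestronglyMeasurable
  -- integrability for x ≥ 0
  have hbd : ∀ x : ℝ, 0 ≤ x → ∀ᵐ u ∂ν, ‖Real.exp (-x * u.2)‖ ≤ (1 : ℝ) := by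
    intro x hx
    filter_upwards [hae] with u hu
    rw [Real.norm_eq_abs, abs_of_pos (Real.exp_pos _)]
    exact Real.exp_le_one_iff.mpr (mul_nonpos_of_nonpos_of_nonneg (by linarith) hu)
  have hint : ∀ x : ℝ, 0 ≤ x → Integrable (fun u : ℝ × ℝ => Real.exp (-x * u.2)) ν :=
    fun x hx => Integrable.mono' (integrable_const 1) (hmeas x) (hbd x hx)
  set F : ℝ → ℝ := fun x => ∫ u : ℝ × ℝ, Real.exp (-x * u.2) ∂ν with hF
  have hF0 : ∀ x, 0 ≤ F x := fun x => integral_nonneg fun u => (Real.exp_pos _).le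
  have hFM : F 0 = M := by simp [hF, hM, Measure.real]
  -- rewrite g
  have hgeq : ∀ x : ℝ, 0 ≤ x → g lam x = β * x + c * F x - M := by
    intro x hx
    have hsub : (∫ u : ℝ × ℝ, (Real.exp (-x * u.2) - 1) ∂ν)
        = F x - M := by
      rw [integral_sub (hint x hx) (integrable_const 1)]
      simp [hF, hM, smul_eq_mul, Measure.real]
    rw [hg, hsub]; ring
  -- convexity of F on Ici 0
  have hFconv : ∀ a ∈ Set.Ici (0:ℝ), ∀ b ∈ Set.Ici (0:ℝ), ∀ t s : ℝ,
      0 ≤ t → 0 ≤ s → t + s = 1 → F (t * a + s * b) ≤ t * F a + s * F b := by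
    intro a ha b hb t s ht hs hts
    have ha' : (0:ℝ) ≤ a := ha
    have hb' : (0:ℝ) ≤ b := hb
    have hcomb : 0 ≤ t * a + s * b := by positivity
    have hptw : ∀ u : ℝ × ℝ, Real.exp (-(t * a + s * b) * u.2)
        ≤ t * Real.exp (-a * u.2) + s * Real.exp (-b * u.2) := by
      intro u
      have h := convexOn_exp.2 (Set.mem_univ (-a * u.2)) (Set.mem_univ (-b * u.2)) ht hs hts
      simp only [smul_eq_mul] at h
      have h2 : -(t * a + s * b) * u.2 = t * (-a * u.2) + s * (-b * u.2) := by ring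
      rw [h2]; exact h
    calc F (t * a + s * b) = ∫ u : ℝ × ℝ, Real.exp (-(t * a + s * b) * u.2) ∂ν := rfl
      _ ≤ ∫ u : ℝ × ℝ, (t * Real.exp (-a * u.2) + s * Real.exp (-b * u.2)) ∂ν :=
          integral_mono (hint _ hcomb)
            (((hint a ha).const_mul t).add ((hint b hb).const_mul s)) hptw
      _ = t * F a + s * F b := by
          rw [integral_add ((hint a ha').const_mul t) ((hint b hb').const_mul s),
            integral_const_mul, integral_const_mul]
  -- continuity
  have hcont : ContinuousOn (g lam) (Set.Ici 0) := by
    have hFc : ContinuousOn F (Set.Ici 0) := by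
      refine continuousOn_of_dominated (bound := fun _ => (1:ℝ))
        (fun x _ => hmeas x) (fun x hx => hbd x hx) (integrable_const 1) ?_
      filter_upwards with u
      exact (Real.continuous_exp.comp ((continuous_id.neg.mul continuous_const))).continuousOn
    have : ContinuousOn (fun x => β * x + c * F x - M) (Set.Ici 0) :=
      (((continuousOn_const.mul continuousOn_id).add (continuousOn_const.mul hFc)).sub
        continuousOn_const)
    exact this.congr hgeq
  have hconv : ConvexOn ℝ (Set.Ici 0) (g lam) := by
    refine ⟨convex_Ici 0, ?_⟩
    intro a ha b hb t s ht hs hts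
    have hcomb : (0:ℝ) ≤ t * a + s * b := by
      have := ha; have := hb
      simp only [Set.mem_Ici] at *
      positivity
    simp only [smul_eq_mul]
    rw [hgeq _ hcomb, hgeq _ ha, hgeq _ hb]
    have := hFconv a ha b hb t s ht hs hts
    nlinarith [this, hc0.le]
  have hg0 : g lam 0 < 0 := by
    rw [hgeq 0 le_rfl, hFM]
    nlinarith
  have htend : Tendsto (g lam) atTop atTop := by
    have h1 : Tendsto (fun x : ℝ => β * x - M) atTop atTop :=
      tendsto_atTop_add_const_right _ (-M) (tendsto_id.const_mul_atTop hβ)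
    refine tendsto_atTop_mono' _ ?_ h1
    filter_upwards [eventually_ge_atTop (0:ℝ)] with x hx
    rw [hgeq x hx]
    nlinarith [hF0 x, hc0.le]
  -- positivity of any root
  have hroot_pos : ∀ x : ℝ, 0 ≤ x → g lam x = 0 → 0 < x := by
    intro x hx hgx
    rcases hx.lt_or_eq with h | h
    · exact h
    · exfalso; rw [← h] at hgx; linarith [hg0]
  -- uniqueness of roots
  have huniq : ∀ x y : ℝ, 0 ≤ x → g lam x = 0 → 0 ≤ y → g lam y = 0 → x = y := by
    have key : ∀ x y : ℝ, 0 ≤ x → g lam x = 0 → 0 ≤ y → g lam y = 0 → x < y → False := by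
      intro x y hx hgx hy hgy hxy
      have hx0 : 0 < x := hroot_pos x hx hgx
      have hy0 : 0 < y := lt_trans hx0 hxy
      have ht : (0:ℝ) ≤ 1 - x / y := by
        have : x / y < 1 := (div_lt_one hy0).mpr hxy
        linarith
      have hs : (0:ℝ) ≤ x / y := by positivity
      have hsum : (1 - x / y) + x / y = 1 := by ring
      have hcombx : (1 - x / y) • (0:ℝ) + (x / y) • y = x := by
        rw [smul_zero, zero_add, smul_eq_mul, div_mul_cancel₀ x hy0.ne']
      have hcv := hconv.2 (Set.self_mem_Ici) (Set.mem_Ici.mpr hy0.le) ht hs hsum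
      rw [hcombx, hgx, hgy] at hcv
      simp only [smul_eq_mul, mul_zero, add_zero, smul_zero] at hcv
      have htpos : 0 < 1 - x / y := by
        have : x / y < 1 := (div_lt_one hy0).mpr hxy
        linarith
      nlinarith [hg0]
    intro x y hx hgx hy hgy
    rcases lt_trichotomy x y with h | h | h
    · exact absurd (key x y hx hgx hy hgy h) (fun f => f)
    · exact h
    · exact absurd (key y x hy hgy hx hgx h) (fun f => f)
  -- existence
  have hex : ∃ x : ℝ, 0 ≤ x ∧ g lam x = 0 := by
    obtain ⟨N, hN1, hN0⟩ := ((htend.eventually_gt_atTop 0).and (eventually_ge_atTop (0:ℝ))).exists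
    have hNmem : (0:ℝ) ≤ N := hN0
    have hIcc : Set.Icc (0:ℝ) N ⊆ Set.Ici 0 := fun z hz => hz.1
    have := intermediate_value_Icc hNmem (hcont.mono hIcc)
    have h0mem : (0:ℝ) ∈ Set.Icc (g lam 0) (g lam N) := ⟨hg0.le, hN1.le⟩
    obtain ⟨x, hxmem, hgx⟩ := this h0mem
    exact ⟨x, hxmem.1, hgx⟩
  obtain ⟨x₀, hx₀⟩ := hex
  exact ⟨hcont, hconv, hg0, htend,
    ⟨x₀, hx₀, fun y hy => huniq y x₀ hy.1 hy.2 hx₀.1 hx₀.2⟩, hroot_pos⟩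
end

section
/- Assume ∫ u2 ν(du) < ∞ and set β̃ = β − ∫ u2 ν(du). Then g_0(0) = 0, g_0 is convex on [0,∞), and: g_0(x) > 0 for every x > 0 if and only if β̃ ≥ 0; moreover, if β̃ < 0 then g_0 has exactly one root in (0,∞). -/
open MeasureTheory Real Filter Set
open Topology

/-- Assume `∫ u₂ ν(du) < ∞` and set `β̃ = β - ∫ u₂ ν(du)`.
Then `g₀(0) = 0`, `g₀` is convex on `[0,∞)`, `g₀(x) > 0` for all `x > 0` iff
`β̃ ≥ 0`, and if `β̃ < 0` then `g₀` has exactly one root in `(0,∞)`. -/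
theorem stmt_5
    (β : ℝ) (hβ : 0 < β) (ν : Measure (ℝ × ℝ)) [IsFiniteMeasure ν]
    (hν : ν ≠ 0) (hsupp : ν {u | u.2 < 0} = 0) (hpos : ν {u | 0 < u.2} ≠ 0)
    (g0 : ℝ → ℝ)
    (hg0 : ∀ x, g0 x = β * x + ∫ u : ℝ × ℝ, (Real.exp (-x * u.2) - 1) ∂ν)
    (hint : Integrable (fun u : ℝ × ℝ => u.2) ν) :
    g0 0 = 0 ∧
    ConvexOn ℝ (Set.Ici 0) g0 ∧
    ((∀ x : ℝ, 0 < x → 0 < g0 x) ↔ 0 ≤ β - ∫ u : ℝ × ℝ, u.2 ∂ν) ∧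
    ((β - ∫ u : ℝ × ℝ, u.2 ∂ν) < 0 → ∃! x : ℝ, 0 < x ∧ g0 x = 0) := by
  set m : ℝ := ∫ u : ℝ × ℝ, u.2 ∂ν with hm
  have haenn : ∀ᵐ u ∂ν, 0 ≤ u.2 := by
    rw [ae_iff]
    simpa [not_le] using hsupp
  -- integrability of the integrand for x ≥ 0
  have Lint : ∀ x : ℝ, 0 ≤ x → Integrable (fun u : ℝ × ℝ => Real.exp (-x * u.2) - 1) ν := by
    intro x hx
    refine Integrable.mono' (integrable_const (1:ℝ)) (Continuous.aestronglyMeasurable (by fun_prop)) ?_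
    filter_upwards [haenn] with u hu
    have h1 : Real.exp (-x * u.2) ≤ 1 := Real.exp_le_one_iff.mpr (by nlinarith)
    have h2 := Real.exp_pos (-x * u.2)
    rw [Real.norm_eq_abs, abs_le]
    constructor <;> linarith
  -- part 1
  have h0 : g0 0 = 0 := by simp [hg0 0]
  -- part 2: convexity
  have hconv : ConvexOn ℝ (Set.Ici 0) g0 := by
    refine ⟨convex_Ici 0, fun a ha b hb t s ht hs hts => ?_⟩
    simp only [smul_eq_mul, hg0]
    have hineq : ∀ u : ℝ × ℝ, Real.exp (-(t*a+s*b) * u.2) - 1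
        ≤ t * (Real.exp (-a*u.2) - 1) + s * (Real.exp (-b*u.2) - 1) := by
      intro u
      have := convexOn_exp.2 (Set.mem_univ (-a*u.2)) (Set.mem_univ (-b*u.2)) ht hs hts
      simp only [smul_eq_mul] at this
      have heq : t * (-a*u.2) + s * (-b*u.2) = -(t*a+s*b) * u.2 := by ring
      rw [heq] at this
      nlinarith
    have hi : ∫ u : ℝ × ℝ, (Real.exp (-(t*a+s*b) * u.2) - 1) ∂ν
        ≤ ∫ u : ℝ × ℝ, (t * (Real.exp (-a*u.2) - 1) + s * (Real.exp (-b*u.2) - 1)) ∂ν := by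
      refine integral_mono (Lint _ (add_nonneg (mul_nonneg ht ha) (mul_nonneg hs hb))) ?_ hineq
      exact ((Lint a ha).const_mul t).add ((Lint b hb).const_mul s)
    rw [integral_add ((Lint a ha).const_mul t) ((Lint b hb).const_mul s),
      integral_const_mul, integral_const_mul] at hi
    nlinarith
  -- positivity when β - m ≥ 0
  have hpos_of : 0 ≤ β - m → ∀ x : ℝ, 0 < x → 0 < g0 x := by
    intro hb x hx
    have hIf := Lint x hx.le
    have hIh : Integrable (fun u : ℝ × ℝ => Real.exp (-x*u.2) - 1 + x * u.2) ν :=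
      hIf.add (hint.const_mul x)
    have hnn : ∀ u : ℝ × ℝ, 0 ≤ Real.exp (-x*u.2) - 1 + x*u.2 := by
      intro u; have := Real.add_one_le_exp (-x*u.2); linarith
    have hIpos : 0 < ∫ u : ℝ × ℝ, (Real.exp (-x*u.2) - 1 + x*u.2) ∂ν := by
      rcases (integral_nonneg (μ := ν) (f := fun u : ℝ × ℝ => Real.exp (-x*u.2) - 1 + x*u.2) hnn).lt_or_eq with h | h
      · exact h
      · exfalso
        have hz : (fun u : ℝ × ℝ => Real.exp (-x*u.2) - 1 + x*u.2) =ᵐ[ν] 0 :=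
          (integral_eq_zero_iff_of_nonneg hnn hIh).mp h.symm
        have hz2 : ν {u : ℝ × ℝ | ¬ (Real.exp (-x*u.2) - 1 + x*u.2 = 0)} = 0 := hz
        have hsub : {u : ℝ × ℝ | 0 < u.2} ⊆
            {u : ℝ × ℝ | ¬ (Real.exp (-x*u.2) - 1 + x*u.2 = 0)} := by
          intro u hu
          have hne : (-x*u.2) ≠ 0 := by
            have : 0 < x * u.2 := mul_pos hx hu
            intro hc; nlinarith
          have := Real.add_one_lt_exp hne
          intro hc
          simp only [Set.mem_setOf_eq] at hu hc ⊢
          nlinarith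
        exact hpos (le_antisymm (hz2 ▸ measure_mono hsub) zero_le)
    have hsplit : ∫ u : ℝ × ℝ, (Real.exp (-x*u.2) - 1) ∂ν
        = (∫ u : ℝ × ℝ, (Real.exp (-x*u.2) - 1 + x*u.2) ∂ν) - x * m := by
      rw [hm, ← integral_const_mul, ← integral_sub hIh (hint.const_mul x)]
      congr 1; funext u; ring
    rw [hg0, hsplit]
    nlinarith [mul_nonneg hx.le hb]
  -- the limit of g0 x / x as x → 0+
  have hlim : Tendsto (fun x => g0 x / x) (𝓝[>] (0:ℝ)) (𝓝 (β - m)) := by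
    have hI : Tendsto (fun x : ℝ => ∫ u : ℝ × ℝ, (Real.exp (-x*u.2) - 1)/x ∂ν)
        (𝓝[>] (0:ℝ)) (𝓝 (∫ u : ℝ × ℝ, -u.2 ∂ν)) := by
      refine tendsto_integral_filter_of_dominated_convergence (f := fun u : ℝ × ℝ => -u.2) (fun u : ℝ × ℝ => u.2)
        (Eventually.of_forall fun x => Continuous.aestronglyMeasurable (by fun_prop))
        ?_ hint ?_
      · filter_upwards [self_mem_nhdsWithin] with x hx
        have hx' : (0:ℝ) < x := hx
        filter_upwards [haenn] with u hu
        have h1 := Real.add_one_le_exp (-x*u.2)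
        have h2 : Real.exp (-x*u.2) ≤ 1 := Real.exp_le_one_iff.mpr (by nlinarith)
        rw [Real.norm_eq_abs, abs_div, abs_of_pos hx', div_le_iff₀ hx']
        exact abs_le.mpr ⟨by nlinarith, by nlinarith⟩
      · refine Eventually.of_forall fun u => ?_
        have h1 : HasDerivAt (fun x : ℝ => -x*u.2) (-u.2) 0 := by
          simpa [neg_mul, Pi.neg_def] using ((hasDerivAt_mul_const u.2).neg : HasDerivAt (-fun x : ℝ => x*u.2) (-u.2) 0)
        have hd : HasDerivAt (fun x : ℝ => Real.exp (-x*u.2)) (-u.2) 0 := by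
          simpa using h1.exp
        have hslope := hasDerivAt_iff_tendsto_slope.mp hd
        have hmono : 𝓝[>] (0:ℝ) ≤ 𝓝[≠] (0:ℝ) :=
          nhdsWithin_mono _ (fun y hy => ne_of_gt hy)
        refine (hslope.mono_left hmono).congr (fun y => ?_)
        simp [slope_def_field]
    have hg : ∀ᶠ x in 𝓝[>] (0:ℝ),
        β + (∫ u : ℝ × ℝ, (Real.exp (-x*u.2) - 1)/x ∂ν) = g0 x / x := by
      filter_upwards [self_mem_nhdsWithin] with x hx
      have hx' : (0:ℝ) < x := hx
      rw [hg0, integral_div, add_div, mul_div_assoc, div_self (ne_of_gt hx'), mul_one]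
    have := (tendsto_const_nhds (x := β) (f := 𝓝[>] (0:ℝ))).add hI
    have h2 : β + ∫ u : ℝ × ℝ, -u.2 ∂ν = β - m := by
      rw [integral_neg]; ring
    rw [h2] at this
    exact this.congr' hg
  -- converse of part 3
  have hconv3 : (∀ x : ℝ, 0 < x → 0 < g0 x) → 0 ≤ β - m := by
    intro hall
    refine ge_of_tendsto hlim ?_
    filter_upwards [self_mem_nhdsWithin] with x hx
    exact div_nonneg (hall x hx).le (le_of_lt hx)
  -- continuity on (0, ∞)
  have hcont : ∀ x0 : ℝ, 0 < x0 → ContinuousAt g0 x0 := by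
    intro x0 hx0
    have hI : ContinuousAt (fun x => ∫ u : ℝ × ℝ, (Real.exp (-x*u.2) - 1) ∂ν) x0 := by
      refine continuousAt_of_dominated
        (Eventually.of_forall fun x => Continuous.aestronglyMeasurable (by fun_prop))
        ?_ (integrable_const (1:ℝ)) ?_
      · filter_upwards [eventually_gt_nhds hx0] with x hx
        filter_upwards [haenn] with u hu
        have h1 : Real.exp (-x * u.2) ≤ 1 := Real.exp_le_one_iff.mpr (by nlinarith)
        have h2 := Real.exp_pos (-x * u.2)
        rw [Real.norm_eq_abs, abs_le]
        constructor <;> linarith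
      · exact Eventually.of_forall fun u =>
          (by fun_prop : Continuous fun x : ℝ => Real.exp (-x*u.2) - 1).continuousAt
    have hgeq : g0 = fun x => β * x + ∫ u : ℝ × ℝ, (Real.exp (-x*u.2) - 1) ∂ν := funext hg0
    rw [hgeq]
    exact ((continuousAt_const.mul continuousAt_id)).add hI
  refine ⟨h0, hconv, ⟨hconv3, fun hb x hx => hpos_of hb x hx⟩, ?_⟩
  -- part 4
  intro hb
  have hneg : ∀ᶠ x in 𝓝[>] (0:ℝ), g0 x < 0 := by
    filter_upwards [hlim.eventually (eventually_lt_nhds hb), self_mem_nhdsWithin] with x h1 h2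
    have hx' : (0:ℝ) < x := h2
    have := mul_neg_of_neg_of_pos h1 hx'
    rwa [div_mul_cancel₀ _ (ne_of_gt hx')] at this
  have key : ∀ a : ℝ, 0 < a → ∃ c, 0 < c ∧ c < a ∧ g0 c < 0 := by
    intro a ha
    have h2 : Ioo (0:ℝ) a ∈ 𝓝[>] (0:ℝ) := Ioo_mem_nhdsGT_of_mem ⟨le_refl 0, ha⟩
    obtain ⟨c, hc1, hc2⟩ := (hneg.and (eventually_of_mem h2 fun x hx => hx)).exists
    exact ⟨c, hc2.1, hc2.2, hc1⟩
  have hone : ∀ x y : ℝ, 0 < x → g0 x = 0 → g0 y = 0 → x < y → False := by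
    intro x y hx hgx hgy hxy
    obtain ⟨c, hc0, hcx, hgc⟩ := key x hx
    have hyc : 0 < y - c := by linarith
    set t := (y - x)/(y - c) with hts0
    set s := (x - c)/(y - c) with hss0
    have ht : 0 < t := div_pos (by linarith) hyc
    have hs : 0 ≤ s := div_nonneg (by linarith) hyc.le
    have hts : t + s = 1 := by rw [hts0, hss0, ← add_div, show y - x + (x - c) = y - c from by ring]; exact div_self hyc.ne'
    have hcombo : t * c + s * y = x := by rw [hts0, hss0]; field_simp; ring
    have hcv := hconv.2 (Set.mem_Ici.mpr hc0.le)
      (Set.mem_Ici.mpr (le_of_lt (lt_trans hx hxy))) ht.le hs hts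
    simp only [smul_eq_mul] at hcv
    rw [hcombo, hgx, hgy] at hcv
    nlinarith [mul_pos ht (neg_pos.mpr hgc)]
  obtain ⟨c, hc0, _, hgc⟩ := key 1 one_pos
  set M := (ν Set.univ).toReal with hM
  set X := max (c+1) ((M+1)/β) with hX
  have hXc : c < X := lt_of_lt_of_le (by linarith) (le_max_left _ _)
  have hX0 : 0 < X := lt_trans hc0 hXc
  have hgX : 0 < g0 X := by
    have hlow : ∫ u : ℝ × ℝ, (-1 : ℝ) ∂ν ≤ ∫ u : ℝ × ℝ, (Real.exp (-X*u.2) - 1) ∂ν := by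
      refine integral_mono (integrable_const (-1:ℝ)) (Lint X hX0.le) (fun u => ?_)
      show (-1:ℝ) ≤ Real.exp (-X*u.2) - 1
      have := Real.exp_pos (-X*u.2); linarith
    have hconst : ∫ u : ℝ × ℝ, (-1 : ℝ) ∂ν = -M := by
      rw [integral_const, smul_eq_mul, hM]; simp [Measure.real]
    rw [hconst] at hlow
    have hXb : (M+1)/β ≤ X := le_max_right _ _
    have h3 : M + 1 ≤ β * X := by rw [div_le_iff₀ hβ] at hXb; linarith
    rw [hg0]; linarith
  have hcX : ContinuousOn g0 (Icc c X) :=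
    fun x hx => (hcont x (lt_of_lt_of_le hc0 hx.1)).continuousWithinAt
  obtain ⟨r, hr, hgr⟩ := intermediate_value_Ioo hXc.le hcX ⟨hgc, hgX⟩
  refine ⟨r, ⟨lt_trans hc0 hr.1, hgr⟩, ?_⟩
  rintro z ⟨hz0, hgz⟩
  rcases lt_trichotomy z r with h | h | h
  · exact absurd (hone z r hz0 hgz hgr h) not_false
  · exact h
  · exact absurd (hone r z (lt_trans hc0 hr.1) hgr hgz h) not_false
end

section
/- Let r = max{x ≥ 0 : g_0(x) = 0} (this maximum exists: the zero set of g_0 on [0,∞) is nonempty, closed and bounded). For λ > 0 let x_λ denote the unique root of g_λ in (0,∞). Then x_λ > r for every λ > 0, and x_λ converges to r as λ → 0+. -/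
open MeasureTheory Real Filter Set

section Aux

variable {ν : Measure (ℝ × ℝ)} [IsFiniteMeasure ν]

omit [IsFiniteMeasure ν] in
lemma stmt6_ae (hsupp : ν {u | u.2 < 0} = 0) : ∀ᵐ u : ℝ × ℝ ∂ν, 0 ≤ u.2 := by
  rw [ae_iff]
  convert hsupp using 2
  ext u
  simp [not_le]

lemma stmt6_int (hsupp : ν {u | u.2 < 0} = 0) (x : ℝ) (hx : 0 ≤ x) :
    Integrable (fun u : ℝ × ℝ => Real.exp (-x * u.2)) ν := by
  refine Integrable.mono' (integrable_const 1) ?_ ?_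
  · exact (Real.continuous_exp.comp ((continuous_const.mul continuous_snd))).aestronglyMeasurable
  · filter_upwards [stmt6_ae hsupp] with u hu
    rw [Real.norm_eq_abs, abs_of_pos (Real.exp_pos _)]
    rw [Real.exp_le_one_iff]
    nlinarith

lemma stmt6_int_sub (hsupp : ν {u | u.2 < 0} = 0) (x : ℝ) (hx : 0 ≤ x) :
    Integrable (fun u : ℝ × ℝ => Real.exp (-x * u.2) - 1) ν :=
  (stmt6_int hsupp x hx).sub (integrable_const 1)

end Aux

/-- The set `{x ≥ 0 : g₀(x) = 0}` has a greatest element `r`;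
every root `x_λ` of `g_λ` in `[0,∞)` for `λ > 0` satisfies `x_λ > r`, and any
selection of roots converges to `r` as `λ → 0+`. -/
theorem stmt_6
    (β : ℝ) (hβ : 0 < β) (ν : Measure (ℝ × ℝ)) [IsFiniteMeasure ν]
    (hν : ν ≠ 0) (hsupp : ν {u | u.2 < 0} = 0) (hpos : ν {u | 0 < u.2} ≠ 0)
    (g : ℝ → ℝ → ℝ)
    (hg : ∀ lam x, g lam x
      = β * x + (∫ u : ℝ × ℝ, (Real.exp (-x * u.2) - 1) ∂ν)
        + (Real.exp (-lam) - 1) * ∫ u : ℝ × ℝ, Real.exp (-x * u.2) ∂ν) :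
    ∃ r : ℝ, IsGreatest {x : ℝ | 0 ≤ x ∧ g 0 x = 0} r ∧
      (∀ lam : ℝ, 0 < lam → ∀ x : ℝ, 0 ≤ x → g lam x = 0 → r < x) ∧
      (∀ xr : ℝ → ℝ, (∀ lam : ℝ, 0 < lam → 0 ≤ xr lam ∧ g lam (xr lam) = 0) →
        Filter.Tendsto xr (nhdsWithin 0 (Set.Ioi 0)) (nhds r)) := by
  have hae : ∀ᵐ u : ℝ × ℝ ∂ν, 0 ≤ u.2 := stmt6_ae hsupp
  set Ctot : ℝ := (ν Set.univ).toReal with hCdef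
  have hCpos : 0 < Ctot := ENNReal.toReal_pos (by simpa [Measure.measure_univ_eq_zero] using hν)
    (measure_ne_top ν _)
  -- the integral I x
  set I : ℝ → ℝ := fun x => ∫ u : ℝ × ℝ, Real.exp (-x * u.2) ∂ν with hIdef
  have hIpos : ∀ x : ℝ, 0 ≤ x → 0 < I x := by
    intro x hx
    rw [hIdef]
    rw [integral_pos_iff_support_of_nonneg (fun u => (Real.exp_pos _).le) (stmt6_int hsupp x hx)]
    have : (Function.support fun u : ℝ × ℝ => Real.exp (-x * u.2)) = Set.univ := by
      ext u; simp [Function.mem_support, (Real.exp_pos _).ne']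
    rw [this]
    exact Measure.measure_univ_pos.mpr hν
  have hIle : ∀ x : ℝ, 0 ≤ x → I x ≤ Ctot := by
    intro x hx
    have : I x ≤ ∫ _u : ℝ × ℝ, (1 : ℝ) ∂ν := by
      refine integral_mono_ae (stmt6_int hsupp x hx) (integrable_const 1) ?_
      filter_upwards [hae] with u hu
      rw [Real.exp_le_one_iff]; nlinarith
    simp at this; exact this
  -- g 0 basics
  have hg0eq : ∀ x : ℝ, g 0 x = β * x + ∫ u : ℝ × ℝ, (Real.exp (-x * u.2) - 1) ∂ν := by
    intro x; rw [hg]; simp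
  have hglam : ∀ lam x : ℝ, g lam x = g 0 x + (Real.exp (-lam) - 1) * I x := by
    intro lam x; rw [hg, hg0eq]
  have hg00 : g 0 0 = 0 := by
    rw [hg0eq]; simp
  have hJlb : ∀ x : ℝ, 0 ≤ x → -Ctot ≤ ∫ u : ℝ × ℝ, (Real.exp (-x * u.2) - 1) ∂ν := by
    intro x hx
    have : ∫ _u : ℝ × ℝ, (-1 : ℝ) ∂ν ≤ ∫ u : ℝ × ℝ, (Real.exp (-x * u.2) - 1) ∂ν := by
      refine integral_mono_ae (integrable_const _) (stmt6_int_sub hsupp x hx) ?_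
      filter_upwards with u
      have := (Real.exp_pos (-x * u.2)).le
      linarith
    convert this using 1; simp only [integral_const, smul_eq_mul, mul_neg, mul_one]; rfl
  -- convexity of g 0 on [0, ∞)
  have hconv : ConvexOn ℝ (Set.Ici (0:ℝ)) (g 0) := by
    refine ⟨convex_Ici 0, ?_⟩
    intro x hx y hy a b ha hb hab
    simp only [smul_eq_mul] at *
    rw [hg0eq, hg0eq, hg0eq]
    have key : ∫ u : ℝ × ℝ, (Real.exp (-(a * x + b * y) * u.2) - 1) ∂ν
        ≤ a * (∫ u : ℝ × ℝ, (Real.exp (-x * u.2) - 1) ∂ν)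
          + b * (∫ u : ℝ × ℝ, (Real.exp (-y * u.2) - 1) ∂ν) := by
      rw [← integral_const_mul, ← integral_const_mul, ← integral_add
        ((stmt6_int_sub hsupp x hx).const_mul a) ((stmt6_int_sub hsupp y hy).const_mul b)]
      refine integral_mono (stmt6_int_sub hsupp _ (add_nonneg (mul_nonneg ha hx) (mul_nonneg hb hy)))
        (((stmt6_int_sub hsupp x hx).const_mul a).add
          ((stmt6_int_sub hsupp y hy).const_mul b)) ?_
      intro u
      have hexp := convexOn_exp.2 (Set.mem_univ (-x * u.2)) (Set.mem_univ (-y * u.2)) ha hb hab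
      simp only [smul_eq_mul] at hexp ⊢
      have harg : -(a * x + b * y) * u.2 = a * (-x * u.2) + b * (-y * u.2) := by ring
      rw [harg]
      nlinarith
    nlinarith
  -- the zero set S
  set S : Set ℝ := {x : ℝ | 0 ≤ x ∧ g 0 x = 0} with hSdef
  have hS0 : (0:ℝ) ∈ S := ⟨le_refl 0, hg00⟩
  have hSub : S ⊆ Set.Icc 0 (Ctot / β) := by
    intro x hx
    refine ⟨hx.1, ?_⟩
    have h1 := hJlb x hx.1
    have h2 : g 0 x = 0 := hx.2
    rw [hg0eq] at h2
    rw [le_div_iff₀ hβ]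
    nlinarith
  have hSbdd : BddAbove S := ⟨Ctot / β, fun x hx => (hSub hx).2⟩
  -- continuity: truncated version of g 0
  set φ : ℝ → ℝ := fun x => β * x + ∫ u : ℝ × ℝ, (Real.exp (-(max x 0) * u.2) - 1) ∂ν with hφdef
  have hφcont : Continuous φ := by
    refine (continuous_const.mul continuous_id).add ?_
    refine continuous_of_dominated (bound := fun _ => (1:ℝ)) ?_ ?_ (integrable_const 1) ?_
    · intro x
      exact ((Real.continuous_exp.comp (continuous_const.mul continuous_snd)).sub
        continuous_const).aestronglyMeasurable
    · intro x
      filter_upwards [hae] with u hu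
      have h1 : Real.exp (-(max x 0) * u.2) ≤ 1 := by
        rw [Real.exp_le_one_iff]
        have : 0 ≤ max x 0 := le_max_right x 0
        nlinarith
      have h2 := (Real.exp_pos (-(max x 0) * u.2)).le
      rw [Real.norm_eq_abs, abs_le]
      constructor <;> linarith
    · filter_upwards with u
      exact (Real.continuous_exp.comp
        (((continuous_id.max continuous_const).neg).mul continuous_const)).sub continuous_const
  have hφeq : ∀ x : ℝ, 0 ≤ x → g 0 x = φ x := by
    intro x hx
    rw [hg0eq, hφdef]
    simp [max_eq_left hx]
  have hSclosed : IsClosed S := by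
    have : S = Set.Ici 0 ∩ φ ⁻¹' {0} := by
      ext x
      simp only [hSdef, Set.mem_setOf_eq, Set.mem_inter_iff, Set.mem_Ici, Set.mem_preimage,
        Set.mem_singleton_iff]
      constructor
      · rintro ⟨h1, h2⟩; exact ⟨h1, by rw [← hφeq x h1]; exact h2⟩
      · rintro ⟨h1, h2⟩; exact ⟨h1, by rw [hφeq x h1]; exact h2⟩
    rw [this]
    exact isClosed_Ici.inter (IsClosed.preimage hφcont isClosed_singleton)
  -- the greatest root r
  set r : ℝ := sSup S with hrdef
  have hrS : r ∈ S := hSclosed.csSup_mem ⟨0, hS0⟩ hSbdd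
  have hrGreat : IsGreatest S r := ⟨hrS, fun x hx => le_csSup hSbdd hx⟩
  have hr0 : 0 ≤ r := hrS.1
  have hgr : g 0 r = 0 := hrS.2
  -- Part 2
  have part2 : ∀ lam : ℝ, 0 < lam → ∀ x : ℝ, 0 ≤ x → g lam x = 0 → r < x := by
    intro lam hlam x hx hroot
    have hIx := hIpos x hx
    have hexp : Real.exp (-lam) < 1 := by
      rw [Real.exp_lt_one_iff]; linarith
    have hg0x : 0 < g 0 x := by
      rw [hglam] at hroot
      nlinarith
    by_contra hcon
    push_neg at hcon
    rcases eq_or_lt_of_le hr0 with h | h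
    · have hx0 : x = 0 := le_antisymm (by rw [← h] at hcon; exact hcon) hx
      rw [hx0, hg00] at hg0x; exact lt_irrefl 0 hg0x
    · set t : ℝ := x / r with htdef
      have ht0 : 0 ≤ t := div_nonneg hx hr0
      have ht1 : t ≤ 1 := by rw [div_le_one h]; exact hcon
      have hcomb := hconv.2 (Set.self_mem_Ici) (Set.mem_Ici.mpr hr0)
        (by linarith : (0:ℝ) ≤ 1 - t) ht0 (by ring)
      simp only [smul_eq_mul, mul_zero, zero_add] at hcomb
      rw [htdef, div_mul_cancel₀ x (ne_of_gt h)] at hcomb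
      rw [hg00, hgr] at hcomb
      nlinarith
  refine ⟨r, hrGreat, part2, ?_⟩
  -- Part 3
  intro xr hxr
  rw [Metric.tendsto_nhds]
  intro ε hε
  -- c = g 0 (r + ε) > 0
  have hrε : 0 ≤ r + ε := by linarith
  set c : ℝ := g 0 (r + ε) with hcdef
  have hcne : c ≠ 0 := by
    intro hc
    have : r + ε ∈ S := ⟨hrε, hc⟩
    have := hrGreat.2 this
    linarith
  have hcpos : 0 < c := by
    rcases hcne.lt_or_gt with hneg | hposc
    · exfalso
      -- IVT gives a root beyond r + ε
      set M : ℝ := max (r + ε) ((Ctot + 1) / β) with hMdef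
      have hM1 : r + ε ≤ M := le_max_left _ _
      have hM0 : 0 ≤ M := le_trans hrε hM1
      have hgM : 0 < g 0 M := by
        have h1 := hJlb M hM0
        have h2 : (Ctot + 1) / β ≤ M := le_max_right _ _
        rw [div_le_iff₀ hβ] at h2
        rw [hg0eq]
        nlinarith
      have hIcc : Set.Icc (φ (r + ε)) (φ M) ⊆ φ '' Set.Icc (r + ε) M :=
        intermediate_value_Icc hM1 (hφcont.continuousOn)
      have h0mem : (0:ℝ) ∈ Set.Icc (φ (r + ε)) (φ M) := by
        rw [← hφeq _ hrε, ← hφeq _ hM0]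
        exact ⟨by rw [← hcdef]; linarith, le_of_lt hgM⟩
      obtain ⟨z, hz, hφz⟩ := hIcc h0mem
      have hz0 : 0 ≤ z := le_trans hrε hz.1
      have hzS : z ∈ S := ⟨hz0, by rw [hφeq z hz0]; exact hφz⟩
      have := hrGreat.2 hzS
      linarith [hz.1]
    · exact hposc
  -- choose δ
  refine Filter.eventually_iff_exists_mem.mpr ⟨Set.Ioo 0 (c / Ctot),
    Ioo_mem_nhdsGT_of_mem ⟨le_refl 0, div_pos hcpos hCpos⟩, ?_⟩
  intro lam hlam
  obtain ⟨hlam0, hlamδ⟩ := hlam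
  obtain ⟨hx0, hroot⟩ := hxr lam hlam0
  set x : ℝ := xr lam with hxdef
  have hrx : r < x := part2 lam hlam0 x hx0 hroot
  -- g 0 x = (1 - exp(-lam)) * I x ≤ lam * Ctot < c
  have hg0x : g 0 x = (1 - Real.exp (-lam)) * I x := by
    rw [hglam] at hroot; linarith
  have hexple : 1 - Real.exp (-lam) ≤ lam := by
    have := Real.add_one_le_exp (-lam)
    linarith
  have hexpnn : 0 ≤ 1 - Real.exp (-lam) := by
    have : Real.exp (-lam) ≤ 1 := by rw [Real.exp_le_one_iff]; linarith
    linarith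
  have hg0x_lt : g 0 x < c := by
    have h1 : (1 - Real.exp (-lam)) * I x ≤ (1 - Real.exp (-lam)) * Ctot :=
      mul_le_mul_of_nonneg_left (hIle x hx0) hexpnn
    have h2 : (1 - Real.exp (-lam)) * Ctot ≤ lam * Ctot :=
      mul_le_mul_of_nonneg_right hexple hCpos.le
    have h3 : lam * Ctot < c := (lt_div_iff₀ hCpos).mp hlamδ
    rw [hg0x]; linarith
  -- x < r + ε by convexity
  have hxlt : x < r + ε := by
    by_contra hcon
    push_neg at hcon
    set t : ℝ := ε / (x - r) with htdef
    have hxr' : 0 < x - r := by linarith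
    have ht0 : 0 ≤ t := div_nonneg hε.le hxr'.le
    have ht1 : t ≤ 1 := by rw [div_le_one hxr']; linarith
    have hcomb := hconv.2 (Set.mem_Ici.mpr hr0) (Set.mem_Ici.mpr hx0)
      (by linarith : (0:ℝ) ≤ 1 - t) ht0 (by ring)
    simp only [smul_eq_mul] at hcomb
    have harg : (1 - t) * r + t * x = r + ε := by
      rw [htdef]
      field_simp
      ring
    rw [harg, hgr] at hcomb
    -- hcomb : g 0 (r + ε) ≤ (1 - t) * 0 + t * g 0 x
    have hg0xpos : 0 < g 0 x := by
      rw [hg0x]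
      have : 0 < 1 - Real.exp (-lam) := by
        have : Real.exp (-lam) < 1 := by rw [Real.exp_lt_one_iff]; linarith
        linarith
      exact mul_pos this (hIpos x hx0)
    have : c ≤ g 0 x := by
      rw [hcdef]
      nlinarith
    linarith
  rw [Real.dist_eq, abs_lt]
  constructor <;> linarith
end

section
/- Assume ∫ u2 ν(du) < ∞ and β̃ = β − ∫ u2 ν(du) > 0. If φ : [0,∞) → [0,∞) satisfies φ(t) = 1/β − ∫_0^t g_0(φ(s)) ds for every t ≥ 0, then φ(t) ≤ (1/β)·exp(−β̃·t) for every t ≥ 0. -/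
open MeasureTheory Real Filter Set Topology

/-!
For `0 ≤ y ≤ x` and `u ≥ 0` one has `-(x - y) u ≤ e^{-xu} - e^{-yu} ≤ 0`. Integrating against `ν`,
`g₀` is monotone and continuous on `[0, ∞)` with `g₀ x ≥ β̃ x`. Along the solution
`φ' = -g₀ ∘ φ ≤ -β̃ φ`, so `φ(t) e^{β̃ t}` is antitone, which is the bound.

To differentiate, `g₀ ∘ φ` must be locally integrable, which the equation does not give for free
(a non-integrable integrand has integral `0`). Where `g₀ ∘ φ` is integrable on `[0, t]` the
solution is antitone, hence so is `g₀ ∘ φ`; elsewhere `φ t = 1/β`. So `g₀ ∘ φ` is measurable and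
bounded by `g₀ (1/β)`.
-/

theorem neg_sub_mul_le_exp_neg_mul_sub_exp_neg_mul {x y u : ℝ} (hy : 0 ≤ y) (hyx : y ≤ x)
    (hu : 0 ≤ u) : -((x - y) * u) ≤ exp (-x * u) - exp (-y * u) := by
  have hsplit : exp (-x * u) - exp (-y * u) = exp (-y * u) * (exp (-((x - y) * u)) - 1) := by
    rw [mul_sub, mul_one, ← exp_add]; ring_nf
  have hexp_le_one : exp (-y * u) ≤ 1 := exp_le_one_iff.2 (by nlinarith)
  have hexp_ge : -((x - y) * u) ≤ exp (-((x - y) * u)) - 1 := by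
    linarith [add_one_le_exp (-((x - y) * u))]
  have hd : 0 ≤ (x - y) * u := mul_nonneg (sub_nonneg.2 hyx) hu
  rw [hsplit]
  nlinarith [exp_pos (-y * u)]

section Laplace

variable {α : Type*} [MeasurableSpace α] {μ : Measure α} {X : α → ℝ}

theorem integrable_exp_neg_mul_sub_one (hX : Integrable X μ) (hX0 : 0 ≤ᵐ[μ] X) {x : ℝ}
    (hx : 0 ≤ x) : Integrable (fun a => exp (-x * X a) - 1) μ := by
  refine (hX.const_mul x).mono' (by fun_prop) ?_
  filter_upwards [hX0] with a (ha : 0 ≤ X a)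
  have hle : exp (-x * X a) ≤ 1 := exp_le_one_iff.2 (by nlinarith)
  rw [Real.norm_eq_abs, abs_of_nonpos (sub_nonpos.2 hle)]
  linarith [add_one_le_exp (-x * X a)]

theorem neg_sub_mul_integral_le_integral_exp_neg_mul_sub_one_sub (hX : Integrable X μ)
    (hX0 : 0 ≤ᵐ[μ] X) {x y : ℝ} (hy : 0 ≤ y) (hyx : y ≤ x) :
    -((x - y) * ∫ a, X a ∂μ) ≤
      (∫ a, (exp (-x * X a) - 1) ∂μ) - ∫ a, (exp (-y * X a) - 1) ∂μ := by
  have hint_x := integrable_exp_neg_mul_sub_one hX hX0 (hy.trans hyx)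
  have hint_y := integrable_exp_neg_mul_sub_one hX hX0 hy
  rw [← integral_sub hint_x hint_y, ← integral_const_mul, ← integral_neg]
  refine integral_mono_ae (hX.const_mul _).neg (hint_x.sub hint_y) ?_
  filter_upwards [hX0] with a (ha : 0 ≤ X a)
  simpa using neg_sub_mul_le_exp_neg_mul_sub_exp_neg_mul hy hyx ha

theorem antitoneOn_integral_exp_neg_mul_sub_one (hX : Integrable X μ) (hX0 : 0 ≤ᵐ[μ] X) :
    AntitoneOn (fun x => ∫ a, (exp (-x * X a) - 1) ∂μ) (Ici 0) := by
  intro y hy x hx hyx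
  refine integral_mono_ae (integrable_exp_neg_mul_sub_one hX hX0 hx)
    (integrable_exp_neg_mul_sub_one hX hX0 hy) ?_
  filter_upwards [hX0] with a (ha : 0 ≤ X a)
  simpa using exp_le_exp.2 (by nlinarith : -x * X a ≤ -y * X a)

theorem lipschitzOnWith_integral_exp_neg_mul_sub_one (hX : Integrable X μ) (hX0 : 0 ≤ᵐ[μ] X) :
    LipschitzOnWith (∫ a, X a ∂μ).toNNReal (fun x => ∫ a, (exp (-x * X a) - 1) ∂μ) (Ici 0) := by
  refine LipschitzOnWith.of_dist_le_mul fun x hx y hy => ?_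
  wlog hyx : y ≤ x generalizing x y
  · rw [dist_comm, dist_comm x]; exact this y hy x hx (le_of_not_ge hyx)
  rw [Real.coe_toNNReal _ (integral_nonneg_of_ae hX0), Real.dist_eq, Real.dist_eq,
    abs_of_nonneg (sub_nonneg.2 hyx),
    abs_of_nonpos (sub_nonpos.2 (antitoneOn_integral_exp_neg_mul_sub_one hX hX0 hy hx hyx))]
  linarith [neg_sub_mul_integral_le_integral_exp_neg_mul_sub_one_sub hX hX0 hy hyx]

theorem sub_integral_mul_le_mul_add_integral_exp_neg_mul_sub_one (hX : Integrable X μ)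
    (hX0 : 0 ≤ᵐ[μ] X) (β : ℝ) {x : ℝ} (hx : 0 ≤ x) :
    (β - ∫ a, X a ∂μ) * x ≤ β * x + ∫ a, (exp (-x * X a) - 1) ∂μ := by
  have := neg_sub_mul_integral_le_integral_exp_neg_mul_sub_one_sub hX hX0 le_rfl hx
  simp only [sub_zero, neg_zero, zero_mul, exp_zero, sub_self, integral_zero] at this
  linarith

theorem monotoneOn_mul_add_integral_exp_neg_mul_sub_one (hX : Integrable X μ)
    (hX0 : 0 ≤ᵐ[μ] X) {β : ℝ} (hβ : ∫ a, X a ∂μ ≤ β) :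
    MonotoneOn (fun x => β * x + ∫ a, (exp (-x * X a) - 1) ∂μ) (Ici 0) := by
  intro y hy x hx hyx
  have := neg_sub_mul_integral_le_integral_exp_neg_mul_sub_one_sub hX hX0 hy hyx
  nlinarith

end Laplace

theorem le_mul_exp_neg_of_hasDerivAt_le {φ φ' : ℝ → ℝ} {c : ℝ}
    (hcont : ContinuousOn φ (Ici 0)) (hderiv : ∀ t, 0 < t → HasDerivAt φ (φ' t) t)
    (hle : ∀ t, 0 < t → φ' t ≤ -(c * φ t))
    {t : ℝ} (ht : 0 ≤ t) : φ t ≤ φ 0 * exp (-c * t) := by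
  have hanti : AntitoneOn (fun x => φ x * exp (c * x)) (Ici 0) := by
    refine antitoneOn_of_hasDerivWithinAt_nonpos (convex_Ici 0) (by fun_prop)
      (f' := fun x => φ' x * exp (c * x) + φ x * (exp (c * x) * c)) ?_ ?_
    · intro x hx
      rw [interior_Ici] at hx
      exact ((hderiv x hx).mul (((hasDerivAt_id x).const_mul c).exp.congr_deriv
        (by simp))).hasDerivWithinAt
    · intro x hx
      rw [interior_Ici] at hx
      nlinarith [hle x hx, exp_pos (c * x)]
  have h := hanti self_mem_Ici ht ht
  simp only [mul_zero, exp_zero, mul_one] at h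
  rwa [neg_mul, exp_neg, ← div_eq_mul_inv, le_div_iff₀ (exp_pos _)]

theorem continuousOn_Ici_of_eq_sub_integral {f φ : ℝ → ℝ} {φ₀ : ℝ}
    (hf : ∀ T, 0 ≤ T → IntervalIntegrable f volume 0 T)
    (heq : ∀ t, 0 ≤ t → φ t = φ₀ - ∫ s in (0 : ℝ)..t, f s) : ContinuousOn φ (Ici 0) := by
  intro t ht
  have hT : (0 : ℝ) ≤ t + 1 := by linarith [mem_Ici.1 ht]
  have hprim : ContinuousOn (fun x => φ₀ - ∫ s in (0 : ℝ)..x, f s) (Icc 0 (t + 1)) := by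
    have := intervalIntegral.continuousOn_primitive_interval' (hf (t + 1) hT) left_mem_uIcc
    rw [uIcc_of_le hT] at this
    exact continuousOn_const.sub this
  have hnhds : Icc 0 (t + 1) ∈ 𝓝[Ici 0] t := by
    rw [← Ici_inter_Iic]
    exact inter_mem_nhdsWithin _ (Iic_mem_nhds (lt_add_one t))
  exact ((hprim.congr fun x hx => heq x hx.1) t ⟨ht, by linarith⟩).mono_of_mem_nhdsWithin hnhds

theorem hasDerivAt_of_eq_sub_integral {f φ : ℝ → ℝ} {φ₀ : ℝ}
    (hf : ∀ T, 0 ≤ T → IntervalIntegrable f volume 0 T) (hfc : ContinuousOn f (Ioi 0))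
    (heq : ∀ t, 0 ≤ t → φ t = φ₀ - ∫ s in (0 : ℝ)..t, f s) {t : ℝ} (ht : 0 < t) :
    HasDerivAt φ (-f t) t := by
  have hprim := intervalIntegral.integral_hasDerivAt_right (hf t ht.le)
    (hfc.stronglyMeasurableAtFilter isOpen_Ioi t ht) (hfc.continuousAt (Ioi_mem_nhds ht))
  refine (hprim.const_sub φ₀).congr_of_eventuallyEq ?_
  filter_upwards [Ioi_mem_nhds ht] with x hx using heq x (le_of_lt hx)

section IntegralEquation

variable {g φ : ℝ → ℝ} {φ₀ : ℝ}

theorem le_of_eq_sub_integral (hg : ∀ x, 0 ≤ x → 0 ≤ g x) (hφ : ∀ t, 0 ≤ t → 0 ≤ φ t)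
    (heq : ∀ t, 0 ≤ t → φ t = φ₀ - ∫ s in (0 : ℝ)..t, g (φ s)) {t : ℝ} (ht : 0 ≤ t) :
    φ t ≤ φ₀ := by
  rw [heq t ht, sub_le_self_iff]
  exact intervalIntegral.integral_nonneg ht fun s hs => hg _ (hφ s hs.1)

theorem antitoneOn_comp_of_eq_sub_integral (hg : ∀ x, 0 ≤ x → 0 ≤ g x)
    (hg_mono : MonotoneOn g (Ici 0)) (hφ : ∀ t, 0 ≤ t → 0 ≤ φ t)
    (heq : ∀ t, 0 ≤ t → φ t = φ₀ - ∫ s in (0 : ℝ)..t, g (φ s)) :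
    AntitoneOn (fun s => g (φ s))
      {t | 0 ≤ t ∧ IntervalIntegrable (fun s => g (φ s)) volume 0 t} := by
  rintro s ⟨hs, hs_int⟩ t ⟨ht, ht_int⟩ hst
  refine hg_mono (hφ t ht) (hφ s hs) ?_
  have hdiff : (∫ u in (0 : ℝ)..t, g (φ u)) - ∫ u in (0 : ℝ)..s, g (φ u)
      = ∫ u in s..t, g (φ u) := intervalIntegral.integral_interval_sub_left ht_int hs_int
  have hnonneg : 0 ≤ ∫ u in s..t, g (φ u) :=
    intervalIntegral.integral_nonneg hst fun u hu => hg _ (hφ u (hs.trans hu.1))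
  rw [heq t ht, heq s hs]
  linarith

theorem aestronglyMeasurable_comp_of_eq_sub_integral (hg : ∀ x, 0 ≤ x → 0 ≤ g x)
    (hg_mono : MonotoneOn g (Ici 0)) (hφ : ∀ t, 0 ≤ t → 0 ≤ φ t)
    (heq : ∀ t, 0 ≤ t → φ t = φ₀ - ∫ s in (0 : ℝ)..t, g (φ s)) :
    AEStronglyMeasurable (fun s => g (φ s)) (volume.restrict (Ici 0)) := by
  set I := {t | 0 ≤ t ∧ IntervalIntegrable (fun s => g (φ s)) volume 0 t}
  have hI : I.OrdConnected := ⟨fun s hs u hu t ht =>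
    ⟨hs.1.trans ht.1, hu.2.mono_set (uIcc_subset_uIcc left_mem_uIcc
      (mem_uIcc_of_le (hs.1.trans ht.1) ht.2))⟩⟩
  have hconst : ∀ t ∈ Ici 0 \ I, g φ₀ = g (φ t) := fun t ht => by
    rw [heq t ht.1, intervalIntegral.integral_undef fun h => ht.2 ⟨ht.1, h⟩, sub_zero]
  rw [← union_sdiff_cancel (show I ⊆ Ici 0 from fun t ht => ht.1),
    aestronglyMeasurable_union_iff]
  exact ⟨(aemeasurable_restrict_of_antitoneOn hI.measurableSet
      (antitoneOn_comp_of_eq_sub_integral hg hg_mono hφ heq)).aestronglyMeasurable,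
    aestronglyMeasurable_const.congr <|
      (ae_restrict_mem (measurableSet_Ici.diff hI.measurableSet)).mono hconst⟩

theorem intervalIntegrable_comp_of_eq_sub_integral (hg : ∀ x, 0 ≤ x → 0 ≤ g x)
    (hg_mono : MonotoneOn g (Ici 0)) (hφ : ∀ t, 0 ≤ t → 0 ≤ φ t)
    (heq : ∀ t, 0 ≤ t → φ t = φ₀ - ∫ s in (0 : ℝ)..t, g (φ s)) {T : ℝ} (hT : 0 ≤ T) :
    IntervalIntegrable (fun s => g (φ s)) volume 0 T := by
  have hφ₀ : φ 0 = φ₀ := by simpa using heq 0 le_rfl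
  have hbound : ∀ s ∈ Ioc 0 T, ‖g (φ s)‖ ≤ g φ₀ := fun s hs => by
    rw [norm_of_nonneg (hg _ (hφ s hs.1.le))]
    exact hg_mono (hφ s hs.1.le) (hφ₀ ▸ hφ 0 le_rfl) (le_of_eq_sub_integral hg hφ heq hs.1.le)
  rw [intervalIntegrable_iff_integrableOn_Ioc_of_le hT]
  exact (integrable_const (g φ₀)).mono'
    ((aestronglyMeasurable_comp_of_eq_sub_integral hg hg_mono hφ heq).mono_set
      fun s hs => hs.1.le)
    ((ae_restrict_mem measurableSet_Ioc).mono hbound)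

theorem le_mul_exp_neg_of_eq_sub_integral {c : ℝ}
    (hg_mono : MonotoneOn g (Ici 0)) (hg_cont : ContinuousOn g (Ici 0))
    (hg_lower : ∀ x, 0 ≤ x → c * x ≤ g x) (hc : 0 ≤ c) (hφ : ∀ t, 0 ≤ t → 0 ≤ φ t)
    (heq : ∀ t, 0 ≤ t → φ t = φ₀ - ∫ s in (0 : ℝ)..t, g (φ s)) {t : ℝ} (ht : 0 ≤ t) :
    φ t ≤ φ₀ * exp (-c * t) := by
  have hg : ∀ x, 0 ≤ x → 0 ≤ g x := fun x hx => (mul_nonneg hc hx).trans (hg_lower x hx)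
  have hint : ∀ T, 0 ≤ T → IntervalIntegrable (fun s => g (φ s)) volume 0 T :=
    fun T hT => intervalIntegrable_comp_of_eq_sub_integral hg hg_mono hφ heq hT
  have hcont : ContinuousOn φ (Ici 0) := continuousOn_Ici_of_eq_sub_integral hint heq
  have hcomp : ContinuousOn (fun s => g (φ s)) (Ioi 0) :=
    (hg_cont.comp hcont fun s hs => hφ s hs).mono Ioi_subset_Ici_self
  have hφ₀ : φ 0 = φ₀ := by simpa using heq 0 le_rfl
  rw [← hφ₀]
  refine le_mul_exp_neg_of_hasDerivAt_le hcont
    (fun s hs => hasDerivAt_of_eq_sub_integral hint hcomp heq hs) (fun s hs => ?_) ht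
  linarith [hg_lower _ (hφ s hs.le)]

end IntegralEquation

theorem stmt_8_general
    (β : ℝ) (ν : Measure (ℝ × ℝ))
    (hsupp : ν {u | u.2 < 0} = 0)
    (g0 : ℝ → ℝ)
    (hg0 : ∀ x, g0 x = β * x + ∫ u : ℝ × ℝ, (Real.exp (-x * u.2) - 1) ∂ν)
    (hint : Integrable (fun u : ℝ × ℝ => u.2) ν)
    (hβ' : 0 < β - ∫ u : ℝ × ℝ, u.2 ∂ν)
    (φ : ℝ → ℝ)
    (hφnn : ∀ t : ℝ, 0 ≤ t → 0 ≤ φ t)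
    (heq : ∀ t : ℝ, 0 ≤ t → φ t = 1 / β - ∫ s in (0 : ℝ)..t, g0 (φ s)) :
    ∀ t : ℝ, 0 ≤ t →
      φ t ≤ (1 / β) * Real.exp (-(β - ∫ u : ℝ × ℝ, u.2 ∂ν) * t) := by
  have hX0 : 0 ≤ᵐ[ν] fun u : ℝ × ℝ => u.2 := by
    rw [EventuallyLE, ae_iff]
    simpa only [Pi.zero_apply, not_le] using hsupp
  obtain rfl : g0 = fun x => β * x + ∫ u : ℝ × ℝ, (exp (-x * u.2) - 1) ∂ν := funext hg0
  intro t ht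
  exact le_mul_exp_neg_of_eq_sub_integral
    (monotoneOn_mul_add_integral_exp_neg_mul_sub_one hint hX0 (sub_pos.1 hβ').le)
    ((continuous_const.mul continuous_id).continuousOn.add
      (lipschitzOnWith_integral_exp_neg_mul_sub_one hint hX0).continuousOn)
    (fun x hx => sub_integral_mul_le_mul_add_integral_exp_neg_mul_sub_one hint hX0 β hx)
    hβ'.le hφnn heq ht

/-- Assume `∫ u₂ ν(du) < ∞` and `β̃ = β - ∫ u₂ ν(du) > 0`.
If `φ : [0,∞) → [0,∞)` satisfies `φ(t) = 1/β - ∫_0^t g₀(φ(s)) ds` then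
`φ(t) ≤ (1/β) exp(-β̃ t)` for all `t ≥ 0`. -/
theorem stmt_8
    (β : ℝ) (hβ : 0 < β) (ν : Measure (ℝ × ℝ)) [IsFiniteMeasure ν]
    (hν : ν ≠ 0) (hsupp : ν {u | u.2 < 0} = 0) (hpos : ν {u | 0 < u.2} ≠ 0)
    (g0 : ℝ → ℝ)
    (hg0 : ∀ x, g0 x = β * x + ∫ u : ℝ × ℝ, (Real.exp (-x * u.2) - 1) ∂ν)
    (hint : Integrable (fun u : ℝ × ℝ => u.2) ν)
    (hβ' : 0 < β - ∫ u : ℝ × ℝ, u.2 ∂ν)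
    (φ : ℝ → ℝ)
    (hφnn : ∀ t : ℝ, 0 ≤ t → 0 ≤ φ t)
    (heq : ∀ t : ℝ, 0 ≤ t → φ t = 1 / β - ∫ s in (0 : ℝ)..t, g0 (φ s)) :
    ∀ t : ℝ, 0 ≤ t →
      φ t ≤ (1 / β) * Real.exp (-(β - ∫ u : ℝ × ℝ, u.2 ∂ν) * t) :=
  stmt_8_general β ν hsupp g0 hg0 hint hβ' φ hφnn heq
end

section
/- Assume β = ∫ u2 ν(du) (i.e. β̃ = 0) and that m2 := (1/2)·∫ u2² ν(du) is finite and strictly positive. If φ : [0,∞) → (0,∞) satisfies φ(t) = 1/β − ∫_0^t g_0(φ(s)) ds for every t ≥ 0, then t·φ(t) → 1/m2 as t → ∞. -/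
open MeasureTheory Real Filter Set Topology intervalIntegral

lemma hasDerivAt_expneg (x : ℝ) : HasDerivAt (fun y : ℝ => exp (-y)) (-exp (-x)) x := by
  simpa [Function.comp_def] using (Real.hasDerivAt_exp (-x)).comp x (hasDerivAt_neg x)

lemma exp_upper : ∀ y : ℝ, 0 ≤ y → exp (-y) - 1 + y ≤ y^2/2 := by
  intro y hy
  set f : ℝ → ℝ := fun y => exp (-y) - 1 + y - y^2/2 with hf
  have hderiv : ∀ x : ℝ, HasDerivAt f (-exp (-x) + 1 - x) x := by
    intro x
    have h2 : HasDerivAt (fun y : ℝ => y^2/2) x x := by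
      simpa using ((hasDerivAt_pow 2 x).div_const 2)
    exact (((hasDerivAt_expneg x).sub_const 1).add (hasDerivAt_id x)).sub h2
  have hmono : AntitoneOn f (Ici 0) := by
    apply antitoneOn_of_deriv_nonpos (convex_Ici 0)
    · exact (Continuous.continuousOn (by continuity))
    · intro x hx
      exact (hderiv x).differentiableAt.differentiableWithinAt
    · intro x hx
      rw [interior_Ici] at hx
      rw [(hderiv x).deriv]
      nlinarith [Real.add_one_le_exp (-x), (hx : (0:ℝ) < x)]
  have := hmono (self_mem_Ici) (by exact hy) hy
  simp only [hf] at this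
  simp at this
  linarith

lemma exp_lower : ∀ y : ℝ, 0 ≤ y → (y^2/2) * exp (-y) ≤ exp (-y) - 1 + y := by
  intro y hy
  set f : ℝ → ℝ := fun y => exp (-y) - 1 + y - (y^2/2) * exp (-y) with hf
  have hderiv : ∀ x : ℝ, HasDerivAt f (1 - exp (-x) * (1 + x - x^2/2)) x := by
    intro x
    have h2 : HasDerivAt (fun y : ℝ => (y^2/2) * exp (-y))
        (x * exp (-x) + (x^2/2) * (-exp (-x))) x := by
      have := ((hasDerivAt_pow 2 x).div_const 2).mul (hasDerivAt_expneg x)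
      exact this.congr_deriv (by simp)
    have := (((hasDerivAt_expneg x).sub_const 1).add (hasDerivAt_id x)).sub h2
    exact this.congr_deriv (by ring)
  have hmono : MonotoneOn f (Ici 0) := by
    apply monotoneOn_of_deriv_nonneg (convex_Ici 0)
    · exact (Continuous.continuousOn (by continuity))
    · intro x hx
      exact (hderiv x).differentiableAt.differentiableWithinAt
    · intro x hx
      rw [interior_Ici] at hx
      rw [(hderiv x).deriv]
      have h1 : exp (-x) * (1 + x - x^2/2) ≤ exp (-x) * exp x := by
        apply mul_le_mul_of_nonneg_left _ (exp_pos (-x)).le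
        nlinarith [Real.add_one_le_exp x, (hx : (0:ℝ) < x)]
      rw [← Real.exp_add] at h1
      simp at h1
      linarith
  have := hmono (self_mem_Ici) (by exact hy) hy
  simp only [hf] at this
  simp at this
  linarith

lemma cesaro (f : ℝ → ℝ) (hf : Continuous f) {l : ℝ} (hl : Tendsto f atTop (𝓝 l)) :
    Tendsto (fun t => (∫ s in (0:ℝ)..t, f s) / t) atTop (𝓝 l) := by
  rw [Metric.tendsto_atTop]
  intro ε εpos
  rw [Metric.tendsto_atTop] at hl
  obtain ⟨T₀, hT₀⟩ := hl (ε/2) (by linarith)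
  set T := max T₀ 0 with hT
  have hTnn : 0 ≤ T := le_max_right _ _
  set C := |∫ s in (0:ℝ)..T, (f s - l)| with hC
  have hCnn : 0 ≤ C := abs_nonneg _
  refine ⟨max (max T 1) (4*C/ε + 1), fun t ht => ?_⟩
  have htT : T ≤ t := le_trans (le_trans (le_max_left _ _) (le_max_left _ _)) ht
  have ht1 : (1:ℝ) ≤ t := le_trans (le_trans (le_max_right _ _) (le_max_left _ _)) ht
  have htpos : (0:ℝ) < t := lt_of_lt_of_le one_pos ht1
  have htC : 4*C/ε + 1 ≤ t := le_trans (le_max_right _ _) ht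
  have hint : ∀ a b : ℝ, IntervalIntegrable (fun s => f s - l) volume a b :=
    fun a b => (hf.sub continuous_const).intervalIntegrable a b
  have hsplit : (∫ s in (0:ℝ)..t, (f s - l)) =
      (∫ s in (0:ℝ)..T, (f s - l)) + ∫ s in T..t, (f s - l) :=
    (integral_add_adjacent_intervals (hint 0 T) (hint T t)).symm
  have htail : |∫ s in T..t, (f s - l)| ≤ (ε/2) * |t - T| := by
    have key : ‖∫ s in T..t, (f s - l)‖ ≤ (ε/2) * |t - T| := by
      apply intervalIntegral.norm_integral_le_of_norm_le_const
      intro x hx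
      rw [uIoc_of_le htT] at hx
      have : T₀ ≤ x := le_trans (le_max_left _ _) hx.1.le
      have := hT₀ x this
      rw [Real.dist_eq] at this
      rw [Real.norm_eq_abs]
      linarith [this.le]
    simpa [Real.norm_eq_abs] using key
  have hval : (∫ s in (0:ℝ)..t, f s) / t - l = (∫ s in (0:ℝ)..t, (f s - l)) / t := by
    rw [intervalIntegral.integral_sub (hf.intervalIntegrable 0 t)
      (intervalIntegrable_const)]
    simp
    field_simp
  rw [Real.dist_eq, hval, hsplit]
  have h1 : |(∫ s in (0:ℝ)..T, (f s - l)) + ∫ s in T..t, (f s - l)| ≤ C + (ε/2)*(t - T) := by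
    calc _ ≤ C + |∫ s in T..t, (f s - l)| := by exact abs_add_le _ _
    _ ≤ C + (ε/2)*(t-T) := by
        rw [abs_of_nonneg (by linarith : (0:ℝ) ≤ t - T)] at htail; linarith
  rw [abs_div, abs_of_pos htpos]
  have h2 : |(∫ s in (0:ℝ)..T, (f s - l)) + ∫ s in T..t, (f s - l)| / t
      ≤ (C + (ε/2)*(t-T))/t := by
    gcongr
  refine lt_of_le_of_lt h2 ?_
  rw [div_lt_iff₀ htpos]
  have h4 : ε * (4*C/ε + 1) = 4*C + ε := by field_simp
  have h5 := mul_le_mul_of_nonneg_left htC εpos.le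
  rw [h4] at h5
  nlinarith [mul_nonneg εpos.le hTnn]

set_option maxHeartbeats 2000000 in
/-- Assume `β = ∫ u₂ ν(du)` (critical case `β̃ = 0`) and that
`m₂ = (1/2) ∫ u₂² ν(du)` is finite and strictly positive.  If
`φ : [0,∞) → (0,∞)` satisfies `φ(t) = 1/β - ∫_0^t g₀(φ(s)) ds` then
`t φ(t) → 1/m₂` as `t → ∞`. -/
theorem stmt_9
    (β : ℝ) (hβ : 0 < β) (ν : Measure (ℝ × ℝ)) [IsFiniteMeasure ν]
    (hν : ν ≠ 0) (hsupp : ν {u | u.2 < 0} = 0) (hpos : ν {u | 0 < u.2} ≠ 0)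
    (g0 : ℝ → ℝ)
    (hg0 : ∀ x, g0 x = β * x + ∫ u : ℝ × ℝ, (Real.exp (-x * u.2) - 1) ∂ν)
    (hint1 : Integrable (fun u : ℝ × ℝ => u.2) ν)
    (hcrit : β = ∫ u : ℝ × ℝ, u.2 ∂ν)
    (hint2 : Integrable (fun u : ℝ × ℝ => u.2 ^ 2) ν)
    (hm2pos : 0 < (1 / 2) * ∫ u : ℝ × ℝ, u.2 ^ 2 ∂ν)
    (φ : ℝ → ℝ)
    (hφpos : ∀ t : ℝ, 0 ≤ t → 0 < φ t)
    (heq : ∀ t : ℝ, 0 ≤ t → φ t = 1 / β - ∫ s in (0 : ℝ)..t, g0 (φ s)) :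
    Filter.Tendsto (fun t : ℝ => t * φ t) Filter.atTop
      (nhds (1 / ((1 / 2) * ∫ u : ℝ × ℝ, u.2 ^ 2 ∂ν))) := by
  set M : ℝ := ∫ u : ℝ × ℝ, u.2 ^ 2 ∂ν with hMdef
  set m₂ : ℝ := (1/2) * M with hm2def
  have hm2 : 0 < m₂ := hm2pos
  have hβ' : (0:ℝ) < 1/β := by positivity
  have hae : ∀ᵐ u ∂ν, (0:ℝ) ≤ u.2 := by
    rw [ae_iff]; simpa [not_le] using hsupp
  -- measurability / integrability helpers
  have hmeasexp : ∀ x : ℝ, AEStronglyMeasurable (fun u : ℝ×ℝ => exp (-x*u.2) - 1) ν := by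
    intro x
    exact ((((continuous_const.mul continuous_snd)).rexp).sub continuous_const).aestronglyMeasurable
  have hintexp : ∀ x : ℝ, 0 ≤ x → Integrable (fun u : ℝ×ℝ => exp (-x*u.2) - 1) ν := by
    intro x hx
    refine (integrable_const (1:ℝ)).mono' (hmeasexp x) ?_
    filter_upwards [hae] with u hu
    rw [Real.norm_eq_abs, abs_le]
    have h1 : exp (-x*u.2) ≤ 1 := exp_le_one_iff.mpr (by nlinarith)
    have h2 : 0 < exp (-x*u.2) := exp_pos _
    constructor <;> linarith
  have hintexp2 : ∀ x : ℝ, 0 ≤ x → Integrable (fun u : ℝ×ℝ => u.2^2 * exp (-x*u.2)) ν := by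
    intro x hx
    refine hint2.mono' ?_ ?_
    · exact ((continuous_snd.pow 2).mul ((continuous_const.mul continuous_snd).rexp)).aestronglyMeasurable
    · filter_upwards [hae] with u hu
      rw [Real.norm_eq_abs, abs_of_nonneg (by positivity)]
      have h1 : exp (-x*u.2) ≤ 1 := exp_le_one_iff.mpr (by nlinarith)
      nlinarith [sq_nonneg u.2]
  have hrep : ∀ x : ℝ, 0 ≤ x →
      g0 x = ∫ u : ℝ×ℝ, ((exp (-x*u.2) - 1) + x*u.2) ∂ν := by
    intro x hx
    rw [hg0 x, integral_add (hintexp x hx) (hint1.const_mul x), MeasureTheory.integral_const_mul, hcrit]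
    ring
  have hg0nonneg : ∀ x : ℝ, 0 ≤ x → 0 ≤ g0 x := by
    intro x hx
    rw [hrep x hx]
    apply MeasureTheory.integral_nonneg_of_ae
    filter_upwards [hae] with u hu
    simp only [Pi.zero_apply]
    nlinarith [Real.add_one_le_exp (-x*u.2)]
  have hg0le : ∀ x : ℝ, 0 ≤ x → g0 x ≤ m₂ * x^2 := by
    intro x hx
    rw [hrep x hx]
    have h1 : (∫ u : ℝ×ℝ, ((exp (-x*u.2) - 1) + x*u.2) ∂ν)
        ≤ ∫ u : ℝ×ℝ, x^2/2 * u.2^2 ∂ν := by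
      apply integral_mono_ae ((hintexp x hx).add (hint1.const_mul x)) (hint2.const_mul _)
      filter_upwards [hae] with u hu
      simp only [Pi.add_apply]
      have h2 := exp_upper (x*u.2) (mul_nonneg hx hu)
      rw [show -(x*u.2) = -x*u.2 by ring] at h2
      nlinarith [h2]
    rw [MeasureTheory.integral_const_mul] at h1
    rw [hm2def]
    nlinarith [h1]
  have hg0ge : ∀ x : ℝ, 0 ≤ x →
      x^2/2 * (∫ u : ℝ×ℝ, u.2^2 * exp (-x*u.2) ∂ν) ≤ g0 x := by
    intro x hx
    rw [hrep x hx, ← MeasureTheory.integral_const_mul]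
    apply integral_mono_ae ((hintexp2 x hx).const_mul _) ((hintexp x hx).add (hint1.const_mul x))
    filter_upwards [hae] with u hu
    simp only [Pi.add_apply]
    have h2 := exp_lower (x*u.2) (mul_nonneg hx hu)
    rw [show -(x*u.2) = -x*u.2 by ring] at h2
    nlinarith [h2]
  -- basic facts about φ
  have hφ0 : φ 0 = 1/β := by simpa using heq 0 le_rfl
  have hbadval : ∀ s : ℝ, 0 ≤ s →
      ¬ IntegrableOn (fun r => g0 (φ r)) (Ioc 0 s) volume → φ s = 1/β := by
    intro s hs hni
    rw [heq s hs, intervalIntegral.integral_of_le hs, integral_undef hni, sub_zero]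
  have hφle : ∀ s : ℝ, 0 ≤ s → φ s ≤ 1/β := by
    intro s hs
    by_cases hi : IntegrableOn (fun r => g0 (φ r)) (Ioc 0 s) volume
    · rw [heq s hs, intervalIntegral.integral_of_le hs]
      have h0 : 0 ≤ ∫ x in Ioc 0 s, g0 (φ x) :=
        setIntegral_nonneg measurableSet_Ioc (fun x hx => hg0nonneg _ (hφpos x hx.1.le).le)
      linarith
    · rw [hbadval s hs hi]
  set C : ℝ := m₂ * (1/β)^2 with hCdef
  have hhC : ∀ s : ℝ, 0 ≤ s → g0 (φ s) ≤ C := by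
    intro s hs
    have h1 := hg0le _ (hφpos s hs).le
    have h2 := hφle s hs
    have h3 := hφpos s hs
    rw [hCdef]
    nlinarith [hm2, mul_le_mul h2 h2 h3.le hβ'.le]
  -- integrability bootstrap
  have hIntOn : ∀ T : ℝ, 0 ≤ T → IntegrableOn (fun r => g0 (φ r)) (Ioc 0 T) volume := by
    have key : ∀ T : ℝ, 0 ≤ T →
        AEMeasurable (fun r => g0 (φ r)) (volume.restrict (Ioc 0 T)) →
        IntegrableOn (fun r => g0 (φ r)) (Ioc 0 T) volume := by
      intro T hT hm
      refine Integrable.mono' (g := fun _ => C)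
        ((integrableOn_const_iff).mpr (Or.inr measure_Ioc_lt_top)) hm.aestronglyMeasurable ?_
      filter_upwards [ae_restrict_mem measurableSet_Ioc] with s hsmem
      rw [Real.norm_eq_abs, abs_of_nonneg (hg0nonneg _ (hφpos s hsmem.1.le).le)]
      exact hhC s hsmem.1.le
    by_contra hcon
    push_neg at hcon
    obtain ⟨T₁, hT₁nn, hT₁⟩ := hcon
    set B := {T : ℝ | 0 ≤ T ∧ ¬ IntegrableOn (fun r => g0 (φ r)) (Ioc 0 T) volume} with hBdef
    have hBne : B.Nonempty := ⟨T₁, hT₁nn, hT₁⟩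
    have hBbdd : BddBelow B := ⟨0, fun x hx => hx.1⟩
    set T₀ := sInf B with hT₀def
    have hT₀nn : 0 ≤ T₀ := le_csInf hBne fun x hx => hx.1
    have hlow : ∀ s : ℝ, 0 ≤ s → s < T₀ →
        IntegrableOn (fun r => g0 (φ r)) (Ioc 0 s) volume := by
      intro s hs hsT
      by_contra hni
      exact absurd (csInf_le hBbdd ⟨hs, hni⟩) (not_le.mpr hsT)
    have hhigh : ∀ s : ℝ, T₀ < s →
        ¬ IntegrableOn (fun r => g0 (φ r)) (Ioc 0 s) volume := by
      intro s hsT hi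
      have hall : ∀ b ∈ B, s ≤ b := by
        intro b hb
        by_contra hbs
        push_neg at hbs
        exact hb.2 (hi.mono_set (Ioc_subset_Ioc_right hbs.le))
      exact absurd (le_csInf hBne hall) (not_le.mpr hsT)
    have hmeas0 : AEMeasurable (fun r => g0 (φ r)) (volume.restrict (Ioc 0 T₀)) := by
      rcases eq_or_lt_of_le hT₀nn with h0 | h0
      · rw [← h0, Ioc_self, Measure.restrict_empty]
        exact aemeasurable_zero_measure
      · have hSsub : Ioo 0 T₀ ⊆ ⋃ n : ℕ, Ioc 0 (T₀ - T₀/(n+1)) := by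
          intro x hx
          obtain ⟨n, hn⟩ := exists_nat_gt (T₀/(T₀ - x))
          refine mem_iUnion.mpr ⟨n, hx.1, ?_⟩
          have hTx : 0 < T₀ - x := by linarith [hx.2]
          have hn1 : T₀/(T₀ - x) ≤ (n:ℝ) + 1 := by linarith [hn.le]
          have h4 : T₀ ≤ (T₀ - x) * ((n:ℝ)+1) := by
            rw [div_le_iff₀ hTx] at hn1
            linarith
          have h5 : T₀/((n:ℝ)+1) ≤ T₀ - x := by
            rw [div_le_iff₀ (by positivity : (0:ℝ) < (n:ℝ)+1)]
            linarith
          linarith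
        have hmU : AEMeasurable (fun r => g0 (φ r))
            (volume.restrict (⋃ n : ℕ, Ioc 0 (T₀ - T₀/(n+1)))) := by
          rw [aemeasurable_iUnion_iff]
          intro n
          have hn0 : 0 ≤ T₀ - T₀/((n:ℝ)+1) := by
            have : T₀/((n:ℝ)+1) ≤ T₀ := by
              rw [div_le_iff₀ (by positivity : (0:ℝ) < (n:ℝ)+1)]
              nlinarith [h0, (by positivity : (0:ℝ) ≤ (n:ℝ))]
            linarith
          have hnlt : T₀ - T₀/((n:ℝ)+1) < T₀ := by
            have : 0 < T₀/((n:ℝ)+1) := by positivity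
            linarith
          exact ((hlow _ hn0 hnlt).aestronglyMeasurable).aemeasurable
        have hmOo : AEMeasurable (fun r => g0 (φ r)) (volume.restrict (Ioo 0 T₀)) :=
          hmU.mono_measure (Measure.restrict_mono hSsub le_rfl)
        rwa [Measure.restrict_congr_set Ioo_ae_eq_Ioc] at hmOo
    have hmeasT : AEMeasurable (fun r => g0 (φ r)) (volume.restrict (Ioc 0 T₁)) := by
      rcases le_or_gt T₁ T₀ with hc | hc
      · exact hmeas0.mono_measure (Measure.restrict_mono (Ioc_subset_Ioc_right hc) le_rfl)
      · rw [← Ioc_union_Ioc_eq_Ioc hT₀nn hc.le, aemeasurable_union_iff]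
        refine ⟨hmeas0, ?_⟩
        refine (aemeasurable_const (b := g0 (1/β))).congr ?_
        filter_upwards [ae_restrict_mem measurableSet_Ioc] with s hs
        rw [hbadval s (le_trans hT₀nn hs.1.le) (hhigh s hs.1)]
    exact hT₁ (key T₁ hT₁nn hmeasT)
  -- the extended integrand
  set htil : ℝ → ℝ := fun s => g0 (φ (max s 0)) with hhtildef
  have hmax : ∀ s : ℝ, (0:ℝ) ≤ max s 0 := fun s => le_max_right _ _
  have hIntTil : ∀ a b : ℝ, IntervalIntegrable htil volume a b := by
    have main : ∀ a b : ℝ, a ≤ b → IntegrableOn htil (Ioc a b) volume := by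
      intro a b hab
      have h1 : IntegrableOn htil (Ioc a b ∩ Iic 0) volume := by
        refine (Integrable.congr (f := fun _ : ℝ => g0 (φ 0)) (g := htil)
          ((integrableOn_const_iff (C := g0 (φ 0))).mpr
          (Or.inr (lt_of_le_of_lt (measure_mono inter_subset_left) measure_Ioc_lt_top))) ?_)
        filter_upwards [ae_restrict_mem ((measurableSet_Ioc).inter measurableSet_Iic)] with s hs
        rw [hhtildef]
        simp only
        rw [max_eq_right (mem_Iic.mp hs.2)]
      have h2 : IntegrableOn htil (Ioc a b ∩ Ioi 0) volume := by
        have h3 : IntegrableOn htil (Ioc 0 (max b 0)) volume := by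
          refine (hIntOn (max b 0) (le_max_right _ _)).congr ?_
          filter_upwards [ae_restrict_mem measurableSet_Ioc] with s hs
          rw [hhtildef]
          simp [max_eq_left hs.1.le]
        refine h3.mono_set ?_
        rintro s ⟨hs1, hs2⟩
        exact ⟨hs2, le_trans hs1.2 (le_max_left _ _)⟩
      have hcover : Ioc a b = (Ioc a b ∩ Iic 0) ∪ (Ioc a b ∩ Ioi 0) := by
        rw [← inter_union_distrib_left, Iic_union_Ioi, inter_univ]
      rw [hcover]
      exact h1.union h2
    intro a b
    rw [intervalIntegrable_iff]
    exact main (min a b) (max a b) (min_le_max)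
  set Φ : ℝ → ℝ := fun t => 1/β - ∫ s in (0:ℝ)..t, htil s with hΦdef
  have hΦeq : ∀ t : ℝ, 0 ≤ t → Φ t = φ t := by
    intro t ht
    rw [hΦdef]
    simp only
    rw [heq t ht]
    congr 1
    apply intervalIntegral.integral_congr
    intro s hs
    rw [uIcc_of_le ht] at hs
    rw [hhtildef]
    simp [max_eq_left hs.1]
  have hΦpos : ∀ t : ℝ, 0 ≤ t → 0 < Φ t := fun t ht => (hΦeq t ht) ▸ hφpos t ht
  have hΦle : ∀ t : ℝ, 0 ≤ t → Φ t ≤ 1/β := fun t ht => (hΦeq t ht) ▸ hφle t ht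
  have hΦ0 : Φ 0 = 1/β := by rw [hΦeq 0 le_rfl, hφ0]
  have hΦcont : Continuous Φ :=
    continuous_const.sub (intervalIntegral.continuous_primitive hIntTil 0)
  have hcomp : (fun s => φ (max s 0)) = fun s => Φ (max s 0) :=
    funext fun s => (hΦeq _ (hmax s)).symm
  have hφmcont : Continuous (fun s => φ (max s 0)) := by
    rw [hcomp]
    exact hΦcont.comp (continuous_id.max continuous_const)
  have hg0cont : ∀ x : ℝ, 0 < x → ContinuousAt g0 x := by
    intro x hx
    have hfe : g0 = fun y => β * y + ∫ u : ℝ×ℝ, (exp (-y*u.2) - 1) ∂ν := funext hg0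
    rw [hfe]
    apply ContinuousAt.add ((continuous_const.mul continuous_id).continuousAt)
    apply continuousAt_of_dominated (bound := fun _ => (1:ℝ))
      (Eventually.of_forall hmeasexp) ?_ (integrable_const 1) ?_
    · filter_upwards [eventually_gt_nhds hx] with y hy
      filter_upwards [hae] with u hu
      rw [Real.norm_eq_abs, abs_le]
      have h1 : exp (-y*u.2) ≤ 1 := exp_le_one_iff.mpr (by nlinarith)
      have h2 : 0 < exp (-y*u.2) := exp_pos _
      constructor <;> linarith
    · filter_upwards with u
      exact ((((continuous_id.neg.mul continuous_const)).rexp).sub continuous_const).continuousAt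
  have hhtilcont : Continuous htil := by
    rw [continuous_iff_continuousAt]
    intro s
    exact ContinuousAt.comp (x := s) (g := g0) (f := fun s : ℝ => φ (max s 0))
      (hg0cont _ (hφpos _ (hmax s))) hφmcont.continuousAt
  have hΦder : ∀ t : ℝ, HasDerivAt Φ (-(htil t)) t := by
    intro t
    have h1 : HasDerivAt (fun u => ∫ s in (0:ℝ)..u, htil s) (htil t) t :=
      (hhtilcont.integral_hasStrictDerivAt 0 t).hasDerivAt
    simpa [hΦdef] using h1.const_sub (1/β)
  have hΦanti : Antitone Φ := by
    intro a b hab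
    have hsplit : (∫ s in (0:ℝ)..b, htil s)
        = (∫ s in (0:ℝ)..a, htil s) + ∫ s in a..b, htil s :=
      (intervalIntegral.integral_add_adjacent_intervals (hIntTil 0 a) (hIntTil a b)).symm
    have hpos' : 0 ≤ ∫ s in a..b, htil s :=
      intervalIntegral.integral_nonneg hab (fun u _ => hg0nonneg _ (hφpos _ (hmax u)).le)
    simp only [hΦdef]
    linarith [hsplit]
  have hbdd : ∀ t : ℝ, 0 ≤ Φ t := by
    intro t
    calc (0:ℝ) ≤ Φ (max t 0) := (hΦpos _ (hmax t)).le
    _ ≤ Φ t := hΦanti (le_max_left t 0)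
  have hrangebdd : BddBelow (range Φ) := by
    refine ⟨0, ?_⟩
    rintro y ⟨t, rfl⟩
    exact hbdd t
  have htendL : Tendsto Φ atTop (𝓝 (⨅ t, Φ t)) := tendsto_atTop_ciInf hΦanti hrangebdd
  have hLzero : (⨅ t, Φ t) = 0 := by
    by_contra hne
    have hL0 : 0 ≤ ⨅ t, Φ t := le_ciInf hbdd
    have hL : 0 < ⨅ t, Φ t := lt_of_le_of_ne hL0 (Ne.symm hne)
    set L := ⨅ t, Φ t with hLdef
    have hLle : ∀ t, L ≤ Φ t := fun t => ciInf_le hrangebdd t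
    set c : ℝ := L^2/2 * ∫ u : ℝ×ℝ, u.2^2 * exp (-(1/β)*u.2) ∂ν with hcdef
    have hipos : 0 < ∫ u : ℝ×ℝ, u.2^2 * exp (-(1/β)*u.2) ∂ν := by
      rw [integral_pos_iff_support_of_nonneg_ae
        (Eventually.of_forall (fun u => by positivity)) (hintexp2 _ hβ'.le)]
      have hsupset : {u : ℝ×ℝ | 0 < u.2} ⊆
          Function.support (fun u : ℝ×ℝ => u.2^2 * exp (-(1/β)*u.2)) := by
        intro u hu
        have h9 : (0:ℝ) < u.2 := hu
        exact ne_of_gt (by positivity)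
      exact lt_of_lt_of_le (pos_iff_ne_zero.mpr hpos) (measure_mono hsupset)
    have hc : 0 < c := by
      rw [hcdef]
      have : (0:ℝ) < L^2/2 := by positivity
      exact mul_pos this hipos
    have hlb : ∀ s : ℝ, c ≤ htil s := by
      intro s
      have hx0 : 0 < φ (max s 0) := hφpos _ (hmax s)
      have hxL : L ≤ φ (max s 0) := by
        rw [← hΦeq _ (hmax s)]
        exact hLle _
      have hxβ : φ (max s 0) ≤ 1/β := hφle _ (hmax s)
      have h1 := hg0ge (φ (max s 0)) hx0.le
      have h2 : (∫ u : ℝ×ℝ, u.2^2 * exp (-(1/β)*u.2) ∂ν)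
          ≤ ∫ u : ℝ×ℝ, u.2^2 * exp (-(φ (max s 0))*u.2) ∂ν := by
        apply integral_mono_ae (hintexp2 _ hβ'.le) (hintexp2 _ hx0.le)
        filter_upwards [hae] with u hu
        have hexp : exp (-(1/β)*u.2) ≤ exp (-(φ (max s 0))*u.2) := by
          apply exp_le_exp.mpr
          nlinarith
        nlinarith [sq_nonneg u.2]
      have h3 : L^2/2 ≤ (φ (max s 0))^2/2 := by nlinarith
      rw [hhtildef]
      simp only
      calc c = L^2/2 * ∫ u : ℝ×ℝ, u.2^2 * exp (-(1/β)*u.2) ∂ν := hcdef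
      _ ≤ (φ (max s 0))^2/2 * ∫ u : ℝ×ℝ, u.2^2 * exp (-(1/β)*u.2) ∂ν :=
          mul_le_mul_of_nonneg_right h3 hipos.le
      _ ≤ (φ (max s 0))^2/2 * ∫ u : ℝ×ℝ, u.2^2 * exp (-(φ (max s 0))*u.2) ∂ν :=
          mul_le_mul_of_nonneg_left h2 (by positivity)
      _ ≤ g0 (φ (max s 0)) := h1
    have hgrow : ∀ t : ℝ, 0 ≤ t → Φ t ≤ 1/β - c * t := by
      intro t ht
      have hmono : (∫ s in (0:ℝ)..t, c) ≤ ∫ s in (0:ℝ)..t, htil s :=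
        intervalIntegral.integral_mono_on ht intervalIntegrable_const (hIntTil 0 t)
          (fun x _ => hlb x)
      rw [intervalIntegral.integral_const, smul_eq_mul, sub_zero] at hmono
      simp only [hΦdef]
      nlinarith [hmono]
    obtain ⟨tstar, htpos, htlarge⟩ : ∃ t : ℝ, 0 ≤ t ∧ 1/β + 1 ≤ c * t := by
      refine ⟨max ((1/β + 1)/c) 0, le_max_right _ _, ?_⟩
      have h7 : (1/β + 1)/c ≤ max ((1/β + 1)/c) 0 := le_max_left _ _
      rw [div_le_iff₀ hc] at h7
      linarith
    have h5 := hgrow tstar htpos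
    have h6 := hΦpos tstar htpos
    have h9 : (0:ℝ) < 0 := by
      calc (0:ℝ) < Φ tstar := h6
      _ ≤ 1/β - c * tstar := h5
      _ ≤ 1/β - (1/β + 1) := by linarith [htlarge]
      _ < 0 := by norm_num
    exact absurd h9 (lt_irrefl 0)
  have htend0 : Tendsto Φ atTop (𝓝 0) := hLzero ▸ htendL
  -- ψ and its limit
  set ψ : ℝ → ℝ := fun s => htil s / (φ (max s 0))^2 with hψdef
  have hsqpos : ∀ s : ℝ, (0:ℝ) < (φ (max s 0))^2 := fun s => pow_pos (hφpos _ (hmax s)) 2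
  have hψcont : Continuous ψ := by
    apply hhtilcont.div (hφmcont.pow 2)
    intro s
    exact (hsqpos s).ne'
  have hψub : ∀ s : ℝ, ψ s ≤ m₂ := by
    intro s
    rw [hψdef]
    simp only
    rw [div_le_iff₀ (hsqpos s)]
    exact hg0le _ (hφpos _ (hmax s)).le
  have hψlb : ∀ s : ℝ,
      (1/2) * (∫ u : ℝ×ℝ, u.2^2 * exp (-(φ (max s 0))*u.2) ∂ν) ≤ ψ s := by
    intro s
    rw [hψdef]
    simp only
    rw [le_div_iff₀ (hsqpos s)]
    have h1 := hg0ge (φ (max s 0)) (hφpos _ (hmax s)).le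
    nlinarith [h1]
  have hφmtend : Tendsto (fun s => φ (max s 0)) atTop (𝓝 0) := by
    rw [hcomp]
    exact htend0.comp (tendsto_atTop_mono (fun s => le_max_left s 0) tendsto_id)
  have hlbtend : Tendsto
      (fun s => (1/2) * ∫ u : ℝ×ℝ, u.2^2 * exp (-(φ (max s 0))*u.2) ∂ν)
      atTop (𝓝 m₂) := by
    rw [hm2def]
    apply Tendsto.const_mul
    have hDCT := tendsto_integral_filter_of_dominated_convergence (μ := ν)
      (F := fun s (u : ℝ×ℝ) => u.2^2 * exp (-(φ (max s 0))*u.2))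
      (f := fun u : ℝ×ℝ => u.2^2) (bound := fun u : ℝ×ℝ => u.2^2) (l := atTop)
      ?_ ?_ hint2 ?_
    · exact hDCT
    · refine Eventually.of_forall fun s => ?_
      exact ((continuous_snd.pow 2).mul
        ((continuous_const.mul continuous_snd).rexp)).aestronglyMeasurable
    · refine Eventually.of_forall fun s => ?_
      filter_upwards [hae] with u hu
      rw [Real.norm_eq_abs, abs_of_nonneg (by positivity)]
      have h1 : exp (-(φ (max s 0))*u.2) ≤ 1 :=
        exp_le_one_iff.mpr (by nlinarith [hφpos _ (hmax s)])
      nlinarith [sq_nonneg u.2]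
    · refine Eventually.of_forall fun u => ?_
      have hcont : Continuous (fun x : ℝ => u.2^2 * exp (-x*u.2)) :=
        (continuous_const.mul ((continuous_id.neg.mul continuous_const).rexp))
      have := hcont.continuousAt (x := 0) |>.tendsto.comp hφmtend
      simpa [Function.comp_def] using this
  have hψtend : Tendsto ψ atTop (𝓝 m₂) := by
    refine tendsto_of_tendsto_of_tendsto_of_le_of_le hlbtend tendsto_const_nhds hψlb hψub
  -- FTC identity
  have hw : ∀ t : ℝ, 0 < t → (Φ t)⁻¹ = β + ∫ s in (0:ℝ)..t, ψ s := by
    intro t ht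
    set w : ℝ → ℝ := fun s => (Φ (max s 0))⁻¹ with hwdef
    have hwcont : Continuous w := by
      apply Continuous.inv₀ (hΦcont.comp (continuous_id.max continuous_const))
      intro s
      exact (hΦpos _ (hmax s)).ne'
    have hder : ∀ x ∈ Ioo 0 t, HasDerivWithinAt w (ψ x) (Ioi x) x := by
      intro x hx
      have hx0 : (0:ℝ) < x := hx.1
      have hΦx : Φ x ≠ 0 := (hΦpos x hx0.le).ne'
      have h1 : HasDerivAt (fun s => (Φ s)⁻¹) (-(-(htil x)) / (Φ x)^2) x :=
        (hΦder x).inv hΦx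
      have hev : (fun s => (Φ s)⁻¹) =ᶠ[𝓝 x] w := by
        filter_upwards [eventually_gt_nhds hx0] with s hs
        rw [hwdef]
        simp [max_eq_left hs.le]
      have h2 : HasDerivAt w (-(-(htil x)) / (Φ x)^2) x :=
        h1.congr_of_eventuallyEq hev.symm
      have hval : -(-(htil x)) / (Φ x)^2 = ψ x := by
        rw [neg_neg, hψdef]
        simp only
        rw [max_eq_left hx0.le, hΦeq x hx0.le]
      exact (hval ▸ h2).hasDerivWithinAt
    have hFTC := intervalIntegral.integral_eq_sub_of_hasDeriv_right_of_le ht.le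
      hwcont.continuousOn hder (hψcont.intervalIntegrable 0 t)
    have hw0 : w 0 = β := by
      rw [hwdef]
      simp only [max_self]
      rw [hΦ0, one_div, inv_inv]
    have hwt : w t = (Φ t)⁻¹ := by
      rw [hwdef]
      simp only
      rw [max_eq_left ht.le]
    rw [hw0, hwt] at hFTC
    linarith [hFTC]
  -- conclusion
  have hcesaro : Tendsto (fun t => (∫ s in (0:ℝ)..t, ψ s)/t) atTop (𝓝 m₂) :=
    cesaro ψ hψcont hψtend
  have hβt : Tendsto (fun t : ℝ => β/t) atTop (𝓝 0) :=
    Tendsto.div_atTop tendsto_const_nhds tendsto_id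
  have hfinal : Tendsto (fun t => (β + ∫ s in (0:ℝ)..t, ψ s)/t) atTop (𝓝 m₂) := by
    have hsum := hβt.add hcesaro
    rw [zero_add] at hsum
    refine Tendsto.congr ?_ hsum
    intro t
    rw [← add_div]
  have hinv := hfinal.inv₀ (ne_of_gt hm2)
  have hgoal : (fun t : ℝ => ((β + ∫ s in (0:ℝ)..t, ψ s)/t)⁻¹) =ᶠ[atTop]
      (fun t : ℝ => t * φ t) := by
    filter_upwards [eventually_gt_atTop (0:ℝ)] with t ht
    rw [← hw t ht]
    have hΦtpos : 0 < Φ t := hΦpos t ht.le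
    rw [← hΦeq t ht.le]
    field_simp
  rw [one_div]
  exact Filter.Tendsto.congr' hgoal hinv
end

section
/- Let α ∈ (0,1), c > 0, and let h : (0,∞) → (0,∞) be continuous with h(x)/x^{1+α} → c as x → 0+. If v : [0,∞) → (0,∞) satisfies v(t) = v(0) − ∫_0^t h(v(s)) ds for every t ≥ 0, then t^{1/α}·v(t) → (α·c)^{−1/α} as t → ∞. -/
open MeasureTheory Real Filter Set

/-- Cesàro: if `φ → L` at infinity and `φ` is interval integrable on `[a,b]` for
`0 ≤ a`, then the average `(∫_0^t φ)/t → L`. -/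
lemma stmt11_cesaro {φ : ℝ → ℝ} {L : ℝ}
    (hint : ∀ a b : ℝ, 0 ≤ a → 0 ≤ b → IntervalIntegrable φ volume a b)
    (hlim : Tendsto φ atTop (nhds L)) :
    Tendsto (fun t : ℝ => (∫ s in (0:ℝ)..t, φ s) / t) atTop (nhds L) := by
  rw [Metric.tendsto_atTop]
  intro ε hε
  obtain ⟨T₀, hT₀⟩ := Metric.tendsto_atTop.1 hlim (ε/4) (by positivity)
  set T := max T₀ 0 with hTdef
  have hTnn : (0:ℝ) ≤ T := le_max_right _ _
  have hbound : ∀ s, T ≤ s → |φ s - L| ≤ ε/4 := by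
    intro s hs
    have := hT₀ s ((le_max_left _ _).trans hs)
    rw [Real.dist_eq] at this
    linarith
  set C := |(∫ s in (0:ℝ)..T, φ s) - L * T| with hCdef
  have hC0 : 0 ≤ C := abs_nonneg _
  refine ⟨max (max T 1) (4*C/ε + 1), fun t ht => ?_⟩
  have ht1 : (1:ℝ) ≤ t := ((le_max_right T 1).trans (le_max_left _ _)).trans ht
  have htpos : (0:ℝ) < t := lt_of_lt_of_le one_pos ht1
  have htT : T ≤ t := ((le_max_left T 1).trans (le_max_left _ _)).trans ht
  have htC : 4*C/ε + 1 ≤ t := (le_max_right _ _).trans ht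
  have hsplit : (∫ s in (0:ℝ)..t, φ s)
      = (∫ s in (0:ℝ)..T, φ s) + ∫ s in T..t, φ s :=
    (intervalIntegral.integral_add_adjacent_intervals (hint 0 T le_rfl hTnn)
      (hint T t hTnn (hTnn.trans htT))).symm
  have h2 : (∫ s in T..t, φ s) - L * (t - T) = ∫ s in T..t, (φ s - L) := by
    rw [intervalIntegral.integral_sub (hint T t hTnn (hTnn.trans htT))
      intervalIntegrable_const, intervalIntegral.integral_const]
    simp [smul_eq_mul]
    ring
  have h3 : |∫ s in T..t, (φ s - L)| ≤ (ε/4) * |t - T| := by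
    rw [← Real.norm_eq_abs]
    apply intervalIntegral.norm_integral_le_of_norm_le_const
    intro x hx
    rw [Set.uIoc_of_le htT] at hx
    simpa [Real.norm_eq_abs] using hbound x hx.1.le
  have hmain : |(∫ s in (0:ℝ)..t, φ s) - L * t| ≤ C + (ε/4) * t := by
    have : (∫ s in (0:ℝ)..t, φ s) - L * t
        = ((∫ s in (0:ℝ)..T, φ s) - L * T) + ((∫ s in T..t, φ s) - L * (t - T)) := by
      rw [hsplit]; ring
    rw [this]
    calc |((∫ s in (0:ℝ)..T, φ s) - L * T) + ((∫ s in T..t, φ s) - L * (t - T))|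
        ≤ C + |(∫ s in T..t, φ s) - L * (t - T)| := by
          exact le_trans (abs_add_le _ _) (by rw [hCdef])
      _ ≤ C + (ε/4) * t := by
          rw [h2]
          have : |t - T| ≤ t := by rw [abs_of_nonneg (by linarith)]; linarith
          nlinarith [h3, hε]
  have hCt : C < (ε/4) * t := by
    have h4 : 4*C/ε < t := by linarith
    have h5 : 4*C < t*ε := (div_lt_iff₀ hε).1 h4
    linarith
  rw [Real.dist_eq]
  have : (∫ s in (0:ℝ)..t, φ s) / t - L = ((∫ s in (0:ℝ)..t, φ s) - L * t) / t := by
    field_simp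
  rw [this, abs_div, abs_of_pos htpos, div_lt_iff₀ htpos]
  calc |(∫ s in (0:ℝ)..t, φ s) - L * t| ≤ C + (ε/4) * t := hmain
    _ < (ε/4) * t + (ε/4) * t := by linarith
    _ ≤ ε * t := by nlinarith

/-- Let `α ∈ (0,1)`, `c > 0`, and `h : (0,∞) → (0,∞)` be
continuous with `h(x)/x^{1+α} → c` as `x → 0+`.  If `v : [0,∞) → (0,∞)`
satisfies `v(t) = v(0) - ∫_0^t h(v(s)) ds` then
`t^{1/α} v(t) → (α c)^{-1/α}` as `t → ∞`. -/
theorem stmt_11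
    (α c : ℝ) (hα0 : 0 < α) (hα1 : α < 1) (hc : 0 < c)
    (h : ℝ → ℝ) (hcont : ContinuousOn h (Set.Ioi 0))
    (hpos : ∀ x : ℝ, 0 < x → 0 < h x)
    (hreg : Filter.Tendsto (fun x : ℝ => h x / x ^ (1 + α))
      (nhdsWithin 0 (Set.Ioi 0)) (nhds c))
    (v : ℝ → ℝ)
    (hv : ∀ t : ℝ, 0 ≤ t → 0 < v t)
    (heq : ∀ t : ℝ, 0 ≤ t → v t = v 0 - ∫ s in (0 : ℝ)..t, h (v s)) :
    Filter.Tendsto (fun t : ℝ => t ^ (1 / α) * v t) Filter.atTop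
      (nhds ((α * c) ^ (-(1 / α)))) := by
  have hv0 : 0 < v 0 := hv 0 le_rfl
  set f : ℝ → ℝ := fun s => h (v s) with hfdef
  -- global bound on h over (0, v 0]
  obtain ⟨M, hM0, hM⟩ : ∃ M : ℝ, 0 < M ∧ ∀ x : ℝ, 0 < x → x ≤ v 0 → h x ≤ M := by
    have h1 : ∀ᶠ x in nhdsWithin 0 (Set.Ioi 0), h x / x ^ (1 + α) < c + 1 :=
      hreg.eventually_lt_const (by linarith)
    rw [eventually_nhdsWithin_iff] at h1
    obtain ⟨δ, hδ0, hδ⟩ := Metric.eventually_nhds_iff.1 h1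
    obtain ⟨M₂, hM₂⟩ := (isCompact_Icc (a := δ/2) (b := v 0)).exists_bound_of_continuousOn
      (hcont.mono fun x hx => lt_of_lt_of_le (by linarith) hx.1)
    refine ⟨max ((c+1) * v 0 ^ (1+α)) (max M₂ 1),
      lt_of_lt_of_le one_pos ((le_max_right _ _).trans (le_max_right _ _)), ?_⟩
    intro x hx0 hxv
    rcases lt_or_ge x δ with hxδ | hxδ
    · have hxlt := hδ (y := x) (by rw [Real.dist_eq, sub_zero, abs_of_pos hx0]; exact hxδ) hx0
      have hxp : 0 < x ^ (1+α) := Real.rpow_pos_of_pos hx0 _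
      have h2 : h x < (c+1) * x ^ (1+α) := by
        rw [div_lt_iff₀ hxp] at hxlt; linarith
      have h3 : x ^ (1+α) ≤ v 0 ^ (1+α) := Real.rpow_le_rpow hx0.le hxv (by linarith)
      have h4 : h x ≤ (c+1) * v 0 ^ (1+α) := by nlinarith
      exact h4.trans (le_max_left _ _)
    · have hmem : x ∈ Icc (δ/2) (v 0) := ⟨by linarith, hxv⟩
      calc h x ≤ |h x| := le_abs_self _
        _ ≤ M₂ := by simpa [Real.norm_eq_abs] using hM₂ x hmem
        _ ≤ _ := (le_max_left _ _).trans (le_max_right _ _)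
  -- v stays ≤ v 0
  have hvle : ∀ t : ℝ, 0 ≤ t → v t ≤ v 0 := by
    intro t ht
    rw [heq t ht]
    have : 0 ≤ ∫ s in (0:ℝ)..t, f s :=
      intervalIntegral.integral_nonneg ht fun u hu => (hpos _ (hv u hu.1)).le
    linarith
  have hb : ∀ s : ℝ, 0 ≤ s → |f s| ≤ M := by
    intro s hs
    rw [abs_of_pos (hpos _ (hv s hs))]
    exact hM _ (hv s hs) (hvle s hs)
  -- f is interval integrable on [0, t] for every t ≥ 0
  have hintegrable : ∀ t : ℝ, 0 ≤ t → IntervalIntegrable f volume 0 t := by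
    by_contra hcon
    push_neg at hcon
    obtain ⟨t₀, ht₀, hni₀⟩ := hcon
    set S : Set ℝ := {t | 0 ≤ t ∧ ¬ IntervalIntegrable f volume 0 t} with hSdef
    have hS0 : t₀ ∈ S := ⟨ht₀, hni₀⟩
    have hSb : BddBelow S := ⟨0, fun x hx => hx.1⟩
    have hup : ∀ s ∈ S, ∀ t, s ≤ t → t ∈ S := by
      intro s hs t hst
      refine ⟨hs.1.trans hst, fun hint => hs.2 (hint.mono_set ?_)⟩
      rw [uIcc_of_le hs.1, uIcc_of_le (hs.1.trans hst)]
      exact Icc_subset_Icc le_rfl hst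
    set T := sInf S with hTdef
    have hT0 : 0 ≤ T := le_csInf ⟨t₀, hS0⟩ fun x hx => hx.1
    have hni : ∀ t, T < t → ¬ IntervalIntegrable f volume 0 t := by
      intro t ht
      obtain ⟨s, hsS, hst⟩ := (csInf_lt_iff hSb ⟨t₀, hS0⟩).1 ht
      exact (hup s hsS t hst.le).2
    have hconst : ∀ t, T < t → v t = v 0 := by
      intro t ht
      rw [heq t (hT0.trans ht.le), intervalIntegral.integral_undef (hni t ht), sub_zero]
    have hPlt : ∀ t, 0 ≤ t → t < T → IntervalIntegrable f volume 0 t := by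
      intro t ht htT
      by_contra hcc
      exact absurd (csInf_le hSb ⟨ht, hcc⟩) (not_le.2 htT)
    have hPT : IntervalIntegrable f volume 0 T := by
      rcases eq_or_lt_of_le hT0 with hT | hT
      · exact hT ▸ IntervalIntegrable.refl
      · rw [intervalIntegrable_iff, uIoc_of_le hT0]
        have hmeas : AEStronglyMeasurable f (volume.restrict (Ioc 0 T)) := by
          rw [← Measure.restrict_congr_set Ioo_ae_eq_Ioc]
          have hunion : Ioo (0:ℝ) T = ⋃ n : ℕ, Ioc 0 (T - T/(n+1)) := by
            ext x
            simp only [mem_Ioo, mem_iUnion, mem_Ioc]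
            constructor
            · rintro ⟨hx0, hxT⟩
              obtain ⟨n, hn⟩ := exists_nat_gt (T / (T - x))
              refine ⟨n, hx0, ?_⟩
              have hTx : 0 < T - x := by linarith
              have hn1 : (0:ℝ) < (n:ℝ) + 1 := by positivity
              have h5 : T / ((n:ℝ)+1) ≤ T - x := by
                rw [div_le_iff₀ hn1]
                calc T = (T/(T-x)) * (T - x) := by field_simp
                  _ ≤ ((n:ℝ)+1) * (T - x) := by nlinarith
                  _ = (T - x) * ((n:ℝ)+1) := by ring
              linarith
            · rintro ⟨n, hx0, hxn⟩
              have hpos' : (0:ℝ) < T/((n:ℝ)+1) := by positivity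
              exact ⟨hx0, by linarith⟩
          rw [hunion, aestronglyMeasurable_iUnion_iff]
          intro n
          have hdiv : T/((n:ℝ)+1) ≤ T := div_le_self hT0 (le_add_of_nonneg_left (Nat.cast_nonneg n))
          have hn0 : 0 ≤ T - T/((n:ℝ)+1) := by linarith
          have hnT : T - T/((n:ℝ)+1) < T := by
            have : (0:ℝ) < T/((n:ℝ)+1) := by positivity
            linarith
          have hPn := hPlt _ hn0 hnT
          rw [intervalIntegrable_iff, uIoc_of_le hn0] at hPn
          exact hPn.1
        apply Integrable.mono' (g := fun _ => M)
        · exact integrableOn_const measure_Ioc_lt_top.ne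
        · exact hmeas
        · rw [ae_restrict_iff' measurableSet_Ioc]
          exact ae_of_all _ fun x hx => by
            simpa [Real.norm_eq_abs] using hb x hx.1.le
    have hTT1 : IntervalIntegrable f volume T (T+1) := by
      rw [intervalIntegrable_iff, uIoc_of_le (by linarith : T ≤ T+1)]
      apply IntegrableOn.congr_fun (f := fun _ => h (v 0))
      · exact integrableOn_const measure_Ioc_lt_top.ne
      · intro x hx
        simp only [hfdef]
        rw [hconst x hx.1]
      · exact measurableSet_Ioc
    exact hni (T+1) (by linarith) (hPT.trans hTT1)
  -- integrability on subintervals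
  have hintegrable' : ∀ a b : ℝ, 0 ≤ a → 0 ≤ b → IntervalIntegrable f volume a b := by
    intro a b ha hb'
    apply (hintegrable (max a b) (le_max_of_le_left ha)).mono_set
    rw [uIcc_of_le (le_max_of_le_left ha)]
    exact uIcc_subset_Icc ⟨ha, le_max_left _ _⟩ ⟨hb', le_max_right _ _⟩
  -- v is continuous on [0, ∞)
  have hvcont : ContinuousOn v (Ici 0) := by
    have hg : LipschitzOnWith (Real.toNNReal M) (fun t => ∫ s in (0:ℝ)..t, f s) (Ici 0) := by
      apply LipschitzOnWith.of_dist_le_mul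
      intro x hx y hy
      rw [Real.dist_eq, Real.dist_eq, Real.coe_toNNReal _ hM0.le]
      have hxy : (∫ s in (0:ℝ)..x, f s) - (∫ s in (0:ℝ)..y, f s) = ∫ s in y..x, f s := by
        rw [← intervalIntegral.integral_add_adjacent_intervals (hintegrable y hy)
          (hintegrable' y x hy hx)]
        ring
      rw [hxy, ← Real.norm_eq_abs]
      have := intervalIntegral.norm_integral_le_of_norm_le_const (C := M)
        (f := f) (a := y) (b := x) ?_
      · simpa [Real.norm_eq_abs, abs_sub_comm] using this
      · intro u hu
        have hu0 : (0:ℝ) ≤ u := le_of_lt (lt_of_le_of_lt (le_min hy hx) hu.1)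
        simpa [Real.norm_eq_abs] using hb u hu0
    exact (continuousOn_const.sub hg.continuousOn).congr fun t ht => heq t ht
  -- f is continuous on [0, ∞)
  have hfcont : ContinuousOn f (Ici 0) :=
    hcont.comp hvcont fun s hs => hv s hs
  -- v is antitone on [0, ∞)
  have hanti : ∀ s t : ℝ, 0 ≤ s → s ≤ t → v t ≤ v s := by
    intro s t hs hst
    rw [heq s hs, heq t (hs.trans hst)]
    have hadd : (∫ u in (0:ℝ)..s, f u) + (∫ u in s..t, f u) = ∫ u in (0:ℝ)..t, f u :=
      intervalIntegral.integral_add_adjacent_intervals (hintegrable s hs)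
        (hintegrable' s t hs (hs.trans hst))
    have hnn : 0 ≤ ∫ u in s..t, f u :=
      intervalIntegral.integral_nonneg hst fun u hu => (hpos _ (hv u (hs.trans hu.1))).le
    linarith
  -- v tends to 0 at infinity
  have hvlim : Tendsto v atTop (nhds 0) := by
    rw [Metric.tendsto_atTop]
    intro ε hε
    have hex : ∃ t₁ : ℝ, 0 ≤ t₁ ∧ v t₁ < ε := by
      by_contra hcon
      push_neg at hcon
      set ε' := min ε (v 0) with hε'def
      have hε' : 0 < ε' := lt_min hε hv0
      obtain ⟨x₀, hx₀mem, hx₀⟩ := (isCompact_Icc (a := ε') (b := v 0)).exists_isMinOn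
        ⟨v 0, ⟨min_le_right _ _, le_rfl⟩⟩ (hcont.mono fun x hx => lt_of_lt_of_le hε' hx.1)
      set m := h x₀ with hmdef
      have hm : 0 < m := hpos _ (lt_of_lt_of_le hε' hx₀mem.1)
      have hlow : ∀ s, 0 ≤ s → m ≤ f s := fun s hs =>
        isMinOn_iff.1 hx₀ (v s) ⟨(min_le_left _ _).trans (hcon s hs), hvle s hs⟩
      set t := v 0 / m + 1 with htdef
      have ht0 : (0:ℝ) ≤ t := by positivity
      have hintlow : m * t ≤ ∫ s in (0:ℝ)..t, f s := by
        have h6 := intervalIntegral.integral_mono_on ht0 intervalIntegrable_const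
          (hintegrable t ht0) fun s hs => hlow s hs.1
        simpa [mul_comm] using h6
      have h7 := heq t ht0
      have h8 := hv t ht0
      have h9 : m * t = v 0 + m := by
        rw [htdef]; field_simp
      linarith
    obtain ⟨t₁, ht₁0, ht₁⟩ := hex
    refine ⟨t₁, fun t ht => ?_⟩
    rw [Real.dist_eq, sub_zero, abs_of_pos (hv t (ht₁0.trans ht))]
    exact lt_of_le_of_lt (hanti t₁ t ht₁0 ht) ht₁
  have hvlim' : Tendsto v atTop (nhdsWithin 0 (Ioi 0)) := by
    rw [tendsto_nhdsWithin_iff]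
    exact ⟨hvlim, (eventually_ge_atTop 0).mono fun t ht => hv t ht⟩
  -- the derivative-related function φ
  set φ : ℝ → ℝ := fun s => α * (h (v s) / v s ^ (1 + α)) with hφdef
  have hφcont : ContinuousOn φ (Ici 0) := by
    apply ContinuousOn.const_smul ?_ α
    exact hfcont.div (hvcont.rpow_const fun x hx => Or.inl (hv x hx).ne')
      fun x hx => (Real.rpow_pos_of_pos (hv x hx) _).ne'
  have hφint : ∀ a b : ℝ, 0 ≤ a → 0 ≤ b → IntervalIntegrable φ volume a b := by
    intro a b ha hb'
    exact (hφcont.mono fun x hx => le_trans (le_min ha hb') hx.1).intervalIntegrable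
  -- FTC: the primitive identity for w = v ^ (-α)
  have hw : ∀ t : ℝ, 0 ≤ t → v t ^ (-α) - v 0 ^ (-α) = ∫ s in (0:ℝ)..t, φ s := by
    intro t ht
    refine (intervalIntegral.integral_eq_sub_of_hasDeriv_right_of_le (f := fun u => v u ^ (-α)) (f' := φ) ht ?_ ?_
      (hφint 0 t le_rfl ht)).symm
    · exact (hvcont.mono Icc_subset_Ici_self).rpow_const fun x hx => Or.inl (hv x hx.1).ne'
    · intro x hx
      have hx0 : 0 < x := hx.1
      have hgd : HasDerivAt (fun u => ∫ s in (0:ℝ)..u, f s) (f x) x :=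
        intervalIntegral.integral_hasDerivAt_right (hintegrable x hx0.le)
          (ContinuousOn.stronglyMeasurableAtFilter isOpen_Ioi
            (hfcont.mono Ioi_subset_Ici_self) x hx0)
          (hfcont.continuousAt (Ici_mem_nhds hx0))
      have hvd : HasDerivAt v (-(f x)) x := by
        have h10 : HasDerivAt (fun u => v 0 - ∫ s in (0:ℝ)..u, f s) (-(f x)) x := by
          exact hgd.const_sub (v 0)
        apply h10.congr_of_eventuallyEq
        exact eventually_of_mem (Ici_mem_nhds hx0) fun u hu => heq u hu
      have hrpow : HasDerivAt (fun y : ℝ => y ^ (-α)) (-α * v x ^ (-α - 1)) (v x) :=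
        Real.hasDerivAt_rpow_const (Or.inl (hv x hx0.le).ne')
      have hcomp := hrpow.comp x hvd
      have hkey : -α * v x ^ (-α - 1) * -(f x) = φ x := by
        have he : (-α - 1 : ℝ) = -(1+α) := by ring
        rw [hφdef, hfdef]
        simp only []
        rw [he, Real.rpow_neg (hv x hx0.le).le, div_eq_mul_inv]
        ring
      have : HasDerivAt (fun u => v u ^ (-α)) (φ x) x := by
        rw [← hkey]
        exact hcomp
      exact this.hasDerivWithinAt
  -- limit of φ
  have hφlim : Tendsto φ atTop (nhds (α * c)) := by
    have := (hreg.comp hvlim').const_mul α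
    simpa [hφdef, Function.comp] using this
  -- Cesàro
  have havg := stmt11_cesaro hφint hφlim
  have hwlim : Tendsto (fun t => v t ^ (-α) / t) atTop (nhds (α * c)) := by
    have h1 : Tendsto (fun t : ℝ => v 0 ^ (-α) / t + (∫ s in (0:ℝ)..t, φ s) / t) atTop
        (nhds (0 + α*c)) := (tendsto_const_nhds.div_atTop tendsto_id).add havg
    rw [zero_add] at h1
    apply h1.congr'
    filter_upwards [eventually_ge_atTop (1:ℝ)] with t ht
    have ht0 : (0:ℝ) ≤ t := by linarith
    have h2 := hw t ht0
    rw [← add_div]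
    congr 1
    linarith
  -- conclusion
  have hfinal : Tendsto (fun t => (v t ^ (-α) / t) ^ (-(1/α))) atTop
      (nhds ((α * c) ^ (-(1/α)))) :=
    hwlim.rpow_const (Or.inl (by positivity))
  apply hfinal.congr'
  filter_upwards [eventually_ge_atTop (1:ℝ)] with t ht
  have ht0 : (0:ℝ) < t := lt_of_lt_of_le one_pos ht
  have hvt : 0 < v t := hv t ht0.le
  rw [Real.div_rpow (Real.rpow_nonneg hvt.le _) ht0.le, ← Real.rpow_mul hvt.le]
  have hexp : (-α) * (-(1/α)) = 1 := by field_simp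
  rw [hexp, Real.rpow_one, Real.rpow_neg ht0.le, div_inv_eq_mul]
  ring
end

section
/- Let G : [0,∞) → ℝ be continuous and convex with G(0) ≤ 0, and suppose there exists θ > 0 with G(θ) > 0 and ∫_θ^∞ dx/G(x) < ∞. Then r := sup{x ≥ 0 : G(x) ≤ 0} is finite, G(r) = 0, and there exists a continuous nonincreasing function v : (0,∞) → (r,∞) such that: (i) v(t) − v(s) = −∫_s^t G(v(w)) dw for all 0 < s ≤ t; (ii) v(t) → ∞ as t → 0+; (iii) v(t) → r as t → ∞; and (iv) v is minimal, in the sense that every continuous function w : (0,∞) → [0,∞) satisfying w(t) − w(s) = −∫_s^t G(w(w')) dw' for all 0 < s ≤ t and w(t) → ∞ as t → 0+ satisfies w(t) ≥ v(t) for every t > 0. -/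
/-!
Convexity and `G 0 ≤ 0 < G θ` force `G` to have a last zero `r < θ`, beyond which `G` is positive
and increasing. The solution is the inverse of `Φ x = ∫_x^∞ dy / G y`: Grey's condition makes `Φ`
finite, and the chord bound `G y ≤ C (y - r)` near `r` makes `Φ (r+) = ∞`, so `Φ` is a decreasing
bijection from `(r, ∞)` onto `(0, ∞)`. Since `G` is increasing past `r`, a solution starting below
another one stays below it; each shift `v (· + ε)` starts below any solution that explodes at
`0`, and letting `ε → 0` gives minimality.
-/

open MeasureTheory Real Filter Set Topology

section LastZero

variable {G : ℝ → ℝ}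

theorem ConvexOn.exists_isLUB_nonpos (hGcont : ContinuousOn G (Ici 0))
    (hGconv : ConvexOn ℝ (Ici 0) G) (hG0 : G 0 ≤ 0) {θ : ℝ} (hθ : 0 < θ) (hGθ : 0 < G θ) :
    ∃ r, IsLUB {x | 0 ≤ x ∧ G x ≤ 0} r ∧ 0 ≤ r ∧ r < θ ∧ G r = 0 ∧
      ∀ x, r < x → 0 < G x := by
  have hpos_of_ge : ∀ x, θ ≤ x → 0 < G x := fun x hx =>
    hGθ.trans_le <| (hGconv.strictMonoOn self_mem_Ici hθ (hG0.trans_lt hGθ)).monotoneOn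
      ⟨hθ.le, self_mem_Ici⟩ ⟨hθ.le.trans hx, hx⟩ hx
  set S := {x : ℝ | 0 ≤ x ∧ G x ≤ 0}
  have hS0 : (0 : ℝ) ∈ S := ⟨le_rfl, hG0⟩
  have hS_lt : ∀ x ∈ S, x < θ := fun x hx => not_le.1 fun h => (hpos_of_ge x h).not_ge hx.2
  have hS_compact : IsCompact S :=
    isCompact_Icc.of_isClosed_subset
      (hGcont.preimage_isClosed_of_isClosed isClosed_Ici isClosed_Iic)
      fun x hx => ⟨hx.1, (hS_lt x hx).le⟩
  have hrS : sSup S ∈ S := hS_compact.sSup_mem ⟨0, hS0⟩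
  have hlub : IsLUB S (sSup S) := isLUB_csSup ⟨0, hS0⟩ hS_compact.bddAbove
  have hpos : ∀ x, sSup S < x → 0 < G x := fun x hx =>
    not_le.1 fun h => hx.not_ge (hlub.1 ⟨hrS.1.trans hx.le, h⟩)
  have hGr : 0 ≤ G (sSup S) :=
    ge_of_tendsto
      ((hGcont _ hrS.1).mono (s := Ioi (sSup S)) fun _ hx => hrS.1.trans (le_of_lt hx)).tendsto
      (eventually_nhdsWithin_of_forall fun x hx => (hpos x hx).le)
  exact ⟨sSup S, hlub, hrS.1, hS_lt _ hrS, le_antisymm hrS.2 hGr, hpos⟩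

theorem ConvexOn.apply_le_apply_of_le (hGconv : ConvexOn ℝ (Ici 0) G) {r : ℝ} (hr : 0 ≤ r)
    (hGr : G r = 0) (hG0 : G 0 ≤ 0) (hpos : ∀ x, r < x → 0 < G x) {a b : ℝ}
    (ha : 0 ≤ a) (hab : a ≤ b) (hb : r < b) : G a ≤ G b := by
  rcases le_or_gt a r with har | hra
  · have hGa : G a ≤ max (G 0) (G r) :=
      hGconv.le_on_segment self_mem_Ici hr (by rw [segment_eq_Icc hr]; exact ⟨ha, har⟩)
    exact (hGa.trans (max_le hG0 hGr.le)).trans (hpos b hb).le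
  · exact (hGconv.strictMonoOn hr hra (hGr ▸ hpos a hra)).monotoneOn
      ⟨ha, self_mem_Ici⟩ ⟨ha.trans hab, hab⟩ hab

theorem ConvexOn.le_slope_mul_of_eq_zero (hGconv : ConvexOn ℝ (Ici 0) G) {r : ℝ} (hr : 0 ≤ r)
    (hGr : G r = 0) {y θ : ℝ} (hry : r < y) (hyθ : y ≤ θ) :
    G y ≤ G θ / (θ - r) * (y - r) := by
  have hrθ := hry.trans_le hyθ
  have hsecant := hGconv.secant_mono (a := r) hr (hr.trans hry.le) (hr.trans hrθ.le)
    hry.ne' hrθ.ne' hyθ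
  rwa [hGr, sub_zero, sub_zero, div_le_iff₀ (sub_pos.2 hry)] at hsecant

end LastZero

section TailIntegral

noncomputable def tailIntegral (g : ℝ → ℝ) (x : ℝ) : ℝ := ∫ y in Ioi x, g y

variable {g : ℝ → ℝ} {r θ : ℝ}

theorem tendsto_tailIntegral_atTop (hint : IntegrableOn g (Ioi θ)) :
    Tendsto (tailIntegral g) atTop (𝓝 0) := by
  have hlim : Tendsto (fun x => tailIntegral g θ - ∫ y in θ..x, g y) atTop
      (𝓝 (tailIntegral g θ - tailIntegral g θ)) :=
    tendsto_const_nhds.sub (intervalIntegral_tendsto_integral_Ioi θ hint tendsto_id)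
  rw [sub_self] at hlim
  refine hlim.congr' ?_
  filter_upwards [eventually_ge_atTop θ] with x hx
  rw [← intervalIntegral.integral_Ioi_sub_Ioi hint hx]
  exact sub_sub_cancel _ _

theorem integrableOn_Ioi_of_continuousOn (hcont : ContinuousOn g (Ioi r))
    (hint : IntegrableOn g (Ioi θ)) {x : ℝ} (hx : r < x) : IntegrableOn g (Ioi x) := by
  rcases le_or_gt x θ with hxθ | hθx
  · rw [← Ioc_union_Ioi_eq_Ioi hxθ]
    exact ((hcont.mono fun y hy => hx.trans_le hy.1).integrableOn_Icc.mono_set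
      Ioc_subset_Icc_self).union hint
  · exact hint.mono_set (Ioi_subset_Ioi hθx.le)

theorem tailIntegral_sub_tailIntegral (hcont : ContinuousOn g (Ioi r))
    (hint : IntegrableOn g (Ioi θ)) {a b : ℝ} (ha : r < a) (hab : a ≤ b) :
    tailIntegral g a - tailIntegral g b = ∫ y in a..b, g y :=
  intervalIntegral.integral_Ioi_sub_Ioi (integrableOn_Ioi_of_continuousOn hcont hint ha) hab

theorem hasDerivAt_tailIntegral (hcont : ContinuousOn g (Ioi r))
    (hint : IntegrableOn g (Ioi θ)) {x : ℝ} (hx : r < x) :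
    HasDerivAt (tailIntegral g) (-g x) x := by
  obtain ⟨a, hra, hax⟩ := exists_between hx
  have hF : HasDerivAt (fun y => ∫ z in a..y, g z) (g x) x :=
    intervalIntegral.integral_hasDerivAt_right
      ((hcont.mono fun y hy => hra.trans_le hy.1).intervalIntegrable_of_Icc hax.le)
      (hcont.stronglyMeasurableAtFilter isOpen_Ioi x hx)
      (hcont.continuousAt (isOpen_Ioi.mem_nhds hx))
  refine (hF.const_sub (tailIntegral g a)).congr_of_eventuallyEq ?_
  filter_upwards [Ioi_mem_nhds hax] with y hy
  rw [← tailIntegral_sub_tailIntegral hcont hint hra hy.le]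
  exact (sub_sub_cancel _ _).symm

theorem strictAntiOn_tailIntegral (hcont : ContinuousOn g (Ioi r))
    (hint : IntegrableOn g (Ioi θ)) (hgpos : ∀ x, r < x → 0 < g x) :
    StrictAntiOn (tailIntegral g) (Ioi r) := by
  intro a ha b _ hab
  rw [← sub_pos, tailIntegral_sub_tailIntegral hcont hint ha hab.le]
  exact intervalIntegral.intervalIntegral_pos_of_pos_on
    ((hcont.mono fun y hy => lt_of_lt_of_le ha hy.1).intervalIntegrable_of_Icc hab.le)
    (fun y hy => hgpos y (ha.trans hy.1)) hab

theorem tailIntegral_nonneg {x : ℝ} (hg : ∀ y, x < y → 0 ≤ g y) : 0 ≤ tailIntegral g x :=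
  setIntegral_nonneg measurableSet_Ioi hg

theorem tailIntegral_pos (hcont : ContinuousOn g (Ioi r)) (hint : IntegrableOn g (Ioi θ))
    (hgpos : ∀ x, r < x → 0 < g x) {x : ℝ} (hx : r < x) : 0 < tailIntegral g x :=
  (tailIntegral_nonneg fun y hy => (hgpos y (by linarith)).le).trans_lt
    (strictAntiOn_tailIntegral hcont hint hgpos hx (show r < x + 1 by linarith) (by linarith))

theorem mul_log_le_integral {c x : ℝ} (hrx : r < x) (hxθ : x ≤ θ)
    (hg : IntervalIntegrable g volume x θ) (hlow : ∀ y, r < y → y ≤ θ → c * (y - r)⁻¹ ≤ g y) :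
    c * (log (θ - r) - log (x - r)) ≤ ∫ y in x..θ, g y := by
  have hx : 0 < x - r := sub_pos.2 hrx
  have hθ : 0 < θ - r := hx.trans_le (by linarith)
  have hIcc : ∀ y ∈ Icc x θ, y - r ≠ 0 := fun y hy => (hx.trans_le (by linarith [hy.1])).ne'
  calc c * (log (θ - r) - log (x - r)) = ∫ y in x..θ, c * (y - r)⁻¹ := by
        rw [intervalIntegral.integral_const_mul,
          intervalIntegral.integral_comp_sub_right (fun y => y⁻¹), integral_inv_of_pos hx hθ,
          log_div hθ.ne' hx.ne']
    _ ≤ ∫ y in x..θ, g y :=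
        intervalIntegral.integral_mono_on hxθ
          ((continuousOn_const.mul ((continuousOn_id.sub continuousOn_const).inv₀ hIcc)
            ).intervalIntegrable_of_Icc hxθ)
          hg fun y hy => hlow y (hrx.trans_le hy.1) hy.2

theorem tendsto_tailIntegral_nhdsGT (hcont : ContinuousOn g (Ioi r))
    (hint : IntegrableOn g (Ioi θ)) (hgpos : ∀ x, r < x → 0 < g x) (hrθ : r < θ) {c : ℝ}
    (hc : 0 < c) (hlow : ∀ y, r < y → y ≤ θ → c * (y - r)⁻¹ ≤ g y) :
    Tendsto (tailIntegral g) (𝓝[>] r) atTop := by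
  have hshift : Tendsto (fun x => x - r) (𝓝[>] r) (𝓝[>] 0) :=
    tendsto_nhdsWithin_of_tendsto_nhds_of_eventually_within _
      (by simpa using ((continuous_sub_right r).tendsto r).mono_left nhdsWithin_le_nhds)
      (eventually_nhdsWithin_of_forall fun x hx => show 0 < x - r from sub_pos.2 hx)
  have hlog : Tendsto (fun x => c * (log (θ - r) - log (x - r))) (𝓝[>] r) atTop :=
    (tendsto_atTop_add_const_left _ _
      (tendsto_neg_atBot_atTop.comp (tendsto_log_nhdsGT_zero.comp hshift))).const_mul_atTop hc
  refine tendsto_atTop_mono' _ ?_ hlog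
  filter_upwards [Ioo_mem_nhdsGT hrθ] with x hx
  calc c * (log (θ - r) - log (x - r)) ≤ ∫ y in x..θ, g y :=
        mul_log_le_integral hx.1 hx.2.le
          ((hcont.mono fun y hy => hx.1.trans_le hy.1).intervalIntegrable_of_Icc hx.2.le) hlow
    _ ≤ tailIntegral g x := by
        rw [← tailIntegral_sub_tailIntegral hcont hint hx.1 hx.2.le]
        linarith [tailIntegral_nonneg fun y hy => (hgpos y (hrθ.trans hy)).le]

end TailIntegral

section Inverse

variable {Φ v : ℝ → ℝ} {r : ℝ}

theorem exists_eq_of_tendsto_nhdsGT_atTop (hcont : ContinuousOn Φ (Ioi r))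
    (h_left : Tendsto Φ (𝓝[>] r) atTop) (h_right : Tendsto Φ atTop (𝓝 0)) {t : ℝ} (ht : 0 < t) :
    ∃ x, r < x ∧ Φ x = t := by
  obtain ⟨a, hΦa, hra⟩ := ((h_left.eventually_gt_atTop t).and self_mem_nhdsWithin).exists
  obtain ⟨b, hΦb, hab⟩ := ((h_right.eventually_lt_const ht).and (eventually_ge_atTop a)).exists
  obtain ⟨x, hx, hΦx⟩ := intermediate_value_Icc' hab
    (hcont.mono fun y hy => lt_of_lt_of_le hra hy.1) ⟨hΦb.le, hΦa.le⟩
  exact ⟨x, lt_of_lt_of_le hra hx.1, hΦx⟩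

theorem StrictAntiOn.lt_rightInverse_iff (hΦ : StrictAntiOn Φ (Ioi r))
    (hv : ∀ t, 0 < t → r < v t ∧ Φ (v t) = t) {t c : ℝ} (ht : 0 < t) (hc : r < c) :
    c < v t ↔ t < Φ c := by
  rw [← hΦ.lt_iff_gt (mem_Ioi.2 (hv t ht).1) (mem_Ioi.2 hc), (hv t ht).2]

theorem StrictAntiOn.rightInverse_lt_iff (hΦ : StrictAntiOn Φ (Ioi r))
    (hv : ∀ t, 0 < t → r < v t ∧ Φ (v t) = t) {t c : ℝ} (ht : 0 < t) (hc : r < c) :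
    v t < c ↔ Φ c < t := by
  rw [← hΦ.lt_iff_gt (mem_Ioi.2 hc) (mem_Ioi.2 (hv t ht).1), (hv t ht).2]

theorem StrictAntiOn.antitoneOn_rightInverse (hΦ : StrictAntiOn Φ (Ioi r))
    (hv : ∀ t, 0 < t → r < v t ∧ Φ (v t) = t) : AntitoneOn v (Ioi 0) := by
  intro a ha b hb hab
  by_contra! h
  rw [hΦ.rightInverse_lt_iff hv ha (hv b hb).1, (hv b hb).2] at h
  exact hab.not_gt h

theorem StrictAntiOn.continuousOn_rightInverse (hΦ : StrictAntiOn Φ (Ioi r))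
    (hv : ∀ t, 0 < t → r < v t ∧ Φ (v t) = t) : ContinuousOn v (Ioi 0) := by
  intro t ht
  refine ContinuousAt.continuousWithinAt (tendsto_order.2 ⟨fun a ha => ?_, fun b hb => ?_⟩)
  · obtain ⟨c, hac, hct⟩ := exists_between (max_lt ha (hv t ht).1)
    have hrc : r < c := (le_max_right a r).trans_lt hac
    filter_upwards [Ioo_mem_nhds ht ((hΦ.lt_rightInverse_iff hv ht hrc).1 hct)] with u hu
    exact (le_max_left a r).trans_lt (hac.trans ((hΦ.lt_rightInverse_iff hv hu.1 hrc).2 hu.2))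
  · have hrb : r < b := (hv t ht).1.trans hb
    have hbt : max (Φ b) 0 < t := max_lt ((hΦ.rightInverse_lt_iff hv ht hrb).1 hb) ht
    filter_upwards [Ioi_mem_nhds hbt] with u hu
    have hu : Φ b < u ∧ 0 < u := max_lt_iff.1 hu
    exact (hΦ.rightInverse_lt_iff hv hu.2 hrb).2 hu.1

theorem StrictAntiOn.tendsto_rightInverse_nhdsGT (hΦ : StrictAntiOn Φ (Ioi r))
    (hv : ∀ t, 0 < t → r < v t ∧ Φ (v t) = t) (hpos : ∀ x, r < x → 0 < Φ x) :
    Tendsto v (𝓝[>] 0) atTop := by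
  refine tendsto_atTop.2 fun M => ?_
  obtain ⟨c, hc⟩ := exists_gt (max M r)
  have hrc : r < c := (le_max_right M r).trans_lt hc
  filter_upwards [Ioo_mem_nhdsGT (hpos c hrc)] with u hu
  exact (le_max_left M r).trans (hc.trans ((hΦ.lt_rightInverse_iff hv hu.1 hrc).2 hu.2)).le

theorem StrictAntiOn.tendsto_rightInverse_atTop (hΦ : StrictAntiOn Φ (Ioi r))
    (hv : ∀ t, 0 < t → r < v t ∧ Φ (v t) = t) : Tendsto v atTop (𝓝 r) := by
  refine tendsto_order.2 ⟨fun a ha => ?_, fun b hb => ?_⟩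
  · filter_upwards [eventually_gt_atTop 0] with u hu
    exact ha.trans (hv u hu).1
  · filter_upwards [eventually_gt_atTop (max (Φ b) 0)] with u hu
    have hu : Φ b < u ∧ 0 < u := max_lt_iff.1 hu
    exact (hΦ.rightInverse_lt_iff hv hu.2 hb).2 hu.1

theorem hasDerivAt_rightInverse (hv : ∀ t, 0 < t → r < v t ∧ Φ (v t) = t)
    (hvcont : ContinuousOn v (Ioi 0)) {t φ' : ℝ} (ht : 0 < t) (hΦ' : HasDerivAt Φ φ' (v t))
    (hφ' : φ' ≠ 0) : HasDerivAt v φ'⁻¹ t :=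
  hΦ'.of_local_left_inverse (hvcont.continuousAt (Ioi_mem_nhds ht)) hφ'
    (eventually_of_mem (Ioi_mem_nhds ht) fun y hy => (hv y hy).2)

end Inverse

theorem le_of_integral_eq_of_le {G u w : ℝ → ℝ} {s t : ℝ} (hst : s ≤ t)
    (hu : ContinuousOn u (Icc s t)) (hw : ContinuousOn w (Icc s t))
    (hGu : ContinuousOn (fun x => G (u x)) (Icc s t))
    (hGw : ContinuousOn (fun x => G (w x)) (Icc s t))
    (hmono : ∀ x ∈ Icc s t, w x ≤ u x → G (w x) ≤ G (u x))
    (hueq : ∀ σ ∈ Icc s t, u t - u σ = -∫ x in σ..t, G (u x))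
    (hweq : ∀ σ ∈ Icc s t, w t - w σ = -∫ x in σ..t, G (w x))
    (hs : u s ≤ w s) : u t ≤ w t := by
  by_contra! hwu
  -- After the last time `σ ≤ t` with `u σ ≤ w σ` we have `w < u`, hence `G ∘ w ≤ G ∘ u`, so
  -- `w - u` cannot decrease on `[σ, t]`.
  have hA : IsCompact {τ ∈ Icc s t | u τ ≤ w τ} :=
    isCompact_Icc.of_isClosed_subset (isClosed_Icc.isClosed_le hu hw) fun _ h => h.1
  set σ := sSup {τ ∈ Icc s t | u τ ≤ w τ}
  have hσ : σ ∈ Icc s t ∧ u σ ≤ w σ := hA.sSup_mem ⟨s, left_mem_Icc.2 hst, hs⟩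
  have hσt : σ < t := hσ.1.2.lt_of_ne fun h => (h ▸ hσ.2).not_gt hwu
  have hwu_after : ∀ x ∈ Ioo σ t, w x ≤ u x := fun x hx => by
    by_contra! h
    exact hx.1.not_ge (le_csSup hA.bddAbove ⟨⟨hσ.1.1.trans hx.1.le, hx.2.le⟩, h.le⟩)
  have hsub : Icc σ t ⊆ Icc s t := Icc_subset_Icc_left hσ.1.1
  have hint : ∫ x in σ..t, G (w x) ≤ ∫ x in σ..t, G (u x) :=
    intervalIntegral.integral_mono_on_of_le_Ioo hσt.le
      ((hGw.mono hsub).intervalIntegrable_of_Icc hσt.le)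
      ((hGu.mono hsub).intervalIntegrable_of_Icc hσt.le)
      fun x hx => hmono x (hsub (Ioo_subset_Icc_self hx)) (hwu_after x hx)
  linarith [hueq σ hσ.1, hweq σ hσ.1, hσ.2]

theorem sub_eq_neg_integral_of_hasDerivAt {G v : ℝ → ℝ} (hGcont : ContinuousOn G (Ici 0))
    (hvcont : ContinuousOn v (Ioi 0)) (hv0 : ∀ t, 0 < t → 0 ≤ v t)
    (hvder : ∀ t, 0 < t → HasDerivAt v (-G (v t)) t) {s t : ℝ} (hs : 0 < s) (hst : s ≤ t) :
    v t - v s = -∫ x in s..t, G (v x) := by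
  have hsub : uIcc s t ⊆ Ioi 0 := by
    rw [uIcc_of_le hst]
    exact fun x hx => hs.trans_le hx.1
  rw [← intervalIntegral.integral_neg, intervalIntegral.integral_eq_sub_of_hasDerivAt
    (fun x hx => hvder x (hsub hx))
    ((hGcont.comp (hvcont.mono hsub) fun x hx => hv0 x (hsub hx)).neg).intervalIntegrable]

theorem le_of_integral_eq_of_tendsto_nhdsGT_atTop {G v w : ℝ → ℝ} {r : ℝ}
    (hGcont : ContinuousOn G (Ici 0)) (hmono : ∀ a b, 0 ≤ a → a ≤ b → r < b → G a ≤ G b)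
    (hr : 0 ≤ r) (hvcont : ContinuousOn v (Ioi 0)) (hvanti : AntitoneOn v (Ioi 0))
    (hvr : ∀ t, 0 < t → r < v t)
    (hveq : ∀ s t, 0 < s → s ≤ t → v t - v s = -∫ x in s..t, G (v x))
    (hwcont : ContinuousOn w (Ioi 0)) (hw0 : ∀ t, 0 < t → 0 ≤ w t)
    (hweq : ∀ s t, 0 < s → s ≤ t → w t - w s = -∫ x in s..t, G (w x))
    (hwtop : Tendsto w (𝓝[>] 0) atTop) {t : ℝ} (ht : 0 < t) : v t ≤ w t := by
  have hshift : ∀ ε, 0 < ε → v (t + ε) ≤ w t := by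
    intro ε hε
    -- `v (· + ε)` is a solution that stays bounded at `0`, so it starts below `w`.
    obtain ⟨s, hws, hs⟩ := ((hwtop.eventually_ge_atTop (v ε)).and (Ioo_mem_nhdsGT ht)).exists
    have hpos : ∀ x ∈ Icc s t, 0 < x := fun x hx => hs.1.trans_le hx.1
    have hpos' : ∀ x ∈ Icc s t, 0 < x + ε := fun x hx => by linarith [hpos x hx]
    have hu : ContinuousOn (fun x => v (x + ε)) (Icc s t) :=
      hvcont.comp (continuous_add_const ε).continuousOn hpos'
    have hw : ContinuousOn w (Icc s t) := hwcont.mono hpos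
    refine le_of_integral_eq_of_le (G := G) hs.2.le hu hw
      (hGcont.comp hu fun x hx => hr.trans (hvr _ (hpos' x hx)).le)
      (hGcont.comp hw fun x hx => hw0 x (hpos x hx))
      (fun x hx h => hmono _ _ (hw0 x (hpos x hx)) h (hvr _ (hpos' x hx)))
      (fun σ hσ => ?_) (fun σ hσ => hweq σ t (hpos σ hσ) hσ.2)
      ((hvanti hε (mem_Ioi.2 (by linarith [hs.1])) (by linarith [hs.1])).trans hws)
    rw [intervalIntegral.integral_comp_add_right (fun x => G (v x))]
    exact hveq _ _ (hpos' σ hσ) (by linarith [hσ.2])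
  have hlim : Tendsto (fun ε => v (t + ε)) (𝓝[>] 0) (𝓝 (v t)) :=
    (hvcont.continuousAt (Ioi_mem_nhds ht)).tendsto.comp
      (((continuous_const_add t).tendsto' 0 t (add_zero t)).mono_left nhdsWithin_le_nhds)
  exact le_of_tendsto hlim (eventually_nhdsWithin_of_forall hshift)

/-- Let `G` be continuous and convex on `[0,∞)` with
`G(0) ≤ 0`, satisfying Grey's condition.  Then `r = sup{x ≥ 0 : G(x) ≤ 0}` is
finite with `G(r) = 0`, and there is a minimal continuous nonincreasing
solution `v : (0,∞) → (r,∞)` of `v' = -G(v)` with `v(0+) = ∞` and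
`v(∞) = r`. -/
theorem stmt_12
    (G : ℝ → ℝ)
    (hGcont : ContinuousOn G (Set.Ici 0))
    (hGconv : ConvexOn ℝ (Set.Ici 0) G)
    (hG0 : G 0 ≤ 0)
    (hGrey : ∃ θ : ℝ, 0 < θ ∧ 0 < G θ ∧
      IntegrableOn (fun x => 1 / G x) (Set.Ici θ)) :
    ∃ r : ℝ, IsLUB {x : ℝ | 0 ≤ x ∧ G x ≤ 0} r ∧ G r = 0 ∧
      ∃ v : ℝ → ℝ,
        ContinuousOn v (Set.Ioi 0) ∧
        AntitoneOn v (Set.Ioi 0) ∧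
        (∀ t : ℝ, 0 < t → r < v t) ∧
        (∀ s t : ℝ, 0 < s → s ≤ t → v t - v s = -∫ w in s..t, G (v w)) ∧
        Filter.Tendsto v (nhdsWithin 0 (Set.Ioi 0)) Filter.atTop ∧
        Filter.Tendsto v Filter.atTop (nhds r) ∧
        (∀ w : ℝ → ℝ, ContinuousOn w (Set.Ioi 0) →
          (∀ t : ℝ, 0 < t → 0 ≤ w t) →
          (∀ s t : ℝ, 0 < s → s ≤ t → w t - w s = -∫ x in s..t, G (w x)) →
          Filter.Tendsto w (nhdsWithin 0 (Set.Ioi 0)) Filter.atTop →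
          ∀ t : ℝ, 0 < t → v t ≤ w t) := by
  obtain ⟨θ, hθ, hGθ, hGrey⟩ := hGrey
  obtain ⟨r, hlub, hr, hrθ, hGr, hpos⟩ := hGconv.exists_isLUB_nonpos hGcont hG0 hθ hGθ
  set g : ℝ → ℝ := fun y => (G y)⁻¹
  have hgcont : ContinuousOn g (Ioi r) :=
    (hGcont.mono fun x hx => hr.trans (le_of_lt hx)).inv₀ fun x hx => (hpos x hx).ne'
  have hgpos : ∀ x, r < x → 0 < g x := fun x hx => inv_pos.2 (hpos x hx)
  have hgint : IntegrableOn g (Ioi θ) := by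
    simpa only [one_div] using hGrey.mono_set Ioi_subset_Ici_self
  have hglow : ∀ y, r < y → y ≤ θ → (θ - r) / G θ * (y - r)⁻¹ ≤ g y := fun y hry hyθ => by
    have := inv_anti₀ (hpos y hry) (hGconv.le_slope_mul_of_eq_zero hr hGr hry hyθ)
    rwa [mul_inv, inv_div] at this
  have hΦanti := strictAntiOn_tailIntegral hgcont hgint hgpos
  choose! v hv using fun t (ht : 0 < t) => exists_eq_of_tendsto_nhdsGT_atTop
    (fun x hx => (hasDerivAt_tailIntegral hgcont hgint hx).continuousAt.continuousWithinAt)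
    (tendsto_tailIntegral_nhdsGT hgcont hgint hgpos hrθ (div_pos (sub_pos.2 hrθ) hGθ) hglow)
    (tendsto_tailIntegral_atTop hgint) ht
  have hvcont := hΦanti.continuousOn_rightInverse hv
  have hvder : ∀ t, 0 < t → HasDerivAt v (-G (v t)) t := fun t ht => by
    simpa only [g, inv_neg, inv_inv] using hasDerivAt_rightInverse hv hvcont ht
      (hasDerivAt_tailIntegral hgcont hgint (hv t ht).1)
      (neg_ne_zero.2 (hgpos _ (hv t ht).1).ne')
  have hveq : ∀ s t, 0 < s → s ≤ t → v t - v s = -∫ x in s..t, G (v x) := fun _ _ =>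
    sub_eq_neg_integral_of_hasDerivAt hGcont hvcont (fun t ht => hr.trans (hv t ht).1.le) hvder
  refine ⟨r, hlub, hGr, v, hvcont, hΦanti.antitoneOn_rightInverse hv, fun t ht => (hv t ht).1,
    hveq, hΦanti.tendsto_rightInverse_nhdsGT hv fun x => tailIntegral_pos hgcont hgint hgpos,
    hΦanti.tendsto_rightInverse_atTop hv, fun w hwcont hw0 hweq hwtop t ht => ?_⟩
  exact le_of_integral_eq_of_tendsto_nhdsGT_atTop hGcont
    (fun a b ha hab hb => hGconv.apply_le_apply_of_le hr hGr hG0 hpos ha hab hb) hr hvcont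
    (hΦanti.antitoneOn_rightInverse hv) (fun t ht => (hv t ht).1) hveq hwcont hw0 hweq hwtop ht
end

section
/- G_0 is convex on [0,∞) with G_0(0) = 0. If in addition σ22 > 0, then: G_0(x) > 0 for every x > 0 if and only if b2 ≥ 0; and if b2 < 0 then G_0 has exactly one root in (0,∞). In particular, the largest root of G_0 on [0,∞) equals 0 if and only if b2 ≥ 0. -/
open MeasureTheory Real Filter Set Topology

lemma stmt13_e1 (s : ℝ) : 0 ≤ Real.exp (-s) - 1 + s := by
  have := Real.add_one_le_exp (-s); linarith

lemma stmt13_e2 {s : ℝ} (hs : 0 ≤ s) : Real.exp (-s) - 1 + s ≤ s := by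
  have : Real.exp (-s) ≤ 1 := Real.exp_le_one_iff.mpr (by linarith)
  linarith

lemma stmt13_e3 {s : ℝ} (hs : 0 ≤ s) : Real.exp (-s) - 1 + s ≤ s ^ 2 := by
  have hmono : MonotoneOn (fun t : ℝ => t ^ 2 + 1 - t - Real.exp (-t)) (Set.Ici 0) := by
    apply monotoneOn_of_deriv_nonneg (convex_Ici 0)
    · exact Continuous.continuousOn (by fun_prop)
    · intro t _
      exact DifferentiableAt.differentiableWithinAt (by fun_prop)
    · intro t ht
      have hd : HasDerivAt (fun t : ℝ => t ^ 2 + 1 - t - Real.exp (-t))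
          (2 * t - 1 + Real.exp (-t)) t := by
        have h1 : HasDerivAt (fun t : ℝ => Real.exp (-t)) (Real.exp (-t) * (-1)) t :=
          (hasDerivAt_neg t).exp
        have h2 : HasDerivAt (fun t : ℝ => t ^ 2 + 1 - t) (2 * t - 1) t := by
          have := ((hasDerivAt_pow 2 t).add_const 1).sub (hasDerivAt_id t)
          exact this.congr_deriv (by norm_num)
        have := h2.sub h1
        exact this.congr_deriv (by ring)
      rw [hd.deriv]
      rw [interior_Ici] at ht
      have := Real.add_one_le_exp (-t)
      have ht' : (0:ℝ) < t := ht
      linarith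
  have h0 := hmono (self_mem_Ici (α := ℝ)) hs hs
  simp only [Real.exp_zero, neg_zero] at h0
  nlinarith [h0]

lemma stmt13_bound {x t : ℝ} (hx : 0 ≤ x) (ht : 0 ≤ t) :
    Real.exp (-(x * t)) - 1 + x * t ≤ max x (x ^ 2) * min t (t ^ 2) := by
  have h1 := stmt13_e2 (mul_nonneg hx ht)
  have h2 := stmt13_e3 (mul_nonneg hx ht)
  rcases le_total t 1 with h | h
  · have hmin : min t (t ^ 2) = t ^ 2 := min_eq_right (by nlinarith)
    rw [hmin]
    have : x ^ 2 ≤ max x (x ^ 2) := le_max_right _ _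
    nlinarith [sq_nonneg t]
  · have hmin : min t (t ^ 2) = t := min_eq_left (by nlinarith)
    rw [hmin]
    have : x ≤ max x (x ^ 2) := le_max_left _ _
    nlinarith

noncomputable def stmt13I (ν : Measure (ℝ × ℝ)) (x : ℝ) : ℝ :=
  ∫ u : ℝ × ℝ, (Real.exp (-x * u.2) - 1 + x * u.2) ∂ν

lemma stmt13_fnn (x : ℝ) (u : ℝ × ℝ) : 0 ≤ Real.exp (-x * u.2) - 1 + x * u.2 := by
  rw [neg_mul]; exact stmt13_e1 _

lemma stmt13_ae {ν : Measure (ℝ × ℝ)} (hsupp : ν {u | u.2 < 0} = 0) :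
    ∀ᵐ u ∂ν, 0 ≤ u.2 := by
  rw [ae_iff]; simpa [not_le] using hsupp

lemma stmt13_integrable {ν : Measure (ℝ × ℝ)} (hsupp : ν {u | u.2 < 0} = 0)
    (hint : Integrable (fun u : ℝ × ℝ => min u.2 (u.2 ^ 2)) ν)
    {x : ℝ} (hx : 0 ≤ x) :
    Integrable (fun u : ℝ × ℝ => Real.exp (-x * u.2) - 1 + x * u.2) ν := by
  refine (hint.const_mul (max x (x ^ 2))).mono'
    (Continuous.aestronglyMeasurable (by fun_prop)) ?_
  filter_upwards [stmt13_ae hsupp] with u hu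
  rw [Real.norm_eq_abs, abs_of_nonneg (stmt13_fnn x u), neg_mul]
  exact stmt13_bound hx hu

lemma stmt13I_nonneg (ν : Measure (ℝ × ℝ)) (x : ℝ) : 0 ≤ stmt13I ν x :=
  integral_nonneg (stmt13_fnn x)

lemma stmt13I_zero (ν : Measure (ℝ × ℝ)) : stmt13I ν 0 = 0 := by
  unfold stmt13I; norm_num

lemma stmt13I_convex {ν : Measure (ℝ × ℝ)} (hsupp : ν {u | u.2 < 0} = 0)
    (hint : Integrable (fun u : ℝ × ℝ => min u.2 (u.2 ^ 2)) ν) :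
    ConvexOn ℝ (Set.Ici 0) (stmt13I ν) := by
  refine ⟨convex_Ici 0, ?_⟩
  intro x hx y hy a b ha hb hab
  simp only [smul_eq_mul]
  have hx' : (0:ℝ) ≤ x := hx
  have hy' : (0:ℝ) ≤ y := hy
  have hxy : (0:ℝ) ≤ a * x + b * y := by positivity
  have key : ∀ u : ℝ × ℝ,
      Real.exp (-(a * x + b * y) * u.2) - 1 + (a * x + b * y) * u.2
        ≤ a * (Real.exp (-x * u.2) - 1 + x * u.2) + b * (Real.exp (-y * u.2) - 1 + y * u.2) := by
    intro u
    have hexp := convexOn_exp.2 (mem_univ (-x * u.2)) (mem_univ (-y * u.2)) ha hb hab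
    simp only [smul_eq_mul] at hexp
    have harg : a * (-x * u.2) + b * (-y * u.2) = -(a * x + b * y) * u.2 := by ring
    rw [harg] at hexp
    have hsum : (a * x + b * y) * u.2 = a * (x * u.2) + b * (y * u.2) := by ring
    nlinarith [hexp]
  calc stmt13I ν (a * x + b * y)
      ≤ ∫ u : ℝ × ℝ, (a * (Real.exp (-x * u.2) - 1 + x * u.2)
          + b * (Real.exp (-y * u.2) - 1 + y * u.2)) ∂ν :=
        integral_mono (stmt13_integrable hsupp hint hxy)
          (((stmt13_integrable hsupp hint hx').const_mul a).add
            ((stmt13_integrable hsupp hint hy').const_mul b)) key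
    _ = a * stmt13I ν x + b * stmt13I ν y := by
        rw [integral_add ((stmt13_integrable hsupp hint hx').const_mul a)
          ((stmt13_integrable hsupp hint hy').const_mul b),
          integral_const_mul, integral_const_mul]
        rfl

lemma stmt13I_tendsto {ν : Measure (ℝ × ℝ)} (hsupp : ν {u | u.2 < 0} = 0)
    (hint : Integrable (fun u : ℝ × ℝ => min u.2 (u.2 ^ 2)) ν) :
    Tendsto (fun x => stmt13I ν x / x) (𝓝[>] (0:ℝ)) (𝓝 0) := by
  have h0 : (0:ℝ) = ∫ _ : ℝ × ℝ, (0:ℝ) ∂ν := by simp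
  have main : Tendsto (fun x => ∫ u : ℝ × ℝ,
      ((Real.exp (-x * u.2) - 1 + x * u.2) / x) ∂ν) (𝓝[>] (0:ℝ))
      (𝓝 (∫ _ : ℝ × ℝ, (0:ℝ) ∂ν)) := by
    apply tendsto_integral_filter_of_dominated_convergence
      (fun u : ℝ × ℝ => min u.2 (u.2 ^ 2))
    · exact Eventually.of_forall fun x =>
        Continuous.aestronglyMeasurable (by fun_prop)
    · filter_upwards [Ioc_mem_nhdsGT_of_mem (α := ℝ) ⟨le_refl 0, one_pos⟩] with x hx
      filter_upwards [stmt13_ae hsupp] with u hu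
      obtain ⟨hx0, hx1⟩ := hx
      have hfnn := stmt13_fnn x u
      rw [Real.norm_eq_abs, abs_of_nonneg (div_nonneg hfnn hx0.le)]
      have h2 : Real.exp (-x * u.2) - 1 + x * u.2 ≤ x * u.2 := by
        rw [neg_mul]; exact stmt13_e2 (mul_nonneg hx0.le hu)
      have h3 : Real.exp (-x * u.2) - 1 + x * u.2 ≤ (x * u.2) ^ 2 := by
        rw [neg_mul]; exact stmt13_e3 (mul_nonneg hx0.le hu)
      refine le_min ?_ ?_
      · rw [div_le_iff₀ hx0]; nlinarith
      · rw [div_le_iff₀ hx0]; nlinarith [sq_nonneg u.2, mul_nonneg hu hu]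
    · exact hint
    · filter_upwards [stmt13_ae hsupp] with u hu
      apply squeeze_zero'
      · filter_upwards [self_mem_nhdsWithin] with x hx
        exact div_nonneg (stmt13_fnn x u) (le_of_lt hx)
      · filter_upwards [self_mem_nhdsWithin] with x (hx : (0:ℝ) < x)
        show (Real.exp (-x * u.2) - 1 + x * u.2) / x ≤ x * u.2 ^ 2
        have h3 : Real.exp (-x * u.2) - 1 + x * u.2 ≤ (x * u.2) ^ 2 := by
          rw [neg_mul]; exact stmt13_e3 (mul_nonneg hx.le hu)
        rw [div_le_iff₀ hx]; nlinarith
      · have : Tendsto (fun x : ℝ => x * u.2 ^ 2) (𝓝[>] (0:ℝ)) (𝓝 (0 * u.2 ^ 2)) :=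
          (tendsto_id.mono_left nhdsWithin_le_nhds).mul_const _
        simpa using this
  have heq : ∀ x : ℝ, stmt13I ν x / x
      = ∫ u : ℝ × ℝ, ((Real.exp (-x * u.2) - 1 + x * u.2) / x) ∂ν := fun x =>
    (integral_div _ _).symm
  simp only [heq]
  simpa using main

/-- `G₀(x) = b₂ x + σ₂₂ x² + ∫ (exp(-x u₂) - 1 + x u₂) ν̂(du)`
is convex on `[0,∞)` with `G₀(0) = 0`.  If `σ₂₂ > 0` then `G₀ > 0` on `(0,∞)`
iff `b₂ ≥ 0`; if `b₂ < 0` then `G₀` has exactly one root in `(0,∞)`; and the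
largest root of `G₀` on `[0,∞)` equals `0` iff `b₂ ≥ 0`. -/
theorem stmt_13
    (b2 σ22 : ℝ) (hσ : 0 ≤ σ22) (ν : Measure (ℝ × ℝ))
    (hsupp : ν {u | u.2 < 0} = 0)
    (hint : Integrable (fun u : ℝ × ℝ => min u.2 (u.2 ^ 2)) ν)
    (G0 : ℝ → ℝ)
    (hG0 : ∀ x, G0 x
      = b2 * x + σ22 * x ^ 2
        + ∫ u : ℝ × ℝ, (Real.exp (-x * u.2) - 1 + x * u.2) ∂ν) :
    ConvexOn ℝ (Set.Ici 0) G0 ∧ G0 0 = 0 ∧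
    (0 < σ22 →
      ((∀ x : ℝ, 0 < x → 0 < G0 x) ↔ 0 ≤ b2) ∧
      (b2 < 0 → ∃! x : ℝ, 0 < x ∧ G0 x = 0) ∧
      (IsGreatest {x : ℝ | 0 ≤ x ∧ G0 x = 0} 0 ↔ 0 ≤ b2)) := by
  have hG : ∀ x, G0 x = b2 * x + σ22 * x ^ 2 + stmt13I ν x := hG0
  have hG00 : G0 0 = 0 := by rw [hG, stmt13I_zero]; ring
  have hconv : ConvexOn ℝ (Set.Ici 0) G0 := by
    have hsq : ConvexOn ℝ (Set.Ici 0) (fun x : ℝ => b2 * x + σ22 * x ^ 2) := by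
      refine ⟨convex_Ici 0, fun x _ y _ a b ha hb hab => ?_⟩
      simp only [smul_eq_mul]
      have hb' : b = 1 - a := by linarith
      have key : a * (b2 * x + σ22 * x ^ 2) + b * (b2 * y + σ22 * y ^ 2)
          - (b2 * (a * x + b * y) + σ22 * (a * x + b * y) ^ 2)
          = σ22 * (a * b * (x - y) ^ 2) := by rw [hb']; ring
      nlinarith [mul_nonneg hσ (mul_nonneg (mul_nonneg ha hb) (sq_nonneg (x - y)))]
    have h := hsq.add (stmt13I_convex hsupp hint)
    refine ⟨convex_Ici 0, fun x hx y hy a b ha hb hab => ?_⟩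
    simp only [hG]
    exact h.2 hx hy ha hb hab
  refine ⟨hconv, hG00, fun hσ' => ?_⟩
  -- strict convexity
  have hstrict : StrictConvexOn ℝ (Set.Ici 0) G0 := by
    have hq : StrictConvexOn ℝ (Set.Ici 0) (fun x : ℝ => b2 * x + σ22 * x ^ 2) := by
      refine ⟨convex_Ici 0, fun x _ y _ hne a b ha hb hab => ?_⟩
      simp only [smul_eq_mul]
      have hxy : x - y ≠ 0 := sub_ne_zero.mpr hne
      have h1 : 0 < (x - y) ^ 2 := by positivity
      have hb' : b = 1 - a := by linarith
      have key : a * (b2 * x + σ22 * x ^ 2) + b * (b2 * y + σ22 * y ^ 2)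
          - (b2 * (a * x + b * y) + σ22 * (a * x + b * y) ^ 2)
          = σ22 * (a * b * (x - y) ^ 2) := by rw [hb']; ring
      nlinarith [mul_pos hσ' (mul_pos (mul_pos ha hb) h1)]
    have h := hq.add_convexOn (stmt13I_convex hsupp hint)
    refine ⟨convex_Ici 0, fun x hx y hy hne a b ha hb hab => ?_⟩
    simp only [hG]
    exact h.2 hx hy hne ha hb hab
  -- positivity when b2 ≥ 0
  have hpos : 0 ≤ b2 → ∀ x : ℝ, 0 < x → 0 < G0 x := by
    intro hb2 x hx
    rw [hG]
    have hI := stmt13I_nonneg ν x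
    nlinarith [mul_pos hσ' (mul_pos hx hx)]
  -- negative value when b2 < 0
  have hneg : b2 < 0 → ∃ x : ℝ, 0 < x ∧ G0 x < 0 := by
    intro hb2
    have hlim := stmt13I_tendsto hsupp hint
    have h1 : ∀ᶠ x in 𝓝[>] (0:ℝ), stmt13I ν x / x < -b2 / 2 :=
      hlim.eventually_lt_const (by linarith)
    have h2 : ∀ᶠ x in 𝓝[>] (0:ℝ), σ22 * x < -b2 / 2 := by
      have hmem : Set.Ioo (0:ℝ) (-b2 / (2 * σ22)) ∈ 𝓝[>] (0:ℝ) :=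
        Ioo_mem_nhdsGT_of_mem ⟨le_refl 0, by
          have hb2' : 0 < -b2 := by linarith
          positivity⟩
      filter_upwards [hmem] with x hx
      have h := hx.2
      rw [lt_div_iff₀ (by positivity)] at h
      nlinarith
    have h3 : ∀ᶠ x in 𝓝[>] (0:ℝ), (0:ℝ) < x := self_mem_nhdsWithin
    obtain ⟨x, hx1, hx2, hx3⟩ := (h1.and (h2.and h3)).exists
    refine ⟨x, hx3, ?_⟩
    rw [hG]
    rw [div_lt_iff₀ hx3] at hx1
    nlinarith
  -- existence of a positive root when b2 < 0
  have hroot : b2 < 0 → ∃ x : ℝ, 0 < x ∧ G0 x = 0 := by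
    intro hb2
    obtain ⟨a, ha, hGa⟩ := hneg hb2
    set X := max (a + 1) (-b2 / σ22 + 1) with hX
    have haX : a ≤ X := le_trans (by linarith) (le_max_left _ _)
    have hGX : 0 < G0 X := by
      rw [hG]
      have hI := stmt13I_nonneg ν X
      have h1 : -b2 / σ22 + 1 ≤ X := le_max_right _ _
      have h2 : -b2 / σ22 < X := by linarith
      have hXpos : 0 < X := lt_of_lt_of_le (by linarith) (le_max_left _ _)
      rw [div_lt_iff₀ hσ'] at h2
      nlinarith
    have hcont : ContinuousOn G0 (Set.Icc a X) := by
      have h := hconv.continuousOn_interior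
      rw [interior_Ici] at h
      exact h.mono fun t ht => lt_of_lt_of_le ha ht.1
    obtain ⟨c, hc, hGc⟩ := intermediate_value_Icc haX hcont ⟨le_of_lt hGa, le_of_lt hGX⟩
    exact ⟨c, lt_of_lt_of_le ha hc.1, hGc⟩
  -- no two distinct positive roots
  have hclaim : ∀ y z : ℝ, 0 < y → y < z → G0 y = 0 → G0 z = 0 → False := by
    intro y z hy hlt hGy hGz
    have hz : 0 < z := lt_trans hy hlt
    have hb : 0 < y / z := div_pos hy hz
    have ha : 0 < 1 - y / z := by
      rw [sub_pos, div_lt_one hz]; exact hlt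
    have hkey := hstrict.2 (self_mem_Ici (α := ℝ)) (mem_Ici.mpr hz.le)
      (ne_of_lt hz) ha hb (by ring)
    have harg : (1 - y / z) • (0:ℝ) + (y / z) • z = y := by
      simp only [smul_eq_mul, mul_zero, zero_add]
      field_simp
    rw [harg, hGy, hG00, hGz] at hkey
    simp at hkey
  have huniq : ∀ y z : ℝ, 0 < y → G0 y = 0 → 0 < z → G0 z = 0 → y = z := by
    intro y z hy hGy hz hGz
    rcases lt_trichotomy y z with h | h | h
    · exact absurd (hclaim y z hy h hGy hGz) not_false
    · exact h
    · exact absurd (hclaim z y hz h hGz hGy) not_false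
  refine ⟨⟨?_, hpos⟩, ?_, ?_, ?_⟩
  · intro hall
    by_contra hb2
    push_neg at hb2
    obtain ⟨x, hx, hGx⟩ := hneg hb2
    linarith [hall x hx]
  · intro hb2
    obtain ⟨c, hc, hGc⟩ := hroot hb2
    exact ⟨c, ⟨hc, hGc⟩, fun y hy => huniq y c hy.1 hy.2 hc hGc⟩
  · intro hgr
    by_contra hb2
    push_neg at hb2
    obtain ⟨c, hc, hGc⟩ := hroot hb2
    have := hgr.2 ⟨hc.le, hGc⟩
    linarith
  · intro hb2
    refine ⟨⟨le_refl 0, hG00⟩, fun y hy => ?_⟩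
    by_contra hy0
    push_neg at hy0
    linarith [hpos hb2 y hy0, hy.2.le, hy.2]
end

section
/- Assume σ22 > 0 and let A ⊆ ℝ × [v,∞) be a Borel set for some v > 0 (so that c := ν̂(A) < ∞). Define G^A_0(x) = G_0(x) − ∫_A (exp(−x·u2) − 1) ν̂(du) for x ≥ 0. Then: (i) G^A_0 is convex on [0,∞) with G^A_0(0) = 0, the function x ↦ G^A_0(x) − c is convex with value −c ≤ 0 at 0, and it satisfies Grey's condition (there exists θ > 0 with G^A_0(θ) − c > 0 and ∫_θ^∞ dx/(G^A_0(x) − c) < ∞); (ii) the minimal continuous nonincreasing solution ψ̄ : (0,∞) → (0,∞) of ψ̄(t) − ψ̄(s) = ∫_s^t (c − G^A_0(ψ̄(w))) dw for 0 < s ≤ t with ψ̄(t) → ∞ as t → 0+ exists and satisfies lim_{t→∞} ψ̄(t) = inf{x ≥ 0 : G^A_0(x) > c}. -/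
/-!
Merging the two Lévy integrals gives `G₀^A(x) = b₂ x + σ₂₂ x² + ∫ k(x, u) ν̂(du)`, where `k(·, u)`
is `x ↦ e^{-x u₂} - 1 + x u₂` off `A` and the linear map `x ↦ x u₂` on `A`. Every `k(·, u)` is
convex and nonnegative on `[0, ∞)`, so `G₀^A` is convex and grows at least like `σ₂₂ x²`, which
gives Grey's condition for `F = G₀^A - c`.

Let `z` be the largest zero of `F` (the infimum in the statement). Near `z` convexity gives
`F(y) ≤ C (y - z)`, so `Φ(x) = ∫_x^∞ dy / F(y)` is a decreasing bijection from `(z, ∞)` onto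
`(0, ∞)`, and `ψ̄ = Φ⁻¹` solves `ψ̄' = -F(ψ̄)`, blows up at `0+` and tends to `z`. A nonnegative
solution `w` with `w(0+) = ∞` satisfies `Φ(w(t)) = t`, i.e. `w(t) = ψ̄(t)`, as long as it stays
above `z`; at a first time `τ` with `w(τ) ≤ z` continuity would give `w(τ) = ψ̄(τ) > z`. Hence
`w = ψ̄`, which in particular makes `ψ̄` minimal.
-/

open MeasureTheory Real Filter Set Topology

theorem continuousAt_of_antitoneOn_of_image_mem_nhds {f : ℝ → ℝ} {s : Set ℝ} {a : ℝ}
    (h_anti : AntitoneOn f s) (hs : s ∈ 𝓝 a) (hfs : f '' s ∈ 𝓝 (f a)) : ContinuousAt f a :=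
  continuousAt_of_monotoneOn_of_image_mem_nhds (β := ℝᵒᵈ) h_anti hs hfs

theorem hasDerivAt_of_sub_eq_intervalIntegral {w g : ℝ → ℝ} (hg : ContinuousOn g (Ioi 0))
    (hw : ∀ s t : ℝ, 0 < s → s ≤ t → w t - w s = ∫ x in s..t, g x) {r : ℝ} (hr : 0 < r) :
    HasDerivAt w (g r) r := by
  have hr2 : 0 < r / 2 := half_pos hr
  have heq : (fun u => w (r / 2) + ∫ x in r / 2..u, g x) =ᶠ[𝓝 r] w := by
    filter_upwards [Ioi_mem_nhds (half_lt_self hr)] with u hu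
    rw [← hw _ _ hr2 hu.le]
    ring
  refine HasDerivAt.congr_of_eventuallyEq ?_ heq.symm
  refine (intervalIntegral.integral_hasDerivAt_right ?_
    (hg.stronglyMeasurableAtFilter isOpen_Ioi r hr)
    (hg.continuousAt (isOpen_Ioi.mem_nhds hr))).const_add _
  refine (hg.mono fun x hx => ?_).intervalIntegrable
  rw [uIcc_of_le (half_le_self hr.le)] at hx
  exact hr2.trans_le hx.1

theorem ConvexOn.continuousWithinAt_Ici_of_le {f g : ℝ → ℝ} {a : ℝ}
    (hf : ConvexOn ℝ (Ici a) f) (hg : ContinuousWithinAt g (Ici a) a)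
    (hgf : ∀ x ∈ Ici a, g x ≤ f x) (hfa : f a = g a) : ContinuousWithinAt f (Ici a) a := by
  -- on `[a, a + 1]` the graph of `f` lies below the chord, which tends to `f a`
  have hupper : Tendsto (fun x => (1 - (x - a)) * f a + (x - a) * f (a + 1)) (𝓝[Ici a] a)
      (𝓝 (f a)) := by
    have : Continuous (fun x => (1 - (x - a)) * f a + (x - a) * f (a + 1)) := by fun_prop
    simpa using (this.continuousWithinAt (s := Ici a) (x := a)).tendsto
  refine tendsto_of_tendsto_of_tendsto_of_le_of_le' (hfa ▸ hg) hupper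
    (eventually_nhdsWithin_of_forall hgf) ?_
  filter_upwards [self_mem_nhdsWithin, nhdsWithin_le_nhds (Iio_mem_nhds (lt_add_one a))]
    with x (hxa : a ≤ x) (hx1 : x < a + 1)
  have := hf.2 (mem_Ici.2 le_rfl) (mem_Ici.2 (le_add_of_nonneg_right zero_le_one))
    (by linarith : 0 ≤ 1 - (x - a)) (by linarith : 0 ≤ x - a) (by ring)
  simp only [smul_eq_mul] at this
  convert this using 2
  ring

theorem convexOn_integral {E α : Type*} [AddCommMonoid E] [Module ℝ E] [MeasurableSpace α]
    {μ : Measure α} {s : Set E} {k : E → α → ℝ} (hs : Convex ℝ s)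
    (hk : ∀ u, ConvexOn ℝ s (fun x => k x u)) (hint : ∀ x ∈ s, Integrable (k x) μ) :
    ConvexOn ℝ s (fun x => ∫ u, k x u ∂μ) := by
  refine ⟨hs, fun x hx y hy a b ha hb hab => ?_⟩
  calc ∫ u, k (a • x + b • y) u ∂μ ≤ ∫ u, (a * k x u + b * k y u) ∂μ :=
        integral_mono (hint _ (hs hx hy ha hb hab))
          (((hint x hx).const_mul a).add ((hint y hy).const_mul b))
          fun u => (hk u).2 hx hy ha hb hab
    _ = a • ∫ u, k x u ∂μ + b • ∫ u, k y u ∂μ := by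
        rw [integral_add ((hint x hx).const_mul a) ((hint y hy).const_mul b),
          integral_const_mul, integral_const_mul, smul_eq_mul, smul_eq_mul]

theorem integrableOn_Ici_one_div_of_mul_sq_le {f : ℝ → ℝ} {a θ : ℝ} (ha : 0 < a) (hθ : 0 < θ)
    (hf : ContinuousOn f (Ici θ)) (hle : ∀ x ∈ Ici θ, a * x ^ 2 ≤ f x) :
    IntegrableOn (fun x => 1 / f x) (Ici θ) := by
  have hpos : ∀ x ∈ Ici θ, 0 < f x := fun x hx =>
    (mul_pos ha (pow_pos (hθ.trans_le hx) 2)).trans_le (hle x hx)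
  rw [integrableOn_Ici_iff_integrableOn_Ioi]
  refine ((integrableOn_Ioi_rpow_of_lt (by norm_num : (-2 : ℝ) < -1) hθ).const_mul a⁻¹).mono'
    ((continuousOn_const.div hf fun x hx => (hpos x hx).ne').mono Ioi_subset_Ici_self
      |>.aestronglyMeasurable measurableSet_Ioi) ?_
  filter_upwards [ae_restrict_mem measurableSet_Ioi] with x hx
  have hx0 : 0 < x := hθ.trans hx
  rw [Real.norm_of_nonneg (one_div_pos.2 (hpos x (mem_Ici.2 hx.le))).le,
    Real.rpow_neg hx0.le, Real.rpow_two, one_div, ← mul_inv]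
  exact inv_anti₀ (by positivity) (hle x (mem_Ici.2 hx.le))

theorem exists_half_mul_sq_le {a : ℝ} (ha : 0 < a) (b c : ℝ) :
    ∃ θ > 0, ∀ x ∈ Ici θ, a / 2 * x ^ 2 ≤ b * x + a * x ^ 2 - c := by
  refine ⟨max 1 (2 * (|b| + |c|) / a), lt_max_of_lt_left one_pos, fun x hx => ?_⟩
  have hx1 : 1 ≤ x := (le_max_left _ _).trans hx
  have hxa : 2 * (|b| + |c|) ≤ a * x := by
    rw [← div_le_iff₀' ha]
    exact (le_max_right _ _).trans hx
  nlinarith [neg_abs_le b, le_abs_self c, abs_nonneg b, abs_nonneg c]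

theorem ContinuousOn.apply_sInf_superlevel_eq {f : ℝ → ℝ} {c θ : ℝ}
    (hf : ContinuousOn f (Ici 0)) (h0 : f 0 ≤ c) (hθ : 0 ≤ θ) (hθc : c < f θ) :
    f (sInf {x | 0 ≤ x ∧ c < f x}) = c := by
  set S := {x | 0 ≤ x ∧ c < f x}
  have hS : S.Nonempty := ⟨θ, hθ, hθc⟩
  have hSbdd : BddBelow S := ⟨0, fun _ hx => hx.1⟩
  have hz0 : 0 ≤ sInf S := le_csInf hS fun _ hx => hx.1
  refine le_antisymm ?_ ?_
  · rcases hz0.eq_or_lt with hz | hz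
    · rwa [← hz]
    by_contra! hcz
    have hev : ∀ᶠ y in 𝓝[<] sInf S, y ∈ S := by
      filter_upwards [nhdsWithin_le_nhds
        ((hf.continuousAt (Ici_mem_nhds hz)).eventually (lt_mem_nhds hcz)),
        nhdsWithin_le_nhds (Ioi_mem_nhds hz)] with y hyc hy0
      exact ⟨le_of_lt hy0, hyc⟩
    obtain ⟨y, hyS, hyz⟩ := (hev.and self_mem_nhdsWithin).exists
    exact (csInf_le hSbdd hyS).not_gt hyz
  · exact ContinuousWithinAt.closure_le (csInf_mem_closure hS hSbdd) continuousWithinAt_const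
      ((hf _ hz0).mono fun _ hx => hx.1) fun _ hx => hx.2.le

theorem ConvexOn.lt_apply_of_sInf_superlevel_lt {f : ℝ → ℝ} {c θ x : ℝ}
    (hf : ConvexOn ℝ (Ici 0) f) (hθ : 0 ≤ θ) (hθc : c < f θ)
    (hfz : f (sInf {x | 0 ≤ x ∧ c < f x}) = c) (hx : sInf {x | 0 ≤ x ∧ c < f x} < x) :
    c < f x := by
  set S := {x | 0 ≤ x ∧ c < f x}
  have hS : S.Nonempty := ⟨θ, hθ, hθc⟩
  have hSbdd : BddBelow S := ⟨0, fun _ hx => hx.1⟩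
  obtain ⟨y, hyS, hyx⟩ := (csInf_lt_iff hSbdd hS).1 hx
  have hzy : sInf S < y := (csInf_le hSbdd hyS).lt_of_ne fun h => hyS.2.ne' (h ▸ hfz)
  have hz0 : 0 ≤ sInf S := le_csInf hS fun _ hx => hx.1
  have hsecant := hf.secant_mono hz0 (hz0.trans hzy.le) (hz0.trans (hzy.trans hyx).le)
    hzy.ne' (hzy.trans hyx).ne' hyx.le
  rw [hfz] at hsecant
  have : 0 < (f x - c) / (x - sInf S) :=
    (div_pos (sub_pos.2 hyS.2) (sub_pos.2 hzy)).trans_le hsecant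
  linarith [(div_pos_iff_of_pos_right (sub_pos.2 (hzy.trans hyx))).1 this]

-- `F` is convex, satisfies Grey's condition, and `z` is its largest zero
structure GreyMechanism (F : ℝ → ℝ) (z : ℝ) : Prop where
  nonneg : 0 ≤ z
  continuousOn : ContinuousOn F (Ici 0)
  convexOn : ConvexOn ℝ (Ici 0) F
  apply_eq_zero : F z = 0
  pos_of_gt : ∀ x, z < x → 0 < F x
  integrableOn_Ici : ∃ θ, z < θ ∧ IntegrableOn (fun x => 1 / F x) (Ici θ)

-- the time the solution of `ψ' = -F ψ` with `ψ(0+) = ∞` needs to come down to `x`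
noncomputable def greyTime (F : ℝ → ℝ) (x : ℝ) : ℝ := ∫ y in Ioi x, 1 / F y

noncomputable def greySolution (F : ℝ → ℝ) (z : ℝ) : ℝ → ℝ :=
  Function.invFunOn (greyTime F) (Ioi z)

structure IsSingularSolution (F w : ℝ → ℝ) : Prop where
  continuousOn : ContinuousOn w (Ioi 0)
  nonneg : ∀ t, 0 < t → 0 ≤ w t
  sub_eq_integral : ∀ s t, 0 < s → s ≤ t → w t - w s = ∫ x in s..t, -F (w x)
  tendsto_nhdsGT_zero : Tendsto w (𝓝[>] 0) atTop

namespace GreyMechanism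

variable {F : ℝ → ℝ} {z : ℝ}

theorem continuousOn_one_div (hF : GreyMechanism F z) :
    ContinuousOn (fun y => 1 / F y) (Ioi z) :=
  continuousOn_const.div (hF.continuousOn.mono fun _ hy => hF.nonneg.trans (le_of_lt hy))
    fun y hy => (hF.pos_of_gt y hy).ne'

theorem intervalIntegrable (hF : GreyMechanism F z) {a b : ℝ} (ha : z < a) (hb : z < b) :
    IntervalIntegrable (fun y => 1 / F y) volume a b :=
  (hF.continuousOn_one_div.mono fun _ hy => (lt_min ha hb).trans_le hy.1).intervalIntegrable

theorem integrableOn_Ioi (hF : GreyMechanism F z) {x : ℝ} (hx : z < x) :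
    IntegrableOn (fun y => 1 / F y) (Ioi x) := by
  obtain ⟨θ, -, hθ⟩ := hF.integrableOn_Ici
  have hcompact : IntegrableOn (fun y => 1 / F y) (Icc x θ) :=
    (hF.continuousOn_one_div.mono fun _ hy => hx.trans_le hy.1).integrableOn_compact isCompact_Icc
  refine (hcompact.union hθ).mono_set fun y hy => ?_
  rcases le_total y θ with hyθ | hθy
  exacts [Or.inl ⟨le_of_lt hy, hyθ⟩, Or.inr hθy]

theorem greyTime_eq_integral_add (hF : GreyMechanism F z) {a b : ℝ} (ha : z < a) (hab : a ≤ b) :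
    greyTime F a = (∫ y in a..b, 1 / F y) + greyTime F b := by
  rw [intervalIntegral.integral_of_le hab, greyTime, greyTime, ← Ioc_union_Ioi_eq_Ioi hab,
    setIntegral_union (Ioc_disjoint_Ioi le_rfl) measurableSet_Ioi
      ((hF.integrableOn_Ioi ha).mono_set Ioc_subset_Ioi_self)
      ((hF.integrableOn_Ioi ha).mono_set (Ioi_subset_Ioi hab))]

theorem greyTime_nonneg (hF : GreyMechanism F z) {x : ℝ} (hx : z ≤ x) : 0 ≤ greyTime F x :=
  setIntegral_nonneg measurableSet_Ioi fun y hy =>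
    (one_div_pos.2 (hF.pos_of_gt y (hx.trans_lt hy))).le

theorem strictAntiOn_greyTime (hF : GreyMechanism F z) : StrictAntiOn (greyTime F) (Ioi z) := by
  intro a ha b _ hab
  rw [hF.greyTime_eq_integral_add ha hab.le, lt_add_iff_pos_left]
  exact intervalIntegral.intervalIntegral_pos_of_pos_on (hF.intervalIntegrable ha (ha.trans hab))
    (fun y hy => one_div_pos.2 (hF.pos_of_gt y (ha.trans hy.1))) hab

theorem greyTime_pos (hF : GreyMechanism F z) {x : ℝ} (hx : z < x) : 0 < greyTime F x :=
  (hF.greyTime_nonneg (hx.trans (lt_add_one x)).le).trans_lt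
    (hF.strictAntiOn_greyTime hx (hx.trans (lt_add_one x)) (lt_add_one x))

theorem hasDerivAt_greyTime (hF : GreyMechanism F z) {x : ℝ} (hx : z < x) :
    HasDerivAt (greyTime F) (-(1 / F x)) x := by
  obtain ⟨a, hza, hax⟩ := exists_between hx
  have heq : (fun y => greyTime F a - ∫ t in a..y, 1 / F t) =ᶠ[𝓝 x] greyTime F := by
    filter_upwards [Ioi_mem_nhds hax] with y hy
    rw [hF.greyTime_eq_integral_add hza hy.le]
    ring
  refine ((intervalIntegral.integral_hasDerivAt_right (hF.intervalIntegrable hza hx)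
    (hF.continuousOn_one_div.stronglyMeasurableAtFilter isOpen_Ioi x hx)
    (hF.continuousOn_one_div.continuousAt (isOpen_Ioi.mem_nhds hx))).const_sub _)
    |>.congr_of_eventuallyEq heq.symm

theorem tendsto_greyTime_atTop (hF : GreyMechanism F z) :
    Tendsto (greyTime F) atTop (𝓝 0) := by
  have hz1 : z < z + 1 := lt_add_one z
  have hint : Tendsto (fun x => ∫ y in z + 1..x, 1 / F y) atTop (𝓝 (greyTime F (z + 1))) :=
    intervalIntegral_tendsto_integral_Ioi (z + 1) (hF.integrableOn_Ioi hz1) tendsto_id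
  have h := hint.const_sub (greyTime F (z + 1))
  rw [sub_self] at h
  refine h.congr' ?_
  filter_upwards [eventually_ge_atTop (z + 1)] with x hx
  rw [hF.greyTime_eq_integral_add hz1 hx]
  ring

theorem tendsto_greyTime_nhdsGT (hF : GreyMechanism F z) :
    Tendsto (greyTime F) (𝓝[>] z) atTop := by
  obtain ⟨θ, hzθ, -⟩ := hF.integrableOn_Ici
  have hFθ := hF.pos_of_gt θ hzθ
  set K := (θ - z) / F θ
  have hK : 0 < K := div_pos (sub_pos.2 hzθ) hFθ
  have hbound : ∀ x ∈ Ioo z θ, K * (log (θ - z) - log (x - z)) ≤ greyTime F x := by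
    rintro x ⟨hzx, hxθ⟩
    -- convexity and `F z = 0` put the graph of `F` on `[z, θ]` below the chord
    have hchord : ∀ y ∈ Icc x θ, K * (y - z)⁻¹ ≤ 1 / F y := by
      rintro y ⟨hxy, hyθ⟩
      have hzy := hzx.trans_le hxy
      have hsecant := hF.convexOn.secant_mono hF.nonneg (hF.nonneg.trans hzy.le)
        (hF.nonneg.trans hzθ.le) hzy.ne' hzθ.ne' hyθ
      rw [hF.apply_eq_zero, sub_zero, sub_zero,
        div_le_div_iff₀ (sub_pos.2 hzy) (sub_pos.2 hzθ)] at hsecant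
      rw [div_mul_eq_mul_div, ← div_eq_mul_inv, div_div,
        div_le_div_iff₀ (mul_pos (sub_pos.2 hzy) hFθ) (hF.pos_of_gt y hzy)]
      linarith
    calc K * (log (θ - z) - log (x - z)) = ∫ y in x..θ, K * (y - z)⁻¹ := by
          rw [intervalIntegral.integral_const_mul,
            intervalIntegral.integral_comp_sub_right (fun y => y⁻¹),
            integral_inv_of_pos (sub_pos.2 hzx) (sub_pos.2 hzθ),
            log_div (sub_pos.2 hzθ).ne' (sub_pos.2 hzx).ne']
      _ ≤ ∫ y in x..θ, 1 / F y := by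
          refine intervalIntegral.integral_mono_on hxθ.le ?_ (hF.intervalIntegrable hzx hzθ) hchord
          refine ContinuousOn.intervalIntegrable
            (continuousOn_const.mul ((continuous_sub_right z).continuousOn.inv₀ fun y hy => ?_))
          rw [uIcc_of_le hxθ.le] at hy
          exact (sub_pos.2 (hzx.trans_le hy.1)).ne'
      _ ≤ greyTime F x := by
          rw [hF.greyTime_eq_integral_add hzx hxθ.le]
          linarith [hF.greyTime_nonneg hzθ.le]
  have hsub : Tendsto (fun x => x - z) (𝓝[>] z) (𝓝[>] 0) :=
    tendsto_nhdsWithin_of_tendsto_nhds_of_eventually_within _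
      (((continuous_sub_right z).tendsto' z 0 (sub_self z)).mono_left nhdsWithin_le_nhds)
      (eventually_nhdsWithin_of_forall fun _ hx => mem_Ioi.2 (sub_pos.2 hx))
  have hlog : Tendsto (fun x => K * (log (θ - z) - log (x - z))) (𝓝[>] z) atTop :=
    (tendsto_atTop_add_const_left _ _
      (tendsto_neg_atBot_atTop.comp (tendsto_log_nhdsGT_zero.comp hsub))).const_mul_atTop hK
  exact tendsto_atTop_mono' _ (eventually_of_mem (Ioo_mem_nhdsGT hzθ) hbound) hlog

theorem bijOn_greyTime (hF : GreyMechanism F z) : BijOn (greyTime F) (Ioi z) (Ioi 0) := by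
  refine ⟨fun x hx => hF.greyTime_pos hx, hF.strictAntiOn_greyTime.injOn, fun t ht => ?_⟩
  obtain ⟨b, hbt, hzb⟩ :=
    ((hF.tendsto_greyTime_atTop.eventually (gt_mem_nhds ht)).and (eventually_gt_atTop z)).exists
  obtain ⟨a, hta, hza, hab⟩ := ((hF.tendsto_greyTime_nhdsGT.eventually (eventually_gt_atTop t)).and
    (Ioo_mem_nhdsGT hzb)).exists
  have hcont : ContinuousOn (greyTime F) (Icc a b) := fun x hx =>
    (hF.hasDerivAt_greyTime (hza.trans_le hx.1)).continuousAt.continuousWithinAt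
  obtain ⟨x, hx, hxt⟩ := intermediate_value_Icc' hab.le hcont ⟨hbt.le, hta.le⟩
  exact ⟨x, hza.trans_le hx.1, hxt⟩

theorem greySolution_gt (hF : GreyMechanism F z) {t : ℝ} (ht : 0 < t) : z < greySolution F z t :=
  hF.bijOn_greyTime.surjOn.mapsTo_invFunOn ht

theorem greyTime_greySolution (hF : GreyMechanism F z) {t : ℝ} (ht : 0 < t) :
    greyTime F (greySolution F z t) = t :=
  hF.bijOn_greyTime.surjOn.rightInvOn_invFunOn ht

theorem greySolution_greyTime (hF : GreyMechanism F z) {x : ℝ} (hx : z < x) :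
    greySolution F z (greyTime F x) = x :=
  hF.bijOn_greyTime.injOn.leftInvOn_invFunOn hx

theorem greySolution_lt_iff (hF : GreyMechanism F z) {t x : ℝ} (ht : 0 < t) (hx : z < x) :
    greySolution F z t < x ↔ greyTime F x < t := by
  conv_rhs => rw [← hF.greyTime_greySolution ht]
  exact (hF.strictAntiOn_greyTime.lt_iff_gt hx (hF.greySolution_gt ht)).symm

theorem strictAntiOn_greySolution (hF : GreyMechanism F z) :
    StrictAntiOn (greySolution F z) (Ioi 0) := fun s hs t ht hst => by
  rwa [hF.greySolution_lt_iff ht (hF.greySolution_gt hs), hF.greyTime_greySolution hs]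

theorem image_greySolution (hF : GreyMechanism F z) : greySolution F z '' Ioi 0 = Ioi z :=
  (BijOn.symm hF.bijOn_greyTime.invOn_invFunOn.symm hF.bijOn_greyTime).image_eq

theorem continuousOn_greySolution (hF : GreyMechanism F z) :
    ContinuousOn (greySolution F z) (Ioi 0) := by
  intro t ht
  refine (continuousAt_of_antitoneOn_of_image_mem_nhds hF.strictAntiOn_greySolution.antitoneOn
    (Ioi_mem_nhds ht) ?_).continuousWithinAt
  rw [hF.image_greySolution]
  exact Ioi_mem_nhds (hF.greySolution_gt ht)

theorem hasDerivAt_greySolution (hF : GreyMechanism F z) {t : ℝ} (ht : 0 < t) :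
    HasDerivAt (greySolution F z) (-F (greySolution F z t)) t := by
  have hpos := hF.pos_of_gt _ (hF.greySolution_gt ht)
  have h := (hF.hasDerivAt_greyTime (hF.greySolution_gt ht)).of_local_left_inverse
    (hF.continuousOn_greySolution.continuousAt (Ioi_mem_nhds ht)) (by simp [hpos.ne'])
    (eventually_of_mem (Ioi_mem_nhds ht) fun s hs => hF.greyTime_greySolution hs)
  rwa [one_div, inv_neg, inv_inv] at h

theorem tendsto_greySolution_nhdsGT_zero (hF : GreyMechanism F z) :
    Tendsto (greySolution F z) (𝓝[>] 0) atTop := by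
  refine tendsto_atTop.2 fun M => ?_
  have hzx : z < max M (z + 1) := (lt_add_one z).trans_le (le_max_right _ _)
  filter_upwards [Ioo_mem_nhdsGT (hF.greyTime_pos hzx)] with t ht
  exact (le_max_left _ _).trans
    (not_lt.1 fun h => ((hF.greySolution_lt_iff ht.1 hzx).1 h).not_gt ht.2)

theorem tendsto_greySolution_atTop (hF : GreyMechanism F z) :
    Tendsto (greySolution F z) atTop (𝓝 z) := by
  refine tendsto_order.2 ⟨fun a ha => ?_, fun a ha => ?_⟩
  · filter_upwards [eventually_gt_atTop 0] with t ht
    exact ha.trans (hF.greySolution_gt ht)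
  · filter_upwards [eventually_gt_atTop 0, eventually_gt_atTop (greyTime F a)] with t ht hat
    exact (hF.greySolution_lt_iff ht ha).2 hat

theorem isSingularSolution_greySolution (hF : GreyMechanism F z) :
    IsSingularSolution F (greySolution F z) := by
  have hnonneg : ∀ t, 0 < t → 0 ≤ greySolution F z t := fun t ht =>
    hF.nonneg.trans (hF.greySolution_gt ht).le
  refine ⟨hF.continuousOn_greySolution, hnonneg, fun s t hs hst => ?_,
    hF.tendsto_greySolution_nhdsGT_zero⟩
  have hsub : uIcc s t ⊆ Ioi 0 := fun r hr =>
    hs.trans_le (by rw [uIcc_of_le hst] at hr; exact hr.1)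
  refine (intervalIntegral.integral_eq_sub_of_hasDerivAt
    (fun r hr => hF.hasDerivAt_greySolution (hsub hr)) ?_).symm
  exact ((hF.continuousOn.comp (hF.continuousOn_greySolution.mono hsub)
    fun r hr => hnonneg r (hsub hr)).neg).intervalIntegrable

end GreyMechanism

namespace IsSingularSolution

variable {F w : ℝ → ℝ} {z t : ℝ}

theorem hasDerivAt (hw : IsSingularSolution F w) (hF : ContinuousOn F (Ici 0)) (ht : 0 < t) :
    HasDerivAt w (-F (w t)) t :=
  hasDerivAt_of_sub_eq_intervalIntegral (hF.comp hw.continuousOn hw.nonneg).neg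
    hw.sub_eq_integral ht

theorem greyTime_apply (hw : IsSingularSolution F w) (hF : GreyMechanism F z) (ht : 0 < t)
    (habove : ∀ r ∈ Ioc 0 t, z < w r) : greyTime F (w t) = t := by
  have hderiv : ∀ r ∈ Ioc 0 t, HasDerivAt (fun r => greyTime F (w r)) 1 r := by
    intro r hr
    have h := (hF.hasDerivAt_greyTime (habove r hr)).comp r (hw.hasDerivAt hF.continuousOn hr.1)
    rwa [neg_mul_neg, one_div_mul_cancel (hF.pos_of_gt _ (habove r hr)).ne'] at h
  have hconst : ∀ s ∈ Ioo 0 t, greyTime F (w s) + (t - s) = greyTime F (w t) := by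
    intro s hs
    have h := intervalIntegral.integral_eq_sub_of_hasDerivAt (fun r hr => hderiv r ?_)
      (intervalIntegrable_const (c := (1 : ℝ)) (a := s) (b := t))
    · rw [intervalIntegral.integral_const, smul_eq_mul, mul_one] at h
      linarith
    rw [uIcc_of_le hs.2.le] at hr
    exact ⟨hs.1.trans_le hr.1, hr.2⟩
  have hlim : Tendsto (fun s => greyTime F (w s) + (t - s)) (𝓝[>] 0) (𝓝 (0 + (t - 0))) :=
    (hF.tendsto_greyTime_atTop.comp hw.tendsto_nhdsGT_zero).add
      (tendsto_const_nhds.sub (tendsto_id.mono_left nhdsWithin_le_nhds))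
  rw [zero_add, sub_zero] at hlim
  exact tendsto_nhds_unique tendsto_const_nhds
    (hlim.congr' (eventually_of_mem (Ioo_mem_nhdsGT ht) hconst))

theorem eq_greySolution_of_forall_gt (hw : IsSingularSolution F w) (hF : GreyMechanism F z)
    (ht : 0 < t) (habove : ∀ r ∈ Ioc 0 t, z < w r) : w t = greySolution F z t := by
  conv_rhs => rw [← hw.greyTime_apply hF ht habove]
  exact (hF.greySolution_greyTime (habove t ⟨ht, le_rfl⟩)).symm

theorem gt_of_pos (hw : IsSingularSolution F w) (hF : GreyMechanism F z) (ht : 0 < t) :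
    z < w t := by
  by_contra! hwt
  obtain ⟨δ, hδ, hδw⟩ : ∃ δ > 0, Ioo 0 δ ⊆ {s | z < w s} :=
    mem_nhdsGT_iff_exists_Ioo_subset.1 (hw.tendsto_nhdsGT_zero.eventually (eventually_gt_atTop z))
  -- `τ` is the first time after `δ / 2` at which `w` comes down to `z`
  set B := Icc (δ / 2) t ∩ w ⁻¹' Iic z
  have hB : IsClosed B := (hw.continuousOn.mono fun r hr => (half_pos hδ).trans_le hr.1)
    |>.preimage_isClosed_of_isClosed isClosed_Icc isClosed_Iic
  have hBbdd : BddBelow B := ⟨δ / 2, fun r hr => hr.1.1⟩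
  have hδt : δ ≤ t := not_lt.1 fun h => hwt.not_gt (hδw ⟨ht, h⟩)
  have hτB : sInf B ∈ B := hB.csInf_mem ⟨t, ⟨by linarith, le_rfl⟩, hwt⟩ hBbdd
  set τ := sInf B
  have hτ : 0 < τ := (half_pos hδ).trans_le hτB.1.1
  have habove : ∀ r ∈ Ioo 0 τ, z < w r := by
    rintro r ⟨hr0, hrτ⟩
    by_contra! hr
    have hδr : δ ≤ r := not_lt.1 fun h => hr.not_gt (hδw ⟨hr0, h⟩)
    exact hrτ.not_ge (csInf_le hBbdd ⟨⟨by linarith, hrτ.le.trans hτB.1.2⟩, hr⟩)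
  have heq : EqOn (greySolution F z) w (Ioo 0 τ) := fun r hr =>
    (hw.eq_greySolution_of_forall_gt hF hr.1 fun q hq => habove q ⟨hq.1, hq.2.trans_lt hr.2⟩).symm
  have hwτ : greySolution F z τ = w τ := tendsto_nhds_unique
    ((hF.continuousOn_greySolution.continuousAt (Ioi_mem_nhds hτ)).tendsto.mono_left
      nhdsWithin_le_nhds |>.congr' (eventually_of_mem (Ioo_mem_nhdsLT hτ) heq))
    ((hw.continuousOn.continuousAt (Ioi_mem_nhds hτ)).tendsto.mono_left nhdsWithin_le_nhds)
  exact (hτB.2 : w τ ≤ z).not_gt (hwτ ▸ hF.greySolution_gt hτ)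

theorem eqOn_greySolution (hw : IsSingularSolution F w) (hF : GreyMechanism F z) :
    EqOn w (greySolution F z) (Ioi 0) := fun _ ht =>
  hw.eq_greySolution_of_forall_gt hF ht fun _ hr => hw.gt_of_pos hF hr.1

end IsSingularSolution

theorem exp_neg_sub_one_add_le_min {y : ℝ} (hy : 0 ≤ y) : exp (-y) - 1 + y ≤ min y (y ^ 2) := by
  refine le_min (by linarith [exp_le_one_iff.2 (neg_nonpos.2 hy)]) ?_
  rcases le_total y 1 with hy1 | hy1
  · have h := (abs_le.1
      (abs_exp_sub_one_sub_id_le (x := -y) (by rwa [abs_neg, abs_of_nonneg hy]))).2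
    linarith [neg_sq y]
  · nlinarith [exp_le_one_iff.2 (neg_nonpos.2 hy)]

theorem min_mul_le_max_mul_min {x y : ℝ} (hy : 0 ≤ y) :
    min (x * y) ((x * y) ^ 2) ≤ max x (x ^ 2) * min y (y ^ 2) := by
  rcases le_total y (y ^ 2) with h | h
  · rw [min_eq_left h]
    exact (min_le_left _ _).trans (mul_le_mul_of_nonneg_right (le_max_left _ _) hy)
  · rw [min_eq_right h, mul_pow]
    exact (min_le_right _ _).trans (mul_le_mul_of_nonneg_right (le_max_right _ _) (sq_nonneg y))

section LevyMeasure

variable {ν : Measure (ℝ × ℝ)} {A : Set (ℝ × ℝ)} {x : ℝ}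

theorem measure_lt_top_of_subset_le_snd
    (hint : Integrable (fun u : ℝ × ℝ => min u.2 (u.2 ^ 2)) ν) {v : ℝ} (hv : 0 < v)
    (hA : A ⊆ {u | v ≤ u.2}) : ν A < ⊤ := by
  refine (measure_mono fun u hu => ?_).trans_lt
    (hint.measure_ge_lt_top (lt_min hv (pow_pos hv 2)))
  have hvu : v ≤ u.2 := hA hu
  exact min_le_min hvu (pow_le_pow_left₀ hv.le hvu 2)

theorem integrable_exp_neg_mul_sub_one_add (hae : ∀ᵐ u ∂ν, 0 ≤ u.2)
    (hint : Integrable (fun u : ℝ × ℝ => min u.2 (u.2 ^ 2)) ν) (hx : 0 ≤ x) :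
    Integrable (fun u : ℝ × ℝ => exp (-x * u.2) - 1 + x * u.2) ν := by
  refine (hint.const_mul (max x (x ^ 2))).mono' (by fun_prop) ?_
  filter_upwards [hae] with u hu
  have hxu := mul_nonneg hx hu
  rw [neg_mul, Real.norm_of_nonneg (by linarith [add_one_le_exp (-(x * u.2))])]
  exact (exp_neg_sub_one_add_le_min hxu).trans (min_mul_le_max_mul_min hu)

theorem integrableOn_exp_neg_mul_sub_one (hae : ∀ᵐ u ∂ν, 0 ≤ u.2) (hνA : ν A ≠ ⊤) (hx : 0 ≤ x) :
    IntegrableOn (fun u : ℝ × ℝ => exp (-x * u.2) - 1) A ν := by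
  refine Measure.integrableOn_of_bounded (M := 1) hνA (by fun_prop) ?_
  filter_upwards [ae_restrict_of_ae hae] with u hu
  have hexp : exp (-x * u.2) ≤ 1 := exp_le_one_iff.2 (by nlinarith)
  rw [Real.norm_eq_abs, abs_le]
  constructor <;> linarith [exp_pos (-x * u.2)]

noncomputable def killedIntegrand (A : Set (ℝ × ℝ)) (x : ℝ) (u : ℝ × ℝ) : ℝ :=
  exp (-x * u.2) - 1 + x * u.2 - A.indicator (fun u => exp (-x * u.2) - 1) u

theorem killedIntegrand_nonneg {u : ℝ × ℝ} (hx : 0 ≤ x) (hu : 0 ≤ u.2) :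
    0 ≤ killedIntegrand A x u := by
  have hxu := mul_nonneg hx hu
  by_cases huA : u ∈ A
  · simp only [killedIntegrand, indicator_of_mem huA]
    linarith
  · simp only [killedIntegrand, indicator_of_notMem huA, sub_zero, neg_mul]
    linarith [add_one_le_exp (-(x * u.2))]

-- on `A` the exponential terms cancel, leaving the linear term `x * u.2`
theorem convexOn_killedIntegrand (A : Set (ℝ × ℝ)) (u : ℝ × ℝ) :
    ConvexOn ℝ univ (fun x => killedIntegrand A x u) := by
  refine ⟨convex_univ, fun x _ y _ p q hp hq hpq => ?_⟩
  have hexp := convexOn_exp.2 (mem_univ (-x * u.2)) (mem_univ (-y * u.2)) hp hq hpq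
  simp only [smul_eq_mul] at hexp ⊢
  rw [show p * (-x * u.2) + q * (-y * u.2) = -(p * x + q * y) * u.2 by ring] at hexp
  by_cases huA : u ∈ A
  · simp only [killedIntegrand, indicator_of_mem huA]
    linarith
  · simp only [killedIntegrand, indicator_of_notMem huA]
    linarith

theorem integrable_killedIntegrand (hae : ∀ᵐ u ∂ν, 0 ≤ u.2)
    (hint : Integrable (fun u : ℝ × ℝ => min u.2 (u.2 ^ 2)) ν) (hA : MeasurableSet A)
    (hνA : ν A ≠ ⊤) (hx : 0 ≤ x) : Integrable (killedIntegrand A x) ν :=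
  (integrable_exp_neg_mul_sub_one_add hae hint hx).sub
    ((integrable_indicator_iff hA).2 (integrableOn_exp_neg_mul_sub_one hae hνA hx))

theorem integral_killedIntegrand (hae : ∀ᵐ u ∂ν, 0 ≤ u.2)
    (hint : Integrable (fun u : ℝ × ℝ => min u.2 (u.2 ^ 2)) ν) (hA : MeasurableSet A)
    (hνA : ν A ≠ ⊤) (hx : 0 ≤ x) :
    ∫ u, killedIntegrand A x u ∂ν
      = ∫ u, (exp (-x * u.2) - 1 + x * u.2) ∂ν - ∫ u in A, (exp (-x * u.2) - 1) ∂ν := by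
  rw [← integral_indicator hA]
  exact integral_sub (integrable_exp_neg_mul_sub_one_add hae hint hx)
    ((integrable_indicator_iff hA).2 (integrableOn_exp_neg_mul_sub_one hae hνA hx))

-- `G₀^A` of the statement, with its two Lévy integrals merged into one
noncomputable def killedMechanism (b σ : ℝ) (ν : Measure (ℝ × ℝ)) (A : Set (ℝ × ℝ)) (x : ℝ) :
    ℝ :=
  b * x + σ * x ^ 2 + ∫ u, killedIntegrand A x u ∂ν

variable {b σ : ℝ}

theorem killedMechanism_zero : killedMechanism b σ ν A 0 = 0 := by
  simp [killedMechanism, killedIntegrand]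

theorem le_killedMechanism (hae : ∀ᵐ u ∂ν, 0 ≤ u.2) (hx : 0 ≤ x) :
    b * x + σ * x ^ 2 ≤ killedMechanism b σ ν A x :=
  le_add_of_nonneg_right
    (integral_nonneg_of_ae (hae.mono fun _ hu => killedIntegrand_nonneg hx hu))

theorem convexOn_killedMechanism (hσ : 0 ≤ σ) (hae : ∀ᵐ u ∂ν, 0 ≤ u.2)
    (hint : Integrable (fun u : ℝ × ℝ => min u.2 (u.2 ^ 2)) ν) (hA : MeasurableSet A)
    (hνA : ν A ≠ ⊤) : ConvexOn ℝ (Ici 0) (killedMechanism b σ ν A) :=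
  ((LinearMap.convexOn (LinearMap.mul ℝ ℝ b) (convex_Ici 0)).add ((convexOn_pow 2).smul hσ)).add
    (convexOn_integral (convex_Ici 0) (fun u => (convexOn_killedIntegrand A u).subset
      (subset_univ _) (convex_Ici 0)) fun _ hx => integrable_killedIntegrand hae hint hA hνA hx)

theorem continuousOn_killedMechanism (hσ : 0 ≤ σ) (hae : ∀ᵐ u ∂ν, 0 ≤ u.2)
    (hint : Integrable (fun u : ℝ × ℝ => min u.2 (u.2 ^ 2)) ν) (hA : MeasurableSet A)
    (hνA : ν A ≠ ⊤) : ContinuousOn (killedMechanism b σ ν A) (Ici 0) := by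
  have hconv := convexOn_killedMechanism (b := b) hσ hae hint hA hνA
  refine hconv.continuousOn_Ici (hconv.continuousWithinAt_Ici_of_le
    (g := fun x => b * x + σ * x ^ 2) (by fun_prop) (fun _ hx => le_killedMechanism hae hx) ?_)
  simp [killedMechanism_zero]

end LevyMeasure

theorem ConvexOn.greyMechanism_sub {f : ℝ → ℝ} {c θ : ℝ} (hconv : ConvexOn ℝ (Ici 0) f)
    (hcont : ContinuousOn f (Ici 0)) (h0 : f 0 ≤ c) (hθ : 0 ≤ θ) (hθc : c < f θ)
    (hint : IntegrableOn (fun x => 1 / (f x - c)) (Ici θ)) :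
    GreyMechanism (fun x => f x - c) (sInf {x | 0 ≤ x ∧ c < f x}) := by
  have hfz := hcont.apply_sInf_superlevel_eq h0 hθ hθc
  have hbdd : BddBelow {x | 0 ≤ x ∧ c < f x} := ⟨0, fun _ hx => hx.1⟩
  have hzθ : sInf {x | 0 ≤ x ∧ c < f x} < θ :=
    (csInf_le hbdd ⟨hθ, hθc⟩).lt_of_ne fun h => hθc.ne' (h ▸ hfz)
  refine ⟨le_csInf ⟨θ, hθ, hθc⟩ fun _ hx => hx.1, hcont.sub continuousOn_const,
    hconv.sub (concaveOn_const c (convex_Ici 0)), sub_eq_zero.2 hfz,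
    fun x hx => sub_pos.2 (hconv.lt_apply_of_sInf_superlevel_lt hθ hθc hfz hx), θ, hzθ, hint⟩

/-- Assume `σ₂₂ > 0` and `A ⊆ ℝ × [v,∞)` for some `v > 0`,
so `c = ν̂(A) < ∞`.  With `G₀^A(x) = G₀(x) - ∫_A (exp(-x u₂) - 1) ν̂(du)`:
(i) `G₀^A` is convex on `[0,∞)` with `G₀^A(0) = 0`, `x ↦ G₀^A(x) - c` is
convex with value `-c ≤ 0` at `0` and satisfies Grey's condition; (ii) the
minimal continuous nonincreasing solution `ψ̄ : (0,∞) → (0,∞)` of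
`ψ̄' = c - G₀^A(ψ̄)` with `ψ̄(0+) = ∞` exists and
`lim_{t→∞} ψ̄(t) = inf{x ≥ 0 : G₀^A(x) > c}`. -/
theorem stmt_16
    (b2 σ22 : ℝ) (hσpos : 0 < σ22) (ν : Measure (ℝ × ℝ))
    (hsupp : ν {u | u.2 < 0} = 0)
    (hint : Integrable (fun u : ℝ × ℝ => min u.2 (u.2 ^ 2)) ν)
    (G0 : ℝ → ℝ)
    (hG0 : ∀ x, G0 x
      = b2 * x + σ22 * x ^ 2
        + ∫ u : ℝ × ℝ, (Real.exp (-x * u.2) - 1 + x * u.2) ∂ν)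
    (A : Set (ℝ × ℝ)) (hA : MeasurableSet A)
    (v : ℝ) (hv : 0 < v) (hAsub : A ⊆ {u | v ≤ u.2})
    (GA : ℝ → ℝ)
    (hGA : ∀ x, GA x = G0 x - ∫ u in A, (Real.exp (-x * u.2) - 1) ∂ν)
    (c : ℝ) (hc : c = (ν A).toReal) :
    ν A ≠ ⊤ ∧
    ConvexOn ℝ (Set.Ici 0) GA ∧ GA 0 = 0 ∧
    ConvexOn ℝ (Set.Ici 0) (fun x => GA x - c) ∧ GA 0 - c ≤ 0 ∧
    (∃ θ : ℝ, 0 < θ ∧ 0 < GA θ - c ∧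
      IntegrableOn (fun x => 1 / (GA x - c)) (Set.Ici θ)) ∧
    ∃ ψ : ℝ → ℝ,
      ContinuousOn ψ (Set.Ioi 0) ∧
      AntitoneOn ψ (Set.Ioi 0) ∧
      (∀ t : ℝ, 0 < t → 0 < ψ t) ∧
      (∀ s t : ℝ, 0 < s → s ≤ t → ψ t - ψ s = ∫ w in s..t, (c - GA (ψ w))) ∧
      Filter.Tendsto ψ (nhdsWithin 0 (Set.Ioi 0)) Filter.atTop ∧
      Filter.Tendsto ψ Filter.atTop (nhds (sInf {x : ℝ | 0 ≤ x ∧ c < GA x})) ∧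
      (∀ w : ℝ → ℝ, ContinuousOn w (Set.Ioi 0) →
        (∀ t : ℝ, 0 < t → 0 ≤ w t) →
        (∀ s t : ℝ, 0 < s → s ≤ t → w t - w s = ∫ x in s..t, (c - GA (w x))) →
        Filter.Tendsto w (nhdsWithin 0 (Set.Ioi 0)) Filter.atTop →
        ∀ t : ℝ, 0 < t → ψ t ≤ w t) := by
  have hae : ∀ᵐ u ∂ν, 0 ≤ u.2 := ae_iff.2 (by simpa only [not_le] using hsupp)
  have hνA : ν A ≠ ⊤ := (measure_lt_top_of_subset_le_snd hint hv hAsub).ne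
  have hGA_eq : EqOn (killedMechanism b2 σ22 ν A) GA (Ici 0) := fun x hx => by
    rw [hGA, hG0, killedMechanism, integral_killedIntegrand hae hint hA hνA hx]
    ring
  have hconv := (convexOn_killedMechanism hσpos.le hae hint hA hνA).congr hGA_eq
  have hcont := (continuousOn_killedMechanism hσpos.le hae hint hA hνA).congr hGA_eq.symm
  have hGA0 : GA 0 = 0 := (hGA_eq (mem_Ici.2 le_rfl)).symm.trans killedMechanism_zero
  have hc0 : 0 ≤ c := hc ▸ ENNReal.toReal_nonneg
  obtain ⟨θ, hθ, hθGA⟩ : ∃ θ > 0, ∀ x ∈ Ici θ, σ22 / 2 * x ^ 2 ≤ GA x - c := by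
    obtain ⟨θ, hθ, hquad⟩ := exists_half_mul_sq_le hσpos b2 c
    refine ⟨θ, hθ, fun x hx => (hquad x hx).trans ?_⟩
    have hx0 : 0 ≤ x := hθ.le.trans hx
    linarith [hGA_eq (mem_Ici.2 hx0), le_killedMechanism (b := b2) (σ := σ22) (A := A) hae hx0]
  have hθc : 0 < GA θ - c :=
    (by positivity : 0 < σ22 / 2 * θ ^ 2).trans_le (hθGA θ self_mem_Ici)
  have hGrey : IntegrableOn (fun x => 1 / (GA x - c)) (Ici θ) :=
    integrableOn_Ici_one_div_of_mul_sq_le (half_pos hσpos) hθ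
      ((hcont.mono (Ici_subset_Ici.2 hθ.le)).sub continuousOn_const) hθGA
  have hF := hconv.greyMechanism_sub hcont (by linarith) hθ.le (sub_pos.1 hθc) hGrey
  have hψ := hF.isSingularSolution_greySolution
  refine ⟨hνA, hconv, hGA0, hF.convexOn, by linarith, ⟨θ, hθ, hθc, hGrey⟩, greySolution _ _,
    hψ.continuousOn, hF.strictAntiOn_greySolution.antitoneOn,
    fun t ht => hF.nonneg.trans_lt (hF.greySolution_gt ht),
    fun s t hs hst => by simpa only [neg_sub] using hψ.sub_eq_integral s t hs hst,
    hψ.tendsto_nhdsGT_zero, hF.tendsto_greySolution_atTop, fun w hwc hw0 hweq hwlim t ht => ?_⟩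
  have hw : IsSingularSolution (fun x => GA x - c) w :=
    ⟨hwc, hw0, fun s t hs hst => by simpa only [neg_sub] using hweq s t hs hst, hwlim⟩
  exact (hw.eqOn_greySolution hF ht).ge
end
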